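/- arXiv:1610.08547 — 9 statements merged into one kernel-verified Lean document; each statement's English description precedes it below -/
import Mathlib

section
/- Suppose a, b, c are smooth complex-valued functions on U = ℝ × (2M, ∞) × (0, π) satisfying the coordinate form of the linearized vacuum Einstein equations (E1)–(E4). Then a satisfies the Regge–Wheeler equation: −(r²/Δ)·∂²_t a + (Δ/r²)·∂²_r a + ((2r−2M)/r²)·∂_r a + (1/r²)·(∂²_θ a − 3·cot θ·∂_θ a + 2a) = (4/r²)·(1 − 2M/r)·a at every point of U. -/
open Real

noncomputable section

/-- Partial derivative in the first (time) variable. -/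
def pt (f : ℝ → ℝ → ℝ → ℂ) : ℝ → ℝ → ℝ → ℂ :=
  fun t r θ => deriv (fun s => f s r θ) t

/-- Partial derivative in the second (radial) variable. -/
def pr (f : ℝ → ℝ → ℝ → ℂ) : ℝ → ℝ → ℝ → ℂ :=
  fun t r θ => deriv (fun s => f t s θ) r

/-- Partial derivative in the third (angular) variable. -/
def pθ (f : ℝ → ℝ → ℝ → ℂ) : ℝ → ℝ → ℝ → ℂ :=
  fun t r θ => deriv (fun s => f t r s) θ

open Filter

namespace RW

abbrev P3 := ℝ × ℝ × ℝ

def unc (f : ℝ → ℝ → ℝ → ℂ) : P3 → ℂ := fun p => f p.1 p.2.1 p.2.2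

def e1 : P3 := (1, 0, 0)
def e2 : P3 := (0, 1, 0)
def e3 : P3 := (0, 0, 1)

variable {f : ℝ → ℝ → ℝ → ℂ} {t r θ : ℝ}

lemma line1 (r θ t : ℝ) : HasDerivAt (fun s : ℝ => ((s, r, θ) : P3)) e1 t :=
  HasDerivAt.prodMk (hasDerivAt_id t) (HasDerivAt.prodMk (hasDerivAt_const t r) (hasDerivAt_const t θ))

lemma line2 (t θ r : ℝ) : HasDerivAt (fun s : ℝ => ((t, s, θ) : P3)) e2 r :=
  HasDerivAt.prodMk (hasDerivAt_const r t) (HasDerivAt.prodMk (hasDerivAt_id r) (hasDerivAt_const r θ))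

lemma line3 (t r θ : ℝ) : HasDerivAt (fun s : ℝ => ((t, r, s) : P3)) e3 θ :=
  HasDerivAt.prodMk (hasDerivAt_const θ t) (HasDerivAt.prodMk (hasDerivAt_const θ r) (hasDerivAt_id θ))

lemma slice1 (hf : DifferentiableAt ℝ (unc f) (t, r, θ)) :
    HasDerivAt (fun s => f s r θ) (fderiv ℝ (unc f) (t, r, θ) e1) t :=
  by have h := hf.hasFDerivAt.comp_hasDerivAt t (line1 r θ t); exact h

lemma slice2 (hf : DifferentiableAt ℝ (unc f) (t, r, θ)) :
    HasDerivAt (fun s => f t s θ) (fderiv ℝ (unc f) (t, r, θ) e2) r :=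
  by have h := hf.hasFDerivAt.comp_hasDerivAt r (line2 t θ r); exact h

lemma slice3 (hf : DifferentiableAt ℝ (unc f) (t, r, θ)) :
    HasDerivAt (fun s => f t r s) (fderiv ℝ (unc f) (t, r, θ) e3) θ :=
  by have h := hf.hasFDerivAt.comp_hasDerivAt θ (line3 t r θ); exact h

lemma hasDerivAt_pt (hf : DifferentiableAt ℝ (unc f) (t, r, θ)) :
    HasDerivAt (fun s => f s r θ) (pt f t r θ) t := by
  simp only [pt]; exact (slice1 hf).differentiableAt.hasDerivAt

lemma hasDerivAt_pr (hf : DifferentiableAt ℝ (unc f) (t, r, θ)) :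
    HasDerivAt (fun s => f t s θ) (pr f t r θ) r := by
  simp only [pr]; exact (slice2 hf).differentiableAt.hasDerivAt

lemma hasDerivAt_pθ (hf : DifferentiableAt ℝ (unc f) (t, r, θ)) :
    HasDerivAt (fun s => f t r s) (pθ f t r θ) θ := by
  simp only [pθ]; exact (slice3 hf).differentiableAt.hasDerivAt

lemma ev_diff (hf : ContDiffAt ℝ (⊤ : ℕ∞) (unc f) (t, r, θ)) :
    ∀ᶠ y in nhds ((t, r, θ) : P3), DifferentiableAt ℝ (unc f) y := by
  have h1 : ContDiffAt ℝ 1 (unc f) (t, r, θ) := hf.of_le (by simp)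
  filter_upwards [h1.eventually (by simp)] with y hy using hy.differentiableAt one_ne_zero

lemma hasFDerivAt_D (hf : ContDiffAt ℝ (⊤ : ℕ∞) (unc f) (t, r, θ)) :
    HasFDerivAt (fderiv ℝ (unc f)) (fderiv ℝ (fderiv ℝ (unc f)) (t, r, θ)) (t, r, θ) :=
  ((hf.fderiv_right (m := 1) (by exact WithTop.coe_le_coe.2 le_top)).differentiableAt one_ne_zero).hasFDerivAt

lemma Dslice1 (w : P3) (hf : ContDiffAt ℝ (⊤ : ℕ∞) (unc f) (t, r, θ)) :
    HasDerivAt (fun s => fderiv ℝ (unc f) (s, r, θ) w)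
      (fderiv ℝ (fderiv ℝ (unc f)) (t, r, θ) e1 w) t :=
  ((ContinuousLinearMap.apply ℝ ℂ w).hasFDerivAt.comp _ (hasFDerivAt_D hf)).comp_hasDerivAt (f := fun s : ℝ => ((s, r, θ) : P3))
    t (line1 r θ t)

lemma Dslice2 (w : P3) (hf : ContDiffAt ℝ (⊤ : ℕ∞) (unc f) (t, r, θ)) :
    HasDerivAt (fun s => fderiv ℝ (unc f) (t, s, θ) w)
      (fderiv ℝ (fderiv ℝ (unc f)) (t, r, θ) e2 w) r :=
  ((ContinuousLinearMap.apply ℝ ℂ w).hasFDerivAt.comp _ (hasFDerivAt_D hf)).comp_hasDerivAt (f := fun s : ℝ => ((t, s, θ) : P3))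
    r (line2 t θ r)

lemma Dslice3 (w : P3) (hf : ContDiffAt ℝ (⊤ : ℕ∞) (unc f) (t, r, θ)) :
    HasDerivAt (fun s => fderiv ℝ (unc f) (t, r, s) w)
      (fderiv ℝ (fderiv ℝ (unc f)) (t, r, θ) e3 w) θ :=
  ((ContinuousLinearMap.apply ℝ ℂ w).hasFDerivAt.comp _ (hasFDerivAt_D hf)).comp_hasDerivAt (f := fun s : ℝ => ((t, r, s) : P3))
    θ (line3 t r θ)

lemma tend1 (r θ t : ℝ) : Tendsto (fun s : ℝ => ((s, r, θ) : P3)) (nhds t) (nhds (t, r, θ)) :=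
  (continuous_id.prodMk (continuous_const.prodMk continuous_const)).tendsto t

lemma tend2 (t θ r : ℝ) : Tendsto (fun s : ℝ => ((t, s, θ) : P3)) (nhds r) (nhds (t, r, θ)) :=
  (continuous_const.prodMk (continuous_id.prodMk continuous_const)).tendsto r

lemma tend3 (t r θ : ℝ) : Tendsto (fun s : ℝ => ((t, r, s) : P3)) (nhds θ) (nhds (t, r, θ)) :=
  (continuous_const.prodMk (continuous_const.prodMk continuous_id)).tendsto θ

-- second order lemmas: HasDerivAt of a first partial, in each slot
lemma hasDerivAt_pt_pt (hf : ContDiffAt ℝ (⊤ : ℕ∞) (unc f) (t, r, θ)) :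
    HasDerivAt (fun s => pt f s r θ) (pt (pt f) t r θ) t := by
  have base := Dslice1 (f := f) e1 hf
  have hev : (fun s => pt f s r θ) =ᶠ[nhds t] fun s => fderiv ℝ (unc f) (s, r, θ) e1 := by
    filter_upwards [(tend1 r θ t).eventually (ev_diff hf)] with s hs
    simpa only [pt] using (slice1 hs).deriv
  have h := base.congr_of_eventuallyEq hev
  simp only [pt]; exact h.differentiableAt.hasDerivAt

lemma hasDerivAt_pt_pr (hf : ContDiffAt ℝ (⊤ : ℕ∞) (unc f) (t, r, θ)) :
    HasDerivAt (fun s => pr f s r θ) (pt (pr f) t r θ) t := by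
  have base := Dslice1 (f := f) e2 hf
  have hev : (fun s => pr f s r θ) =ᶠ[nhds t] fun s => fderiv ℝ (unc f) (s, r, θ) e2 := by
    filter_upwards [(tend1 r θ t).eventually (ev_diff hf)] with s hs
    simpa only [pr] using (slice2 hs).deriv
  have h := base.congr_of_eventuallyEq hev
  simp only [pt]; exact h.differentiableAt.hasDerivAt

lemma hasDerivAt_pt_pθ (hf : ContDiffAt ℝ (⊤ : ℕ∞) (unc f) (t, r, θ)) :
    HasDerivAt (fun s => pθ f s r θ) (pt (pθ f) t r θ) t := by
  have base := Dslice1 (f := f) e3 hf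
  have hev : (fun s => pθ f s r θ) =ᶠ[nhds t] fun s => fderiv ℝ (unc f) (s, r, θ) e3 := by
    filter_upwards [(tend1 r θ t).eventually (ev_diff hf)] with s hs
    simpa only [pθ] using (slice3 hs).deriv
  have h := base.congr_of_eventuallyEq hev
  simp only [pt]; exact h.differentiableAt.hasDerivAt

lemma hasDerivAt_pr_pr (hf : ContDiffAt ℝ (⊤ : ℕ∞) (unc f) (t, r, θ)) :
    HasDerivAt (fun s => pr f t s θ) (pr (pr f) t r θ) r := by
  have base := Dslice2 (f := f) e2 hf
  have hev : (fun s => pr f t s θ) =ᶠ[nhds r] fun s => fderiv ℝ (unc f) (t, s, θ) e2 := by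
    filter_upwards [(tend2 t θ r).eventually (ev_diff hf)] with s hs
    simpa only [pr] using (slice2 hs).deriv
  have h := base.congr_of_eventuallyEq hev
  simp only [pr]; exact h.differentiableAt.hasDerivAt

lemma hasDerivAt_pθ_pθ (hf : ContDiffAt ℝ (⊤ : ℕ∞) (unc f) (t, r, θ)) :
    HasDerivAt (fun s => pθ f t r s) (pθ (pθ f) t r θ) θ := by
  have base := Dslice3 (f := f) e3 hf
  have hev : (fun s => pθ f t r s) =ᶠ[nhds θ] fun s => fderiv ℝ (unc f) (t, r, s) e3 := by
    filter_upwards [(tend3 t r θ).eventually (ev_diff hf)] with s hs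
    simpa only [pθ] using (slice3 hs).deriv
  have h := base.congr_of_eventuallyEq hev
  simp only [pθ]; exact h.differentiableAt.hasDerivAt

-- value identification
lemma pt_pr_eq (hf : ContDiffAt ℝ (⊤ : ℕ∞) (unc f) (t, r, θ)) :
    pt (pr f) t r θ = fderiv ℝ (fderiv ℝ (unc f)) (t, r, θ) e1 e2 := by
  have base := Dslice1 (f := f) e2 hf
  have hev : (fun s => pr f s r θ) =ᶠ[nhds t] fun s => fderiv ℝ (unc f) (s, r, θ) e2 := by
    filter_upwards [(tend1 r θ t).eventually (ev_diff hf)] with s hs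
    simpa only [pr] using (slice2 hs).deriv
  simpa only [pt] using (base.congr_of_eventuallyEq hev).deriv

lemma pr_pt_eq (hf : ContDiffAt ℝ (⊤ : ℕ∞) (unc f) (t, r, θ)) :
    pr (pt f) t r θ = fderiv ℝ (fderiv ℝ (unc f)) (t, r, θ) e2 e1 := by
  have base := Dslice2 (f := f) e1 hf
  have hev : (fun s => pt f t s θ) =ᶠ[nhds r] fun s => fderiv ℝ (unc f) (t, s, θ) e1 := by
    filter_upwards [(tend2 t θ r).eventually (ev_diff hf)] with s hs
    simpa only [pt] using (slice1 hs).deriv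
  simpa only [pr] using (base.congr_of_eventuallyEq hev).deriv

lemma pt_pθ_eq (hf : ContDiffAt ℝ (⊤ : ℕ∞) (unc f) (t, r, θ)) :
    pt (pθ f) t r θ = fderiv ℝ (fderiv ℝ (unc f)) (t, r, θ) e1 e3 := by
  have base := Dslice1 (f := f) e3 hf
  have hev : (fun s => pθ f s r θ) =ᶠ[nhds t] fun s => fderiv ℝ (unc f) (s, r, θ) e3 := by
    filter_upwards [(tend1 r θ t).eventually (ev_diff hf)] with s hs
    simpa only [pθ] using (slice3 hs).deriv
  simpa only [pt] using (base.congr_of_eventuallyEq hev).deriv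

lemma pθ_pt_eq (hf : ContDiffAt ℝ (⊤ : ℕ∞) (unc f) (t, r, θ)) :
    pθ (pt f) t r θ = fderiv ℝ (fderiv ℝ (unc f)) (t, r, θ) e3 e1 := by
  have base := Dslice3 (f := f) e1 hf
  have hev : (fun s => pt f t r s) =ᶠ[nhds θ] fun s => fderiv ℝ (unc f) (t, r, s) e1 := by
    filter_upwards [(tend3 t r θ).eventually (ev_diff hf)] with s hs
    simpa only [pt] using (slice1 hs).deriv
  simpa only [pθ] using (base.congr_of_eventuallyEq hev).deriv

-- Clairaut
lemma pt_pθ_comm (hf : ContDiffAt ℝ (⊤ : ℕ∞) (unc f) (t, r, θ)) :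
    pt (pθ f) t r θ = pθ (pt f) t r θ := by
  rw [pt_pθ_eq hf, pθ_pt_eq hf]
  exact (hf.isSymmSndFDerivAt (by simp only [minSmoothness_of_isRCLikeNormedField]; exact WithTop.coe_le_coe.2 le_top)).eq e1 e3

lemma pt_pr_comm (hf : ContDiffAt ℝ (⊤ : ℕ∞) (unc f) (t, r, θ)) :
    pt (pr f) t r θ = pr (pt f) t r θ := by
  rw [pt_pr_eq hf, pr_pt_eq hf]
  exact (hf.isSymmSndFDerivAt (by simp only [minSmoothness_of_isRCLikeNormedField]; exact WithTop.coe_le_coe.2 le_top)).eq e1 e2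

end RW

set_option maxHeartbeats 2000000 in
open RW in
/-- Decoupling of `α`: if `(a, b, c)` are the coefficient functions of an axial solution
`(α, β, γ)` of the linearized vacuum Einstein equations around Schwarzschild of mass `M`,
then `a` satisfies the Regge–Wheeler equation with potential `(4/r²)(1 − 2M/r)`. -/
theorem regge_wheeler_decoupling_alpha
    (M : ℝ) (hM : 0 < M)
    (a b c : ℝ → ℝ → ℝ → ℂ)
    (ha : ContDiffOn ℝ (⊤ : ℕ∞) (fun p : ℝ × ℝ × ℝ => a p.1 p.2.1 p.2.2)
      ((Set.univ : Set ℝ) ×ˢ Set.Ioi (2 * M) ×ˢ Set.Ioo 0 π))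
    (hb : ContDiffOn ℝ (⊤ : ℕ∞) (fun p : ℝ × ℝ × ℝ => b p.1 p.2.1 p.2.2)
      ((Set.univ : Set ℝ) ×ˢ Set.Ioi (2 * M) ×ˢ Set.Ioo 0 π))
    (hc : ContDiffOn ℝ (⊤ : ℕ∞) (fun p : ℝ × ℝ × ℝ => c p.1 p.2.1 p.2.2)
      ((Set.univ : Set ℝ) ×ˢ Set.Ioi (2 * M) ×ˢ Set.Ioo 0 π))
    (hE1 : ∀ t r θ : ℝ, r ∈ Set.Ioi (2 * M) → θ ∈ Set.Ioo 0 π →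
      deriv (fun s : ℝ => ((s ^ 2 : ℝ) : ℂ) * b t s θ) r
        + ((r ^ 4 / (r ^ 2 - 2 * M * r) : ℝ) : ℂ) * pθ c t r θ / ((Real.sin θ : ℝ) : ℂ) = 0)
    (hE2 : ∀ t r θ : ℝ, r ∈ Set.Ioi (2 * M) → θ ∈ Set.Ioo 0 π →
      pθ a t r θ / ((Real.sin θ : ℝ) : ℂ) + pt b t r θ = 0)
    (hE3 : ∀ t r θ : ℝ, r ∈ Set.Ioi (2 * M) → θ ∈ Set.Ioo 0 π →
      deriv (fun s : ℝ => ((s ^ 2 : ℝ) : ℂ) * a t s θ) r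
        - ((r ^ 4 / (r ^ 2 - 2 * M * r) : ℝ) : ℂ) * pt c t r θ = 0)
    (hE4 : ∀ t r θ : ℝ, r ∈ Set.Ioi (2 * M) → θ ∈ Set.Ioo 0 π →
      ((Real.sin θ ^ 3 / r ^ 2 : ℝ) : ℂ)
          * deriv (fun s : ℝ => b t r s / ((Real.sin s ^ 2 : ℝ) : ℂ)) θ
        - pr c t r θ
        + ((r ^ 2 / (r ^ 2 - 2 * M * r) : ℝ) : ℂ) * pt a t r θ = 0) :
    ∀ t r θ : ℝ, r ∈ Set.Ioi (2 * M) → θ ∈ Set.Ioo 0 π →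
      -((r ^ 2 / (r ^ 2 - 2 * M * r) : ℝ) : ℂ) * pt (pt a) t r θ
        + (((r ^ 2 - 2 * M * r) / r ^ 2 : ℝ) : ℂ) * pr (pr a) t r θ
        + (((2 * r - 2 * M) / r ^ 2 : ℝ) : ℂ) * pr a t r θ
        + ((1 / r ^ 2 : ℝ) : ℂ) *
            (pθ (pθ a) t r θ
              - 3 * ((Real.cos θ / Real.sin θ : ℝ) : ℂ) * pθ a t r θ
              + 2 * a t r θ)
        = ((4 / r ^ 2 * (1 - 2 * M / r) : ℝ) : ℂ) * a t r θ := by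
  intro t r θ hr hθ
  have hopen : IsOpen ((Set.univ : Set ℝ) ×ˢ Set.Ioi (2 * M) ×ˢ Set.Ioo 0 π) :=
    isOpen_univ.prod (isOpen_Ioi.prod isOpen_Ioo)
  -- smoothness at points of U
  have caA : ∀ t' r' θ' : ℝ, r' ∈ Set.Ioi (2 * M) → θ' ∈ Set.Ioo 0 π →
      ContDiffAt ℝ (⊤ : ℕ∞) (unc a) (t', r', θ') := fun t' r' θ' h1 h2 =>
    ha.contDiffAt (hopen.mem_nhds ⟨trivial, h1, h2⟩)
  have caB : ∀ t' r' θ' : ℝ, r' ∈ Set.Ioi (2 * M) → θ' ∈ Set.Ioo 0 π →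
      ContDiffAt ℝ (⊤ : ℕ∞) (unc b) (t', r', θ') := fun t' r' θ' h1 h2 =>
    hb.contDiffAt (hopen.mem_nhds ⟨trivial, h1, h2⟩)
  have caC : ∀ t' r' θ' : ℝ, r' ∈ Set.Ioi (2 * M) → θ' ∈ Set.Ioo 0 π →
      ContDiffAt ℝ (⊤ : ℕ∞) (unc c) (t', r', θ') := fun t' r' θ' h1 h2 =>
    hc.contDiffAt (hopen.mem_nhds ⟨trivial, h1, h2⟩)
  have dA : ∀ t' r' θ' : ℝ, r' ∈ Set.Ioi (2 * M) → θ' ∈ Set.Ioo 0 π →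
      DifferentiableAt ℝ (unc a) (t', r', θ') := fun t' r' θ' h1 h2 =>
    (caA t' r' θ' h1 h2).differentiableAt (by simp)
  have dB : ∀ t' r' θ' : ℝ, r' ∈ Set.Ioi (2 * M) → θ' ∈ Set.Ioo 0 π →
      DifferentiableAt ℝ (unc b) (t', r', θ') := fun t' r' θ' h1 h2 =>
    (caB t' r' θ' h1 h2).differentiableAt (by simp)
  have dC : ∀ t' r' θ' : ℝ, r' ∈ Set.Ioi (2 * M) → θ' ∈ Set.Ioo 0 π →
      DifferentiableAt ℝ (unc c) (t', r', θ') := fun t' r' θ' h1 h2 =>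
    (caC t' r' θ' h1 h2).differentiableAt (by simp)
  -- nonvanishing facts
  have hr2M : 2 * M < r := hr
  have hr0 : (0 : ℝ) < r := lt_trans (by linarith) hr2M
  have hΔ0 : r ^ 2 - 2 * M * r ≠ 0 := by nlinarith [mul_pos hr0 (sub_pos.2 hr2M)]
  have hsθ : 0 < Real.sin θ := Real.sin_pos_of_pos_of_lt_pi hθ.1 hθ.2
  have hs0 : Real.sin θ ≠ 0 := ne_of_gt hsθ
  have hRc : (r : ℂ) ≠ 0 := Complex.ofReal_ne_zero.2 (ne_of_gt hr0)
  have hΔc : ((r : ℂ)) ^ 2 - 2 * (M : ℂ) * (r : ℂ) ≠ 0 := by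
    have := Complex.ofReal_ne_zero.2 hΔ0; push_cast at this; exact this
  have hsc : ((Real.sin θ : ℝ) : ℂ) ≠ 0 := Complex.ofReal_ne_zero.2 hs0
  have hsc2 : ((Real.sin θ ^ 2 : ℝ) : ℂ) ≠ 0 := Complex.ofReal_ne_zero.2 (pow_ne_zero 2 hs0)
  -- Step 1: E2 solved for pt b
  have hptb : ∀ t' r' θ' : ℝ, r' ∈ Set.Ioi (2 * M) → θ' ∈ Set.Ioo 0 π →
      pt b t' r' θ' = -(pθ a t' r' θ') / ((Real.sin θ' : ℝ) : ℂ) := by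
    intro t' r' θ' h1 h2
    linear_combination hE2 t' r' θ' h1 h2
  -- Step 2: E3 solved for pt c, on the radial line
  have hptc : ∀ r' : ℝ, r' ∈ Set.Ioi (2 * M) →
      pt c t r' θ = ((r' ^ 2 - 2 * M * r' : ℝ) : ℂ) / ((r' ^ 4 : ℝ) : ℂ) *
        (((2 * r' : ℝ) : ℂ) * a t r' θ + ((r' ^ 2 : ℝ) : ℂ) * pr a t r' θ) := by
    intro r' hr'
    have hr'0 : (0 : ℝ) < r' := lt_trans (by linarith) hr'
    have hΔ'0 : r' ^ 2 - 2 * M * r' ≠ 0 := by nlinarith [mul_pos hr'0 (sub_pos.2 (hr' : 2 * M < r'))]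
    have hx2 : HasDerivAt (fun s : ℝ => ((s ^ 2 : ℝ) : ℂ)) ((2 * r' : ℝ) : ℂ) r' :=
      HasDerivAt.ofReal_comp (by simpa using hasDerivAt_pow 2 r')
    have hda : HasDerivAt (fun s => a t s θ) (pr a t r' θ) r' :=
      hasDerivAt_pr (dA t r' θ hr' hθ)
    have hprod := hx2.fun_mul hda
    have h3 := hE3 t r' θ hr' hθ
    rw [hprod.deriv] at h3
    have hR'c : (r' : ℂ) ≠ 0 := Complex.ofReal_ne_zero.2 (ne_of_gt hr'0)
    have hΔ'c : ((r' : ℂ)) ^ 2 - 2 * (M : ℂ) * (r' : ℂ) ≠ 0 := by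
      have := Complex.ofReal_ne_zero.2 hΔ'0; push_cast at this; exact this
    have hr'2c : (r' : ℂ) - 2 * M ≠ 0 := by
      intro h; apply hΔ'c; linear_combination (r' : ℂ) * h
    push_cast at h3 ⊢
    field_simp at h3 ⊢
    linear_combination -(mul_eq_zero.1 (h3.trans (mul_zero _))).resolve_left hR'c
  -- Step 3: pr (pt c) via differentiating Step 2 in r
  have hprptc : pr (pt c) t r θ =
      ((8 * M - 2 * r : ℝ) : ℂ) / ((r ^ 3 : ℝ) : ℂ) * a t r θ
        + ((2 * r - 2 * M : ℝ) : ℂ) / ((r ^ 2 : ℝ) : ℂ) * pr a t r θ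
        + ((r ^ 2 - 2 * M * r : ℝ) : ℂ) / ((r ^ 2 : ℝ) : ℂ) * pr (pr a) t r θ := by
    have hev : (fun s => pt c t s θ) =ᶠ[nhds r]
        (fun s => ((s ^ 2 - 2 * M * s : ℝ) : ℂ) / ((s ^ 4 : ℝ) : ℂ) *
          (((2 * s : ℝ) : ℂ) * a t s θ + ((s ^ 2 : ℝ) : ℂ) * pr a t s θ)) := by
      filter_upwards [isOpen_Ioi.eventually_mem hr] with s hs using hptc s hs
    have hz : HasDerivAt (fun s : ℝ => ((s : ℝ) : ℂ)) 1 r :=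
      HasDerivAt.ofReal_comp (hasDerivAt_id r)
    have hnum : HasDerivAt (fun s : ℝ => ((s ^ 2 - 2 * M * s : ℝ) : ℂ))
        ((2 * r - 2 * M : ℝ) : ℂ) r := by
      apply HasDerivAt.ofReal_comp
      have := (hasDerivAt_pow 2 r).fun_sub ((hasDerivAt_id r).const_mul (2 * M))
      simpa using this
    have hden : HasDerivAt (fun s : ℝ => ((s ^ 4 : ℝ) : ℂ)) ((4 * r ^ 3 : ℝ) : ℂ) r :=
      HasDerivAt.ofReal_comp (by simpa using hasDerivAt_pow 4 r)
    have hr4 : ((r ^ 4 : ℝ) : ℂ) ≠ 0 := Complex.ofReal_ne_zero.2 (pow_ne_zero 4 (ne_of_gt hr0))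
    have hphi := hnum.fun_div hden hr4
    have h2r : HasDerivAt (fun s : ℝ => ((2 * s : ℝ) : ℂ)) ((2 : ℝ) : ℂ) r :=
      HasDerivAt.ofReal_comp (by simpa using (hasDerivAt_id r).const_mul (2 : ℝ))
    have hx2 : HasDerivAt (fun s : ℝ => ((s ^ 2 : ℝ) : ℂ)) ((2 * r : ℝ) : ℂ) r :=
      HasDerivAt.ofReal_comp (by simpa using hasDerivAt_pow 2 r)
    have hda : HasDerivAt (fun s => a t s θ) (pr a t r θ) r := hasDerivAt_pr (dA t r θ hr hθ)
    have hdra : HasDerivAt (fun s => pr a t s θ) (pr (pr a) t r θ) r :=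
      hasDerivAt_pr_pr (caA t r θ hr hθ)
    have hinner := (h2r.fun_mul hda).fun_add (hx2.fun_mul hdra)
    have hRHS := hphi.fun_mul hinner
    have : pr (pt c) t r θ = deriv (fun s => pt c t s θ) r := rfl
    rw [this, hev.deriv_eq, hRHS.deriv]
    push_cast
    field_simp
    ring
  -- Step 4: pθ (pt b) via differentiating Step 1 in θ
  have hpθptb : pθ (pt b) t r θ =
      (-(pθ (pθ a) t r θ) * ((Real.sin θ : ℝ) : ℂ) + pθ a t r θ * ((Real.cos θ : ℝ) : ℂ))
        / ((Real.sin θ : ℝ) : ℂ) ^ 2 := by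
    have hev : (fun u => pt b t r u) =ᶠ[nhds θ]
        (fun u => -(pθ a t r u) / ((Real.sin u : ℝ) : ℂ)) := by
      filter_upwards [isOpen_Ioo.eventually_mem hθ] with u hu using hptb t r u hr hu
    have hA2 : HasDerivAt (fun u => pθ a t r u) (pθ (pθ a) t r θ) θ :=
      hasDerivAt_pθ_pθ (caA t r θ hr hθ)
    have hsin : HasDerivAt (fun u : ℝ => ((Real.sin u : ℝ) : ℂ)) ((Real.cos θ : ℝ) : ℂ) θ :=
      HasDerivAt.ofReal_comp (Real.hasDerivAt_sin θ)
    have hRHS := (hA2.fun_neg).fun_div hsin hsc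
    have : pθ (pt b) t r θ = deriv (fun u => pt b t r u) θ := rfl
    rw [this, hev.deriv_eq, hRHS.deriv]
    ring
  -- Step 5: expand the inner angular derivative in E4
  have hinner : ∀ s : ℝ, deriv (fun u : ℝ => b s r u / ((Real.sin u ^ 2 : ℝ) : ℂ)) θ =
      (pθ b s r θ * ((Real.sin θ ^ 2 : ℝ) : ℂ)
        - b s r θ * ((2 * Real.sin θ * Real.cos θ : ℝ) : ℂ)) / ((Real.sin θ ^ 2 : ℝ) : ℂ) ^ 2 := by
    intro s
    have hden : HasDerivAt (fun u : ℝ => ((Real.sin u ^ 2 : ℝ) : ℂ))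
        ((2 * Real.sin θ * Real.cos θ : ℝ) : ℂ) θ := by
      apply HasDerivAt.ofReal_comp
      have := (Real.hasDerivAt_sin θ).fun_pow 2
      simpa [mul_comm, mul_assoc, mul_left_comm] using this
    have hdb : HasDerivAt (fun u => b s r u) (pθ b s r θ) θ := hasDerivAt_pθ (dB s r θ hr hθ)
    exact (hdb.fun_div hden hsc2).deriv
  -- Step 6: rewrite E4 and differentiate in t
  have hg0 : ∀ s : ℝ,
      ((Real.sin θ ^ 3 / r ^ 2 : ℝ) : ℂ) *
          ((pθ b s r θ * ((Real.sin θ ^ 2 : ℝ) : ℂ)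
            - b s r θ * ((2 * Real.sin θ * Real.cos θ : ℝ) : ℂ))
              / ((Real.sin θ ^ 2 : ℝ) : ℂ) ^ 2)
        - pr c s r θ
        + ((r ^ 2 / (r ^ 2 - 2 * M * r) : ℝ) : ℂ) * pt a s r θ = 0 := by
    intro s
    have h4 := hE4 s r θ hr hθ
    rw [hinner s] at h4
    exact h4
  have hdθb : HasDerivAt (fun s => pθ b s r θ) (pt (pθ b) t r θ) t :=
    hasDerivAt_pt_pθ (caB t r θ hr hθ)
  have hdb : HasDerivAt (fun s => b s r θ) (pt b t r θ) t := hasDerivAt_pt (dB t r θ hr hθ)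
  have hdrc : HasDerivAt (fun s => pr c s r θ) (pt (pr c) t r θ) t :=
    hasDerivAt_pt_pr (caC t r θ hr hθ)
  have hdta : HasDerivAt (fun s => pt a s r θ) (pt (pt a) t r θ) t :=
    hasDerivAt_pt_pt (caA t r θ hr hθ)
  have hG : HasDerivAt (fun s =>
      ((Real.sin θ ^ 3 / r ^ 2 : ℝ) : ℂ) *
          ((pθ b s r θ * ((Real.sin θ ^ 2 : ℝ) : ℂ)
            - b s r θ * ((2 * Real.sin θ * Real.cos θ : ℝ) : ℂ))
              / ((Real.sin θ ^ 2 : ℝ) : ℂ) ^ 2)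
        - pr c s r θ
        + ((r ^ 2 / (r ^ 2 - 2 * M * r) : ℝ) : ℂ) * pt a s r θ)
      (((Real.sin θ ^ 3 / r ^ 2 : ℝ) : ℂ) *
          ((pt (pθ b) t r θ * ((Real.sin θ ^ 2 : ℝ) : ℂ)
            - pt b t r θ * ((2 * Real.sin θ * Real.cos θ : ℝ) : ℂ))
              / ((Real.sin θ ^ 2 : ℝ) : ℂ) ^ 2)
        - pt (pr c) t r θ
        + ((r ^ 2 / (r ^ 2 - 2 * M * r) : ℝ) : ℂ) * pt (pt a) t r θ) t := by
    exact ((((hdθb.mul_const _).sub (hdb.mul_const _)).div_const _).const_mul _ |>.sub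
      hdrc).add (hdta.const_mul _)
  have hstar : ((Real.sin θ ^ 3 / r ^ 2 : ℝ) : ℂ) *
          ((pt (pθ b) t r θ * ((Real.sin θ ^ 2 : ℝ) : ℂ)
            - pt b t r θ * ((2 * Real.sin θ * Real.cos θ : ℝ) : ℂ))
              / ((Real.sin θ ^ 2 : ℝ) : ℂ) ^ 2)
        - pt (pr c) t r θ
        + ((r ^ 2 / (r ^ 2 - 2 * M * r) : ℝ) : ℂ) * pt (pt a) t r θ = 0 := by
    have h1 := hG.deriv
    have h2 : (fun s =>
        ((Real.sin θ ^ 3 / r ^ 2 : ℝ) : ℂ) *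
            ((pθ b s r θ * ((Real.sin θ ^ 2 : ℝ) : ℂ)
              - b s r θ * ((2 * Real.sin θ * Real.cos θ : ℝ) : ℂ))
                / ((Real.sin θ ^ 2 : ℝ) : ℂ) ^ 2)
          - pr c s r θ
          + ((r ^ 2 / (r ^ 2 - 2 * M * r) : ℝ) : ℂ) * pt a s r θ)
        =ᶠ[nhds t] (fun _ => (0 : ℂ)) := Filter.Eventually.of_forall hg0
    rw [h2.deriv_eq, deriv_const] at h1
    exact h1.symm
  -- Step 7: substitute commuted derivatives and solved quantities
  rw [pt_pθ_comm (caB t r θ hr hθ), hpθptb, pt_pr_comm (caC t r θ hr hθ), hprptc,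
    hptb t r θ hr hθ] at hstar
  have hsinC : Complex.sin (θ : ℂ) ≠ 0 := by
    rw [← Complex.ofReal_sin]; exact hsc
  push_cast at hstar ⊢
  refine mul_left_cancel₀ (pow_ne_zero 4 hsinC) ?_
  have hr2c : (r : ℂ) - 2 * M ≠ 0 := by
    intro h; apply hΔc; linear_combination (r : ℂ) * h
  field_simp [hsinC, hRc, hΔc] at hstar ⊢
  linear_combination -hstar
end
end

section
/- Suppose a, b, c are smooth complex-valued functions on U = ℝ × (2M, ∞) × (0, π) satisfying the coordinate form of the linearized vacuum Einstein equations (E1)–(E4). Then b satisfies the Regge–Wheeler equation: −(r²/Δ)·∂²_t b + (Δ/r²)·∂²_r b + ((2r−2M)/r²)·∂_r b + (1/r²)·(∂²_θ b − cot θ·∂_θ b + b) = (1/r²)·(1 − 8M/r)·b at every point of U. -/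
open Real

noncomputable section

namespace RWaux

open Set Filter Topology

def F3 (f : ℝ → ℝ → ℝ → ℂ) : ℝ × ℝ × ℝ → ℂ := fun p => f p.1 p.2.1 p.2.2

variable {f : ℝ → ℝ → ℝ → ℂ} {s : Set (ℝ × ℝ × ℝ)} {t r θ : ℝ}

lemma hasDerivAt_slice_t (hd : DifferentiableAt ℝ (F3 f) (t, r, θ)) :
    HasDerivAt (fun u => f u r θ) (fderiv ℝ (F3 f) (t, r, θ) (1, 0, 0)) t := by
  have h1 : HasDerivAt (fun u : ℝ => (u, r, θ)) ((1 : ℝ), (0 : ℝ), (0 : ℝ)) t :=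
    (hasDerivAt_id t).prodMk ((hasDerivAt_const t r).prodMk (hasDerivAt_const t θ))
  exact hd.hasFDerivAt.comp_hasDerivAt t h1

lemma hasDerivAt_slice_r (hd : DifferentiableAt ℝ (F3 f) (t, r, θ)) :
    HasDerivAt (fun u => f t u θ) (fderiv ℝ (F3 f) (t, r, θ) (0, 1, 0)) r := by
  have h1 : HasDerivAt (fun u : ℝ => (t, u, θ)) ((0 : ℝ), (1 : ℝ), (0 : ℝ)) r :=
    (hasDerivAt_const r t).prodMk ((hasDerivAt_id r).prodMk (hasDerivAt_const r θ))
  exact hd.hasFDerivAt.comp_hasDerivAt r h1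

lemma hasDerivAt_slice_θ (hd : DifferentiableAt ℝ (F3 f) (t, r, θ)) :
    HasDerivAt (fun u => f t r u) (fderiv ℝ (F3 f) (t, r, θ) (0, 0, 1)) θ := by
  have h1 : HasDerivAt (fun u : ℝ => (t, r, u)) ((0 : ℝ), (0 : ℝ), (1 : ℝ)) θ :=
    (hasDerivAt_const θ t).prodMk ((hasDerivAt_const θ r).prodMk (hasDerivAt_id θ))
  exact hd.hasFDerivAt.comp_hasDerivAt θ h1

lemma pt_eq (hd : DifferentiableAt ℝ (F3 f) (t, r, θ)) :
    pt f t r θ = fderiv ℝ (F3 f) (t, r, θ) (1, 0, 0) := (hasDerivAt_slice_t hd).deriv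

lemma pr_eq (hd : DifferentiableAt ℝ (F3 f) (t, r, θ)) :
    pr f t r θ = fderiv ℝ (F3 f) (t, r, θ) (0, 1, 0) := (hasDerivAt_slice_r hd).deriv

lemma pθ_eq (hd : DifferentiableAt ℝ (F3 f) (t, r, θ)) :
    pθ f t r θ = fderiv ℝ (F3 f) (t, r, θ) (0, 0, 1) := (hasDerivAt_slice_θ hd).deriv

lemma diffAt (hs : IsOpen s) (hf : ContDiffOn ℝ (⊤ : ℕ∞) (F3 f) s) {p : ℝ × ℝ × ℝ} (hp : p ∈ s) :
    DifferentiableAt ℝ (F3 f) p :=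
  (hf.contDiffAt (hs.mem_nhds hp)).differentiableAt (by simp)

lemma contDiffOn_D (hs : IsOpen s) (hf : ContDiffOn ℝ (⊤ : ℕ∞) (F3 f) s) (v : ℝ × ℝ × ℝ) :
    ContDiffOn ℝ (⊤ : ℕ∞) (fun p => fderiv ℝ (F3 f) p v) s :=
  (hf.fderiv_of_isOpen hs (by simp)).clm_apply contDiffOn_const

lemma hasDerivAt_pr (hs : IsOpen s) (hf : ContDiffOn ℝ (⊤ : ℕ∞) (F3 f) s) (hp : (t, r, θ) ∈ s) :
    HasDerivAt (fun u => f t u θ) (pr f t r θ) r := by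
  have h := hasDerivAt_slice_r (diffAt hs hf hp)
  rwa [pr_eq (diffAt hs hf hp)]

lemma hasDerivAt_pθ (hs : IsOpen s) (hf : ContDiffOn ℝ (⊤ : ℕ∞) (F3 f) s) (hp : (t, r, θ) ∈ s) :
    HasDerivAt (fun u => f t r u) (pθ f t r θ) θ := by
  have h := hasDerivAt_slice_θ (diffAt hs hf hp)
  rwa [pθ_eq (diffAt hs hf hp)]

lemma hasDerivAt_D_t (hs : IsOpen s) (hf : ContDiffOn ℝ (⊤ : ℕ∞) (F3 f) s) (hp : (t, r, θ) ∈ s)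
    (v : ℝ × ℝ × ℝ) {q : ℝ → ℝ → ℝ → ℂ}
    (hq : ∀ p ∈ s, q p.1 p.2.1 p.2.2 = fderiv ℝ (F3 f) p v) :
    HasDerivAt (fun u => q u r θ) (pt q t r θ) t ∧
      pt q t r θ = fderiv ℝ (fun p => fderiv ℝ (F3 f) p v) (t, r, θ) (1, 0, 0) := by
  have hGs : ContDiffOn ℝ (⊤ : ℕ∞) (F3 (fun x y z => fderiv ℝ (F3 f) (x, y, z) v)) s :=
    contDiffOn_D hs hf v
  have key : HasDerivAt (fun u => fderiv ℝ (F3 f) (u, r, θ) v)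
      (fderiv ℝ (fun p => fderiv ℝ (F3 f) p v) (t, r, θ) (1, 0, 0)) t :=
    hasDerivAt_slice_t (diffAt hs hGs hp)
  have hev : (fun u => q u r θ) =ᶠ[𝓝 t] (fun u => fderiv ℝ (F3 f) (u, r, θ) v) := by
    have hopen : IsOpen {u : ℝ | (u, r, θ) ∈ s} :=
      hs.preimage (continuous_id.prodMk (continuous_const.prodMk continuous_const))
    filter_upwards [hopen.mem_nhds hp] with u hu
    exact hq (u, r, θ) hu
  have key2 := key.congr_of_eventuallyEq hev
  have h3 : pt q t r θ = fderiv ℝ (fun p => fderiv ℝ (F3 f) p v) (t, r, θ) (1, 0, 0) :=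
    key2.deriv
  exact ⟨h3 ▸ key2, h3⟩

lemma hasDerivAt_D_r (hs : IsOpen s) (hf : ContDiffOn ℝ (⊤ : ℕ∞) (F3 f) s) (hp : (t, r, θ) ∈ s)
    (v : ℝ × ℝ × ℝ) {q : ℝ → ℝ → ℝ → ℂ}
    (hq : ∀ p ∈ s, q p.1 p.2.1 p.2.2 = fderiv ℝ (F3 f) p v) :
    HasDerivAt (fun u => q t u θ) (pr q t r θ) r ∧
      pr q t r θ = fderiv ℝ (fun p => fderiv ℝ (F3 f) p v) (t, r, θ) (0, 1, 0) := by
  have hGs : ContDiffOn ℝ (⊤ : ℕ∞) (F3 (fun x y z => fderiv ℝ (F3 f) (x, y, z) v)) s :=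
    contDiffOn_D hs hf v
  have key : HasDerivAt (fun u => fderiv ℝ (F3 f) (t, u, θ) v)
      (fderiv ℝ (fun p => fderiv ℝ (F3 f) p v) (t, r, θ) (0, 1, 0)) r :=
    hasDerivAt_slice_r (diffAt hs hGs hp)
  have hev : (fun u => q t u θ) =ᶠ[𝓝 r] (fun u => fderiv ℝ (F3 f) (t, u, θ) v) := by
    have hopen : IsOpen {u : ℝ | (t, u, θ) ∈ s} :=
      hs.preimage (continuous_const.prodMk (continuous_id.prodMk continuous_const))
    filter_upwards [hopen.mem_nhds hp] with u hu
    exact hq (t, u, θ) hu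
  have key2 := key.congr_of_eventuallyEq hev
  have h3 : pr q t r θ = fderiv ℝ (fun p => fderiv ℝ (F3 f) p v) (t, r, θ) (0, 1, 0) :=
    key2.deriv
  exact ⟨h3 ▸ key2, h3⟩

lemma hasDerivAt_D_θ (hs : IsOpen s) (hf : ContDiffOn ℝ (⊤ : ℕ∞) (F3 f) s) (hp : (t, r, θ) ∈ s)
    (v : ℝ × ℝ × ℝ) {q : ℝ → ℝ → ℝ → ℂ}
    (hq : ∀ p ∈ s, q p.1 p.2.1 p.2.2 = fderiv ℝ (F3 f) p v) :
    HasDerivAt (fun u => q t r u) (pθ q t r θ) θ ∧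
      pθ q t r θ = fderiv ℝ (fun p => fderiv ℝ (F3 f) p v) (t, r, θ) (0, 0, 1) := by
  have hGs : ContDiffOn ℝ (⊤ : ℕ∞) (F3 (fun x y z => fderiv ℝ (F3 f) (x, y, z) v)) s :=
    contDiffOn_D hs hf v
  have key : HasDerivAt (fun u => fderiv ℝ (F3 f) (t, r, u) v)
      (fderiv ℝ (fun p => fderiv ℝ (F3 f) p v) (t, r, θ) (0, 0, 1)) θ :=
    hasDerivAt_slice_θ (diffAt hs hGs hp)
  have hev : (fun u => q t r u) =ᶠ[𝓝 θ] (fun u => fderiv ℝ (F3 f) (t, r, u) v) := by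
    have hopen : IsOpen {u : ℝ | (t, r, u) ∈ s} :=
      hs.preimage (continuous_const.prodMk (continuous_const.prodMk continuous_id))
    filter_upwards [hopen.mem_nhds hp] with u hu
    exact hq (t, r, u) hu
  have key2 := key.congr_of_eventuallyEq hev
  have h3 : pθ q t r θ = fderiv ℝ (fun p => fderiv ℝ (F3 f) p v) (t, r, θ) (0, 0, 1) :=
    key2.deriv
  exact ⟨h3 ▸ key2, h3⟩

lemma symm_mix (hs : IsOpen s) (hf : ContDiffOn ℝ (⊤ : ℕ∞) (F3 f) s) (hp : (t, r, θ) ∈ s)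
    (v w : ℝ × ℝ × ℝ) :
    fderiv ℝ (fun p => fderiv ℝ (F3 f) p v) (t, r, θ) w
      = fderiv ℝ (fun p => fderiv ℝ (F3 f) p w) (t, r, θ) v := by
  have hF' : DifferentiableAt ℝ (fderiv ℝ (F3 f)) (t, r, θ) :=
    (((hf.fderiv_of_isOpen (m := (⊤ : ℕ∞)) hs (by simp)).contDiffAt (hs.mem_nhds hp)).differentiableAt (by simp))
  have h1 : fderiv ℝ (fun p => fderiv ℝ (F3 f) p v) (t, r, θ)
      = (fderiv ℝ (fderiv ℝ (F3 f)) (t, r, θ)).flip v := by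
    rw [fderiv_clm_apply hF' (differentiableAt_const v)]
    simp
  have h2 : fderiv ℝ (fun p => fderiv ℝ (F3 f) p w) (t, r, θ)
      = (fderiv ℝ (fderiv ℝ (F3 f)) (t, r, θ)).flip w := by
    rw [fderiv_clm_apply hF' (differentiableAt_const w)]
    simp
  rw [h1, h2]
  have hsym := (hf.contDiffAt (hs.mem_nhds hp)).isSymmSndFDerivAt (by norm_num; exact WithTop.coe_le_coe.mpr (le_top : (2 : ℕ∞) ≤ ⊤))
  exact hsym w v

end RWaux
open RWaux in
set_option maxHeartbeats 2000000 in
/-- Decoupling of `α`: if `(a, b, c)` are the coefficient functions of an axial solution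
`(α, β, γ)` of the linearized vacuum Einstein equations around Schwarzschild of mass `M`,
then `b` satisfies the Regge–Wheeler equation with potential `(1/r²)(1 − 8M/r)`. -/
theorem regge_wheeler_decoupling_beta
    (M : ℝ) (hM : 0 < M)
    (a b c : ℝ → ℝ → ℝ → ℂ)
    (ha : ContDiffOn ℝ (⊤ : ℕ∞) (fun p : ℝ × ℝ × ℝ => a p.1 p.2.1 p.2.2)
      ((Set.univ : Set ℝ) ×ˢ Set.Ioi (2 * M) ×ˢ Set.Ioo 0 π))
    (hb : ContDiffOn ℝ (⊤ : ℕ∞) (fun p : ℝ × ℝ × ℝ => b p.1 p.2.1 p.2.2)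
      ((Set.univ : Set ℝ) ×ˢ Set.Ioi (2 * M) ×ˢ Set.Ioo 0 π))
    (hc : ContDiffOn ℝ (⊤ : ℕ∞) (fun p : ℝ × ℝ × ℝ => c p.1 p.2.1 p.2.2)
      ((Set.univ : Set ℝ) ×ˢ Set.Ioi (2 * M) ×ˢ Set.Ioo 0 π))
    (hE1 : ∀ t r θ : ℝ, r ∈ Set.Ioi (2 * M) → θ ∈ Set.Ioo 0 π →
      deriv (fun s : ℝ => ((s ^ 2 : ℝ) : ℂ) * b t s θ) r
        + ((r ^ 4 / (r ^ 2 - 2 * M * r) : ℝ) : ℂ) * pθ c t r θ / ((Real.sin θ : ℝ) : ℂ) = 0)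
    (hE2 : ∀ t r θ : ℝ, r ∈ Set.Ioi (2 * M) → θ ∈ Set.Ioo 0 π →
      pθ a t r θ / ((Real.sin θ : ℝ) : ℂ) + pt b t r θ = 0)
    (hE3 : ∀ t r θ : ℝ, r ∈ Set.Ioi (2 * M) → θ ∈ Set.Ioo 0 π →
      deriv (fun s : ℝ => ((s ^ 2 : ℝ) : ℂ) * a t s θ) r
        - ((r ^ 4 / (r ^ 2 - 2 * M * r) : ℝ) : ℂ) * pt c t r θ = 0)
    (hE4 : ∀ t r θ : ℝ, r ∈ Set.Ioi (2 * M) → θ ∈ Set.Ioo 0 π →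
      ((Real.sin θ ^ 3 / r ^ 2 : ℝ) : ℂ)
          * deriv (fun s : ℝ => b t r s / ((Real.sin s ^ 2 : ℝ) : ℂ)) θ
        - pr c t r θ
        + ((r ^ 2 / (r ^ 2 - 2 * M * r) : ℝ) : ℂ) * pt a t r θ = 0) :
    ∀ t r θ : ℝ, r ∈ Set.Ioi (2 * M) → θ ∈ Set.Ioo 0 π →
      -((r ^ 2 / (r ^ 2 - 2 * M * r) : ℝ) : ℂ) * pt (pt b) t r θ
        + (((r ^ 2 - 2 * M * r) / r ^ 2 : ℝ) : ℂ) * pr (pr b) t r θ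
        + (((2 * r - 2 * M) / r ^ 2 : ℝ) : ℂ) * pr b t r θ
        + ((1 / r ^ 2 : ℝ) : ℂ) *
            (pθ (pθ b) t r θ
              - ((Real.cos θ / Real.sin θ : ℝ) : ℂ) * pθ b t r θ
              + b t r θ)
        = ((1 / r ^ 2 * (1 - 8 * M / r) : ℝ) : ℂ) * b t r θ := by
  intro t r θ hr hθ
  have hs : IsOpen ((Set.univ : Set ℝ) ×ˢ Set.Ioi (2 * M) ×ˢ Set.Ioo 0 π) :=
    isOpen_univ.prod (isOpen_Ioi.prod isOpen_Ioo)
  have hmem : ∀ t' r' θ' : ℝ, r' ∈ Set.Ioi (2 * M) → θ' ∈ Set.Ioo 0 π →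
      (t', r', θ') ∈ (Set.univ : Set ℝ) ×ˢ Set.Ioi (2 * M) ×ˢ Set.Ioo 0 π :=
    fun t' r' θ' h1 h2 => ⟨Set.mem_univ _, h1, h2⟩
  have hp := hmem t r θ hr hθ
  have hr' : 2 * M < r := hr
  have hrpos : 0 < r := lt_trans (by linarith) hr'
  have hrne : r ≠ 0 := ne_of_gt hrpos
  have hΔpos : 0 < r ^ 2 - 2 * M * r := by nlinarith
  have hΔne : r ^ 2 - 2 * M * r ≠ 0 := ne_of_gt hΔpos
  have hSin : 0 < Real.sin θ := Real.sin_pos_of_pos_of_lt_pi hθ.1 hθ.2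
  have hSinne : Real.sin θ ≠ 0 := ne_of_gt hSin
  -- first derivatives
  have hbr : HasDerivAt (fun u => b t u θ) (pr b t r θ) r := hasDerivAt_pr hs hb hp
  have hbθ : HasDerivAt (fun u => b t r u) (pθ b t r θ) θ := hasDerivAt_pθ hs hb hp
  -- second derivatives
  have hbrr : HasDerivAt (fun u => pr b t u θ) (pr (pr b) t r θ) r :=
    (hasDerivAt_D_r hs hb hp (0, 1, 0) (fun p hp' => pr_eq (diffAt hs hb hp'))).1
  have hcθr : HasDerivAt (fun u => pθ c t u θ) (pr (pθ c) t r θ) r :=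
    (hasDerivAt_D_r hs hc hp (0, 0, 1) (fun p hp' => pθ_eq (diffAt hs hc hp'))).1
  have haθt : HasDerivAt (fun u => pθ a u r θ) (pt (pθ a) t r θ) t :=
    (hasDerivAt_D_t hs ha hp (0, 0, 1) (fun p hp' => pθ_eq (diffAt hs ha hp'))).1
  have hbtt : HasDerivAt (fun u => pt b u r θ) (pt (pt b) t r θ) t :=
    (hasDerivAt_D_t hs hb hp (1, 0, 0) (fun p hp' => pt_eq (diffAt hs hb hp'))).1
  have hpθb : HasDerivAt (fun u => pθ b t r u) (pθ (pθ b) t r θ) θ :=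
    (hasDerivAt_D_θ hs hb hp (0, 0, 1) (fun p hp' => pθ_eq (diffAt hs hb hp'))).1
  have hprc : HasDerivAt (fun u => pr c t r u) (pθ (pr c) t r θ) θ :=
    (hasDerivAt_D_θ hs hc hp (0, 1, 0) (fun p hp' => pr_eq (diffAt hs hc hp'))).1
  have hpta : HasDerivAt (fun u => pt a t r u) (pθ (pt a) t r θ) θ :=
    (hasDerivAt_D_θ hs ha hp (1, 0, 0) (fun p hp' => pt_eq (diffAt hs ha hp'))).1
  -- symmetry of mixed partials
  have symc : pr (pθ c) t r θ = pθ (pr c) t r θ := by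
    rw [(hasDerivAt_D_r hs hc hp (0, 0, 1) (fun p hp' => pθ_eq (diffAt hs hc hp'))).2,
      (hasDerivAt_D_θ hs hc hp (0, 1, 0) (fun p hp' => pr_eq (diffAt hs hc hp'))).2]
    exact symm_mix hs hc hp (0, 0, 1) (0, 1, 0)
  have syma : pθ (pt a) t r θ = pt (pθ a) t r θ := by
    rw [(hasDerivAt_D_θ hs ha hp (1, 0, 0) (fun p hp' => pt_eq (diffAt hs ha hp'))).2,
      (hasDerivAt_D_t hs ha hp (0, 0, 1) (fun p hp' => pθ_eq (diffAt hs ha hp'))).2]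
    exact symm_mix hs ha hp (1, 0, 0) (0, 0, 1)
  -- (B) equation E1 at the point, with the radial derivative expanded
  have hsq : HasDerivAt (fun u : ℝ => ((u ^ 2 : ℝ) : ℂ)) (((2 * r : ℝ)) : ℂ) r := by
    have h : HasDerivAt (fun u : ℝ => u ^ 2) (2 * r) r := by simpa using hasDerivAt_pow 2 r
    exact h.ofReal_comp
  have hB := hE1 t r θ hr hθ
  have hm : HasDerivAt (fun s : ℝ => ((s ^ 2 : ℝ) : ℂ) * b t s θ)
      (((2 * r : ℝ) : ℂ) * b t r θ + ((r ^ 2 : ℝ) : ℂ) * pr b t r θ) r := hsq.mul hbr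
  rw [hm.deriv] at hB
  -- (A) the radial derivative of E1
  have h2u : HasDerivAt (fun u : ℝ => ((2 * u : ℝ) : ℂ)) (((2 : ℝ)) : ℂ) r := by
    have h : HasDerivAt (fun u : ℝ => 2 * u) (2 : ℝ) r := by
      simpa using (hasDerivAt_id r).const_mul (2 : ℝ)
    exact h.ofReal_comp
  have hq4 : HasDerivAt (fun u : ℝ => u ^ 4 / (u ^ 2 - 2 * M * u))
      ((4 * r ^ 3 * (r ^ 2 - 2 * M * r) - r ^ 4 * (2 * r - 2 * M))
        / (r ^ 2 - 2 * M * r) ^ 2) r := by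
    have h1 : HasDerivAt (fun u : ℝ => u ^ 4) (4 * r ^ 3) r := by
      simpa using hasDerivAt_pow 4 r
    have h2 : HasDerivAt (fun u : ℝ => u ^ 2 - 2 * M * u) (2 * r - 2 * M) r := by
      have h3 : HasDerivAt (fun u : ℝ => 2 * M * u) (2 * M) r := by
        simpa using (hasDerivAt_id r).const_mul (2 * M)
      simpa using (hasDerivAt_pow 2 r).fun_sub h3
    convert h1.fun_div h2 hΔne using 1
  have hT1 : HasDerivAt (fun u : ℝ => ((2 * u : ℝ) : ℂ) * b t u θ)
      (((2 : ℝ) : ℂ) * b t r θ + ((2 * r : ℝ) : ℂ) * pr b t r θ) r := h2u.mul hbr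
  have hT2 : HasDerivAt (fun u : ℝ => ((u ^ 2 : ℝ) : ℂ) * pr b t u θ)
      (((2 * r : ℝ) : ℂ) * pr b t r θ + ((r ^ 2 : ℝ) : ℂ) * pr (pr b) t r θ) r :=
    hsq.mul hbrr
  have hT3 : HasDerivAt
      (fun u : ℝ => ((u ^ 4 / (u ^ 2 - 2 * M * u) : ℝ) : ℂ) * pθ c t u θ
        / ((Real.sin θ : ℝ) : ℂ))
      ((((4 * r ^ 3 * (r ^ 2 - 2 * M * r) - r ^ 4 * (2 * r - 2 * M))
            / (r ^ 2 - 2 * M * r) ^ 2 : ℝ) : ℂ) * pθ c t r θ / ((Real.sin θ : ℝ) : ℂ)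
        + ((r ^ 4 / (r ^ 2 - 2 * M * r) : ℝ) : ℂ) * pr (pθ c) t r θ
          / ((Real.sin θ : ℝ) : ℂ)) r := by
    have h := (hq4.ofReal_comp.fun_mul hcθr).div_const ((Real.sin θ : ℝ) : ℂ)
    refine h.congr_deriv ?_
    push_cast
    ring
  have htot := (hT1.fun_add hT2).fun_add hT3
  have hev : (fun u : ℝ => ((2 * u : ℝ) : ℂ) * b t u θ + ((u ^ 2 : ℝ) : ℂ) * pr b t u θ
      + ((u ^ 4 / (u ^ 2 - 2 * M * u) : ℝ) : ℂ) * pθ c t u θ / ((Real.sin θ : ℝ) : ℂ))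
      =ᶠ[nhds r] (fun _ => (0 : ℂ)) := by
    filter_upwards [Ioi_mem_nhds hr'] with u hu
    have h := hE1 t u θ hu hθ
    have hbru : HasDerivAt (fun v => b t v θ) (pr b t u θ) u :=
      hasDerivAt_pr hs hb (hmem t u θ hu hθ)
    have hsqu : HasDerivAt (fun v : ℝ => ((v ^ 2 : ℝ) : ℂ)) (((2 * u : ℝ)) : ℂ) u := by
      have h' : HasDerivAt (fun v : ℝ => v ^ 2) (2 * u) u := by simpa using hasDerivAt_pow 2 u
      exact h'.ofReal_comp
    have hmu : HasDerivAt (fun s : ℝ => ((s ^ 2 : ℝ) : ℂ) * b t s θ)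
        (((2 * u : ℝ) : ℂ) * b t u θ + ((u ^ 2 : ℝ) : ℂ) * pr b t u θ) u := hsqu.mul hbru
    rw [hmu.deriv] at h
    exact h
  have hA := htot.deriv
  rw [Filter.EventuallyEq.deriv_eq hev] at hA
  simp only [deriv_const] at hA
  -- (D2) the time derivative of E2
  have hψ : (fun u => pθ a u r θ / ((Real.sin θ : ℝ) : ℂ) + pt b u r θ)
      = fun _ => (0 : ℂ) := funext fun u => hE2 u r θ hr hθ
  have htot2 : HasDerivAt (fun u => pθ a u r θ / ((Real.sin θ : ℝ) : ℂ) + pt b u r θ)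
      (pt (pθ a) t r θ / ((Real.sin θ : ℝ) : ℂ) + pt (pt b) t r θ) t :=
    (haθt.div_const _).add hbtt
  have hD2 := htot2.deriv
  rw [hψ] at hD2
  simp only [deriv_const] at hD2
  -- (D3) the angular derivative of E4
  have hsinC : HasDerivAt (fun u : ℝ => ((Real.sin u : ℝ) : ℂ)) ((Real.cos θ : ℝ) : ℂ) θ :=
    (Real.hasDerivAt_sin θ).ofReal_comp
  have hcos2 : HasDerivAt (fun u : ℝ => ((2 * Real.cos u : ℝ) : ℂ))
      ((-(2 * Real.sin θ) : ℝ) : ℂ) θ := by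
    have h : HasDerivAt (fun u : ℝ => 2 * Real.cos u) (-(2 * Real.sin θ)) θ := by
      have := (Real.hasDerivAt_cos θ).const_mul (2 : ℝ)
      refine this.congr_deriv ?_
      ring
    exact h.ofReal_comp
  have hnum : HasDerivAt
      (fun u : ℝ => ((Real.sin u : ℝ) : ℂ) * pθ b t r u
        - ((2 * Real.cos u : ℝ) : ℂ) * b t r u)
      (((Real.cos θ : ℝ) : ℂ) * pθ b t r θ + ((Real.sin θ : ℝ) : ℂ) * pθ (pθ b) t r θ
        - (((-(2 * Real.sin θ) : ℝ) : ℂ) * b t r θ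
          + ((2 * Real.cos θ : ℝ) : ℂ) * pθ b t r θ)) θ :=
    (hsinC.mul hpθb).sub (hcos2.mul hbθ)
  have htot3 : HasDerivAt
      (fun u : ℝ => (((Real.sin u : ℝ) : ℂ) * pθ b t r u
          - ((2 * Real.cos u : ℝ) : ℂ) * b t r u) / ((r ^ 2 : ℝ) : ℂ)
        - pr c t r u + ((r ^ 2 / (r ^ 2 - 2 * M * r) : ℝ) : ℂ) * pt a t r u)
      ((((Real.cos θ : ℝ) : ℂ) * pθ b t r θ + ((Real.sin θ : ℝ) : ℂ) * pθ (pθ b) t r θ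
          - (((-(2 * Real.sin θ) : ℝ) : ℂ) * b t r θ
            + ((2 * Real.cos θ : ℝ) : ℂ) * pθ b t r θ)) / ((r ^ 2 : ℝ) : ℂ)
        - pθ (pr c) t r θ
        + ((r ^ 2 / (r ^ 2 - 2 * M * r) : ℝ) : ℂ) * pθ (pt a) t r θ) θ :=
    ((hnum.div_const _).sub hprc).add
      (hpta.const_mul ((r ^ 2 / (r ^ 2 - 2 * M * r) : ℝ) : ℂ))
  have hev3 : (fun u : ℝ => (((Real.sin u : ℝ) : ℂ) * pθ b t r u
          - ((2 * Real.cos u : ℝ) : ℂ) * b t r u) / ((r ^ 2 : ℝ) : ℂ)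
        - pr c t r u + ((r ^ 2 / (r ^ 2 - 2 * M * r) : ℝ) : ℂ) * pt a t r u)
      =ᶠ[nhds θ] (fun _ => (0 : ℂ)) := by
    filter_upwards [Ioo_mem_nhds hθ.1 hθ.2] with u hu
    have h := hE4 t r u hr hu
    have hsinu : 0 < Real.sin u := Real.sin_pos_of_pos_of_lt_pi hu.1 hu.2
    have hbθu : HasDerivAt (fun v => b t r v) (pθ b t r u) u :=
      hasDerivAt_pθ hs hb (hmem t r u hr hu)
    have hs2 : HasDerivAt (fun v : ℝ => ((Real.sin v ^ 2 : ℝ) : ℂ))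
        ((2 * Real.sin u * Real.cos u : ℝ) : ℂ) u := by
      have h' : HasDerivAt (fun v : ℝ => Real.sin v ^ 2) (2 * Real.sin u * Real.cos u) u := by
        have := (Real.hasDerivAt_sin u).fun_pow 2
        refine this.congr_deriv ?_
        push_cast
        ring
      exact h'.ofReal_comp
    have hne2 : ((Real.sin u ^ 2 : ℝ) : ℂ) ≠ 0 :=
      Complex.ofReal_ne_zero.mpr (pow_ne_zero 2 (ne_of_gt hsinu))
    have hdiv : HasDerivAt (fun s : ℝ => b t r s / ((Real.sin s ^ 2 : ℝ) : ℂ))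
        ((pθ b t r u * ((Real.sin u ^ 2 : ℝ) : ℂ)
          - b t r u * ((2 * Real.sin u * Real.cos u : ℝ) : ℂ))
          / ((Real.sin u ^ 2 : ℝ) : ℂ) ^ 2) u := hbθu.div hs2 hne2
    rw [hdiv.deriv] at h
    have hSu : Complex.sin (u : ℂ) ≠ 0 := by
      rw [← Complex.ofReal_sin]
      exact Complex.ofReal_ne_zero.mpr (ne_of_gt hsinu)
    have hrc : ((r : ℝ) : ℂ) ≠ 0 := Complex.ofReal_ne_zero.mpr hrne
    have key : ((Real.sin u ^ 3 / r ^ 2 : ℝ) : ℂ)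
        * ((pθ b t r u * ((Real.sin u ^ 2 : ℝ) : ℂ)
            - b t r u * ((2 * Real.sin u * Real.cos u : ℝ) : ℂ))
          / ((Real.sin u ^ 2 : ℝ) : ℂ) ^ 2)
        = (((Real.sin u : ℝ) : ℂ) * pθ b t r u - ((2 * Real.cos u : ℝ) : ℂ) * b t r u)
          / ((r ^ 2 : ℝ) : ℂ) := by
      push_cast
      field_simp
    rw [key] at h
    exact h
  have hD3 := htot3.deriv
  rw [Filter.EventuallyEq.deriv_eq hev3] at hD3
  simp only [deriv_const] at hD3
  -- final algebra
  rw [symc] at hA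
  rw [syma] at hD3
  have hSc : Complex.sin (θ : ℂ) ≠ 0 := by
    rw [← Complex.ofReal_sin]
    exact Complex.ofReal_ne_zero.mpr hSinne
  have hrc : ((r : ℝ) : ℂ) ≠ 0 := Complex.ofReal_ne_zero.mpr hrne
  have hΔc : ((r : ℂ)) ^ 2 - 2 * (M : ℂ) * (r : ℂ) ≠ 0 := by
    have h0 := Complex.ofReal_ne_zero.mpr hΔne
    push_cast at h0
    exact h0
  have hr2M : (r : ℂ) - 2 * (M : ℂ) ≠ 0 := by
    intro h0
    apply hΔc
    linear_combination (r : ℂ) * h0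
  push_cast at hA hB hD2 hD3 ⊢
  linear_combination (norm := (field_simp [hSc, hΔc, hr2M, hrc]; ring1))
    (-1 / Complex.sin (θ : ℂ)) * hD3
    + ((r : ℂ) ^ 2 / ((r : ℂ) ^ 2 - 2 * (M : ℂ) * (r : ℂ))) * hD2
    - (((r : ℂ) ^ 2 - 2 * (M : ℂ) * (r : ℂ)) / (r : ℂ) ^ 4) * hA
    - ((2 * (r : ℂ) - 6 * (M : ℂ)) / (r : ℂ) ^ 4) * hB
end
end

section
/- For every smooth compactly supported function f : (0, π) → ℂ, the following Poincaré inequality for spin-2 axisymmetric sections holds: ∫₀^π ( |f′(θ) − 2·cot θ·f(θ)|² + 4·cot²θ·|f(θ)|² ) · sin⁻³θ dθ ≥ 2 · ∫₀^π |f(θ)|² · sin⁻³θ dθ. -/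
open Real

lemma hasDerivAt_G_aux (f : ℝ → ℂ) (θ : ℝ) (hs : Real.sin θ ≠ 0)
    (F' : ℂ) (hF : HasDerivAt f F' θ) :
    HasDerivAt (fun t => 2 * ‖f t‖ ^ 2 * Real.cos t / Real.sin t ^ 4)
      ((‖F' - ((2 * (Real.cos θ / Real.sin θ) : ℝ) : ℂ) * f θ‖ ^ 2
          + 4 * (Real.cos θ / Real.sin θ) ^ 2 * ‖f θ‖ ^ 2) / Real.sin θ ^ 3
        - 2 * (‖f θ‖ ^ 2 / Real.sin θ ^ 3)
        - ‖F' - ((4 * (Real.cos θ / Real.sin θ) : ℝ) : ℂ) * f θ‖ ^ 2 / Real.sin θ ^ 3) θ := by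
  have hre : HasDerivAt (fun t => (f t).re) F'.re θ :=
    (Complex.reCLM.hasFDerivAt.comp_hasDerivAt θ hF)
  have him : HasDerivAt (fun t => (f t).im) F'.im θ :=
    (Complex.imCLM.hasFDerivAt.comp_hasDerivAt θ hF)
  have hu : HasDerivAt (fun t => (f t).re ^ 2 + (f t).im ^ 2)
      (2 * (f θ).re ^ 1 * F'.re + 2 * (f θ).im ^ 1 * F'.im) θ := (hre.pow 2).add (him.pow 2)
  have hnum : HasDerivAt (fun t => 2 * ((f t).re ^ 2 + (f t).im ^ 2) * Real.cos t)
      (2 * (2 * (f θ).re ^ 1 * F'.re + 2 * (f θ).im ^ 1 * F'.im) * Real.cos θ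
        + 2 * ((f θ).re ^ 2 + (f θ).im ^ 2) * (-Real.sin θ)) θ :=
    (hu.const_mul 2).mul (Real.hasDerivAt_cos θ)
  have hden : HasDerivAt (fun t => Real.sin t ^ 4) (4 * Real.sin θ ^ 3 * Real.cos θ) θ := by
    simpa using (Real.hasDerivAt_sin θ).fun_pow 4
  have hG := hnum.fun_div hden (pow_ne_zero 4 hs)
  have hfun : (fun t => 2 * ‖f t‖ ^ 2 * Real.cos t / Real.sin t ^ 4)
      = fun t => 2 * ((f t).re ^ 2 + (f t).im ^ 2) * Real.cos t / Real.sin t ^ 4 := by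
    funext t
    rw [Complex.sq_norm, Complex.normSq_apply]
    ring
  rw [hfun]
  refine hG.congr_deriv (Eq.symm ?_)
  simp only [Complex.sq_norm, Complex.normSq_apply, Complex.sub_re,
    Complex.sub_im, Complex.mul_re, Complex.mul_im, Complex.ofReal_re, Complex.ofReal_im]
  field_simp
  ring

/-- Poincaré inequality for axisymmetric sections `α = f·Ψ₋₁²` of the spin-2 bundle `L(−2)`
over the round sphere: the angular gradient controls twice the zeroth-order term, the
constant `2` being the lowest spin-weight-2 eigenvalue `ℓ(ℓ+1) − s²` with `ℓ = s = 2`. -/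
theorem poincare_spin2
    (f : ℝ → ℂ) (hf : ContDiff ℝ (⊤ : ℕ∞) f)
    (hsupp : HasCompactSupport f) (hsub : tsupport f ⊆ Set.Ioo 0 π) :
    ∫ θ in (0:ℝ)..π,
        (‖deriv f θ - ((2 * (Real.cos θ / Real.sin θ) : ℝ) : ℂ) * f θ‖ ^ 2
          + 4 * (Real.cos θ / Real.sin θ) ^ 2 * ‖f θ‖ ^ 2) / Real.sin θ ^ 3
      ≥ 2 * ∫ θ in (0:ℝ)..π, ‖f θ‖ ^ 2 / Real.sin θ ^ 3 := by
  set L : ℝ → ℝ := fun θ =>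
    (‖deriv f θ - ((2 * (Real.cos θ / Real.sin θ) : ℝ) : ℂ) * f θ‖ ^ 2
      + 4 * (Real.cos θ / Real.sin θ) ^ 2 * ‖f θ‖ ^ 2) / Real.sin θ ^ 3 with hL
  set R : ℝ → ℝ := fun θ => ‖f θ‖ ^ 2 / Real.sin θ ^ 3 with hR
  set Q : ℝ → ℝ := fun θ =>
    ‖deriv f θ - ((4 * (Real.cos θ / Real.sin θ) : ℝ) : ℂ) * f θ‖ ^ 2 / Real.sin θ ^ 3 with hQ
  by_cases hne : (tsupport f).Nonempty
  case neg =>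
    have h0 : ∀ θ, f θ = 0 := fun θ =>
      image_eq_zero_of_notMem_tsupport (fun h => hne ⟨θ, h⟩)
    have hd0 : ∀ θ, deriv f θ = 0 := by
      intro θ
      have : deriv f θ = deriv (fun _ : ℝ => (0:ℂ)) θ := by
        congr 1; funext t; exact h0 t
      simpa using this
    have hLz : L = fun _ => 0 := by funext θ; simp [hL, h0, hd0]
    have hRz : R = fun _ => 0 := by funext θ; simp [hR, h0]
    rw [hLz, hRz]; simp
  case pos =>
  obtain ⟨a, ha⟩ : ∃ a, a = sInf (tsupport f) := ⟨_, rfl⟩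
  obtain ⟨b, hb⟩ : ∃ b, b = sSup (tsupport f) := ⟨_, rfl⟩
  have haK : a ∈ tsupport f := ha ▸ hsupp.sInf_mem hne
  have hbK : b ∈ tsupport f := hb ▸ hsupp.sSup_mem hne
  have hKab : tsupport f ⊆ Set.Icc a b := fun x hx =>
    ⟨ha ▸ csInf_le hsupp.bddBelow hx, hb ▸ le_csSup hsupp.bddAbove hx⟩
  have ha0 : 0 < a := (hsub haK).1
  have hbπ : b < π := (hsub hbK).2
  have hab : a ≤ b := (hKab haK).2
  set a' : ℝ := a / 2 with ha'
  set b' : ℝ := (b + π) / 2 with hb'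
  have ha'0 : 0 < a' := by positivity
  have ha'a : a' < a := by rw [ha']; linarith
  have hbb' : b < b' := by rw [hb']; linarith
  have hb'π : b' < π := by rw [hb']; linarith
  have ha'b' : a' ≤ b' := by linarith
  have huIcc : Set.uIcc a' b' = Set.Icc a' b' := Set.uIcc_of_le ha'b'
  -- positivity of sin on [a', b']
  have hsin : ∀ θ ∈ Set.uIcc a' b', 0 < Real.sin θ := by
    intro θ hθ
    rw [huIcc] at hθ
    exact Real.sin_pos_of_pos_of_lt_pi (lt_of_lt_of_le ha'0 hθ.1) (lt_of_le_of_lt hθ.2 hb'π)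
  have hne' : ∀ θ ∈ Set.uIcc a' b', Real.sin θ ≠ 0 := fun θ hθ => (hsin θ hθ).ne'
  -- vanishing off the support
  have hvan : ∀ θ, θ ∉ Set.Icc a b → f θ = 0 ∧ deriv f θ = 0 := by
    intro θ hθ
    have hθK : θ ∉ tsupport f := fun h => hθ (hKab h)
    exact ⟨image_eq_zero_of_notMem_tsupport hθK,
      Function.notMem_support.mp fun h => hθK (support_deriv_subset h)⟩
  have hLsupp : Function.support L ⊆ Set.Icc a b := by
    intro θ hθ
    by_contra hc
    obtain ⟨h1, h2⟩ := hvan θ hc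
    exact hθ (by simp [hL, h1, h2])
  have hRsupp : Function.support R ⊆ Set.Icc a b := by
    intro θ hθ
    by_contra hc
    exact hθ (by simp [hR, (hvan θ hc).1])
  have hIcc1 : Set.Icc a b ⊆ Set.Ioc 0 π := fun x hx =>
    ⟨lt_of_lt_of_le ha0 hx.1, le_of_lt (lt_of_le_of_lt hx.2 hbπ)⟩
  have hIcc2 : Set.Icc a b ⊆ Set.Ioc a' b' := fun x hx =>
    ⟨lt_of_lt_of_le ha'a hx.1, le_of_lt (lt_of_le_of_lt hx.2 hbb')⟩
  have hLint : ∫ θ in (0:ℝ)..π, L θ = ∫ θ in a'..b', L θ := by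
    rw [intervalIntegral.integral_eq_integral_of_support_subset (hLsupp.trans hIcc1),
      intervalIntegral.integral_eq_integral_of_support_subset (hLsupp.trans hIcc2)]
  have hRint : ∫ θ in (0:ℝ)..π, R θ = ∫ θ in a'..b', R θ := by
    rw [intervalIntegral.integral_eq_integral_of_support_subset (hRsupp.trans hIcc1),
      intervalIntegral.integral_eq_integral_of_support_subset (hRsupp.trans hIcc2)]
  -- continuity facts
  have hdc : Continuous (deriv f) := hf.continuous_deriv (by simp)
  have hc : Continuous f := hf.continuous
  have hcot : ContinuousOn (fun θ => Real.cos θ / Real.sin θ) (Set.uIcc a' b') :=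
    Real.continuous_cos.continuousOn.div Real.continuous_sin.continuousOn hne'
  have hLcont : ContinuousOn L (Set.uIcc a' b') := by
    rw [hL]
    fun_prop (disch := intros; first | (apply hne'; assumption) | (apply pow_ne_zero; apply hne'; assumption))
  have hRcont : ContinuousOn R (Set.uIcc a' b') := by
    rw [hR]
    fun_prop (disch := intros; first | (apply hne'; assumption) | (apply pow_ne_zero; apply hne'; assumption))
  have hQcont : ContinuousOn Q (Set.uIcc a' b') := by
    rw [hQ]
    fun_prop (disch := intros; first | (apply hne'; assumption) | (apply pow_ne_zero; apply hne'; assumption))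
  -- FTC for G = 2‖f‖²cos/sin⁴
  have hderivG : ∀ θ ∈ Set.uIcc a' b',
      HasDerivAt (fun t => 2 * ‖f t‖ ^ 2 * Real.cos t / Real.sin t ^ 4)
        (L θ - 2 * R θ - Q θ) θ := by
    intro θ hθ
    exact hasDerivAt_G_aux f θ (hne' θ hθ) (deriv f θ)
      ((hf.differentiable (by simp) θ).hasDerivAt)
  have hDcont : ContinuousOn (fun θ => L θ - 2 * R θ - Q θ) (Set.uIcc a' b') :=
    (hLcont.sub (hRcont.const_smul (2:ℝ))).sub hQcont
  have hFTC : ∫ θ in a'..b', (L θ - 2 * R θ - Q θ)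
      = 2 * ‖f b'‖ ^ 2 * Real.cos b' / Real.sin b' ^ 4
        - 2 * ‖f a'‖ ^ 2 * Real.cos a' / Real.sin a' ^ 4 :=
    intervalIntegral.integral_eq_sub_of_hasDerivAt hderivG hDcont.intervalIntegrable
  have hfa' : f a' = 0 := (hvan a' (fun h => absurd h.1 (not_le.mpr ha'a))).1
  have hfb' : f b' = 0 := (hvan b' (fun h => absurd h.2 (not_le.mpr hbb'))).1
  rw [hfa', hfb'] at hFTC
  simp only [norm_zero] at hFTC
  have hFTC0 : ∫ θ in a'..b', (L θ - 2 * R θ - Q θ) = 0 := by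
    rw [hFTC]; ring
  -- split the integral
  have hLi : IntervalIntegrable L MeasureTheory.volume a' b' := hLcont.intervalIntegrable
  have hRi : IntervalIntegrable R MeasureTheory.volume a' b' := hRcont.intervalIntegrable
  have hQi : IntervalIntegrable Q MeasureTheory.volume a' b' := hQcont.intervalIntegrable
  have hsplit : ∫ θ in a'..b', (L θ - 2 * R θ - Q θ)
      = (∫ θ in a'..b', L θ) - 2 * (∫ θ in a'..b', R θ) - ∫ θ in a'..b', Q θ := by
    rw [intervalIntegral.integral_sub ((hLi).sub ((hRi).const_mul 2)) hQi,
      intervalIntegral.integral_sub hLi ((hRi).const_mul 2),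
      intervalIntegral.integral_const_mul]
  have hQnn : 0 ≤ ∫ θ in a'..b', Q θ := by
    apply intervalIntegral.integral_nonneg ha'b'
    intro u hu
    have hsu : 0 < Real.sin u := hsin u (by rwa [huIcc])
    rw [hQ]
    positivity
  rw [ge_iff_le, hLint, hRint]
  nlinarith [hFTC0, hsplit, hQnn]
end

section
/- For every smooth compactly supported function f : (0, π) → ℂ, the following Poincaré inequality for spin-1 axisymmetric sections holds: ∫₀^π ( |f′(θ) − cot θ·f(θ)|² + cot²θ·|f(θ)|² ) · sin⁻¹θ dθ ≥ ∫₀^π |f(θ)|² · sin⁻¹θ dθ. -/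
open Real

private noncomputable def Lfun (f : ℝ → ℂ) (θ : ℝ) : ℝ :=
  (‖deriv f θ - ((Real.cos θ / Real.sin θ : ℝ) : ℂ) * f θ‖ ^ 2
      + (Real.cos θ / Real.sin θ) ^ 2 * ‖f θ‖ ^ 2) / Real.sin θ

private noncomputable def Rfun (f : ℝ → ℂ) (θ : ℝ) : ℝ := ‖f θ‖ ^ 2 / Real.sin θ

private noncomputable def Nfun (f : ℝ → ℂ) (θ : ℝ) : ℝ :=
  ‖deriv f θ - 2 * ((Real.cos θ / Real.sin θ : ℝ) : ℂ) * f θ‖ ^ 2 / Real.sin θ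

private noncomputable def Wfun (f : ℝ → ℂ) (θ : ℝ) : ℝ :=
  Real.cos θ * ‖f θ‖ ^ 2 / Real.sin θ ^ 2

private lemma key_deriv (f : ℝ → ℂ) (hf : ContDiff ℝ (⊤ : ℕ∞) f) (θ : ℝ) (hs : Real.sin θ ≠ 0) :
    HasDerivAt (Wfun f) (Lfun f θ - Rfun f θ - Nfun f θ) θ := by
  have hfd := (hf.differentiable (by simp) θ).hasDerivAt
  have hp : HasDerivAt (fun t => (f t).re) (deriv f θ).re θ :=
    Complex.reCLM.hasFDerivAt.comp_hasDerivAt θ hfd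
  have hq : HasDerivAt (fun t => (f t).im) (deriv f θ).im θ :=
    Complex.imCLM.hasFDerivAt.comp_hasDerivAt θ hfd
  have hnum : HasDerivAt (fun t => Real.cos t * ((f t).re ^ 2 + (f t).im ^ 2))
      (-Real.sin θ * ((f θ).re ^ 2 + (f θ).im ^ 2)
        + Real.cos θ * (2 * (f θ).re ^ 1 * (deriv f θ).re + 2 * (f θ).im ^ 1 * (deriv f θ).im))
      θ := (Real.hasDerivAt_cos θ).mul ((hp.pow 2).add (hq.pow 2))
  have hden : HasDerivAt (fun t => Real.sin t ^ 2) (2 * Real.sin θ ^ 1 * Real.cos θ) θ :=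
    (Real.hasDerivAt_sin θ).pow 2
  have hW := hnum.div hden (pow_ne_zero 2 hs)
  have heq : Wfun f = fun t => Real.cos t * ((f t).re ^ 2 + (f t).im ^ 2) / Real.sin t ^ 2 := by
    funext t
    unfold Wfun
    rw [Complex.sq_norm, Complex.normSq_apply]
    ring
  rw [heq]
  refine hW.congr_deriv ?_
  symm
  unfold Lfun Rfun Nfun
  simp only [Complex.sq_norm, Complex.normSq_apply, Complex.sub_re,
    Complex.sub_im, Complex.mul_re, Complex.mul_im, Complex.ofReal_re, Complex.ofReal_im,
    Complex.re_ofNat, Complex.im_ofNat]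
  field_simp
  ring

private lemma ev_zero (f : ℝ → ℂ) (hf : ContDiff ℝ (⊤ : ℕ∞) f) (θ : ℝ) (hθ : θ ∉ tsupport f) :
    ∀ᶠ t in nhds θ, f t = 0 ∧ deriv f t = 0 := by
  have hmem : (tsupport f)ᶜ ∈ nhds θ := (isClosed_tsupport f).isOpen_compl.mem_nhds hθ
  have h1 : ∀ᶠ t in nhds θ, f t = 0 := by
    filter_upwards [hmem] with t ht using image_eq_zero_of_notMem_tsupport ht
  have h2 : ∀ᶠ t in nhds θ, ∀ᶠ u in nhds t, f u = 0 := h1.eventually_nhds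
  filter_upwards [h1, h2] with t ht1 ht2
  refine ⟨ht1, ?_⟩
  have : deriv f t = deriv (fun _ => (0 : ℂ)) t := Filter.EventuallyEq.deriv_eq ht2
  simpa using this

private lemma contOn_aux (f : ℝ → ℂ) (hf : ContDiff ℝ (⊤ : ℕ∞) f) (hsub : tsupport f ⊆ Set.Ioo 0 π)
    (g : ℝ → ℝ) (hg1 : ∀ θ, Real.sin θ ≠ 0 → ContinuousAt g θ)
    (hg0 : ∀ θ, f θ = 0 → deriv f θ = 0 → g θ = 0) :
    ContinuousOn g (Set.Icc 0 π) := by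
  intro θ hθ
  by_cases hs : Real.sin θ ≠ 0
  · exact (hg1 θ hs).continuousWithinAt
  · push_neg at hs
    have hnot : θ ∉ tsupport f := by
      intro hmem
      have h1 := hsub hmem
      exact (ne_of_gt (Real.sin_pos_of_pos_of_lt_pi h1.1 h1.2)) hs
    have hev := ev_zero f hf θ hnot
    have hgz : ∀ᶠ t in nhds θ, g t = 0 := by
      filter_upwards [hev] with t ht using hg0 t ht.1 ht.2
    have : ContinuousAt g θ := by
      have hc : ContinuousAt (fun _ : ℝ => (0 : ℝ)) θ := continuousAt_const
      exact hc.congr (Filter.EventuallyEq.symm hgz)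
    exact this.continuousWithinAt

private lemma contAt_all (f : ℝ → ℂ) (hf : ContDiff ℝ (⊤ : ℕ∞) f) (θ : ℝ) (hs : Real.sin θ ≠ 0) :
    ContinuousAt (Lfun f) θ ∧ ContinuousAt (Rfun f) θ ∧ ContinuousAt (Nfun f) θ := by
  have hfc : Continuous f := hf.continuous
  have hdc : Continuous (deriv f) := hf.continuous_deriv (by simp)
  have hcot : ContinuousAt (fun t => Real.cos t / Real.sin t) θ :=
    Real.continuous_cos.continuousAt.div Real.continuous_sin.continuousAt hs
  have hcotC : ContinuousAt (fun t => ((Real.cos t / Real.sin t : ℝ) : ℂ)) θ :=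
    Complex.continuous_ofReal.continuousAt.comp hcot
  have hsin : ContinuousAt Real.sin θ := Real.continuous_sin.continuousAt
  have hR : ContinuousAt (Rfun f) θ := ((hfc.norm.continuousAt.pow 2)).div hsin hs
  refine ⟨?_, hR, ?_⟩
  · exact (((hdc.continuousAt.sub (hcotC.mul hfc.continuousAt)).norm.pow 2).add
      ((hcot.pow 2).mul (hfc.norm.continuousAt.pow 2))).div hsin hs
  · exact ((hdc.continuousAt.sub ((continuousAt_const.mul hcotC).mul
      hfc.continuousAt)).norm.pow 2).div hsin hs

private lemma zero_vals (f : ℝ → ℂ) (θ : ℝ) (h1 : f θ = 0) (h2 : deriv f θ = 0) :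
    Lfun f θ = 0 ∧ Rfun f θ = 0 ∧ Nfun f θ = 0 := by
  unfold Lfun Rfun Nfun
  simp [h1, h2]

/-- Poincaré inequality for axisymmetric sections `β = f·Ψ₋₁` of the spin-1 bundle `L(−1)`
over the round sphere, with constant `1 = ℓ(ℓ+1) − s²` for `ℓ = s = 1`. -/
theorem poincare_spin1
    (f : ℝ → ℂ) (hf : ContDiff ℝ (⊤ : ℕ∞) f)
    (hsupp : HasCompactSupport f) (hsub : tsupport f ⊆ Set.Ioo 0 π) :
    ∫ θ in (0:ℝ)..π,
        (‖deriv f θ - ((Real.cos θ / Real.sin θ : ℝ) : ℂ) * f θ‖ ^ 2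
          + (Real.cos θ / Real.sin θ) ^ 2 * ‖f θ‖ ^ 2) / Real.sin θ
      ≥ ∫ θ in (0:ℝ)..π, ‖f θ‖ ^ 2 / Real.sin θ := by
  have hpi : (0:ℝ) ≤ π := Real.pi_pos.le
  -- continuity on Icc
  have hcL : ContinuousOn (Lfun f) (Set.Icc 0 π) :=
    contOn_aux f hf hsub _ (fun θ hs => (contAt_all f hf θ hs).1)
      (fun θ h1 h2 => (zero_vals f θ h1 h2).1)
  have hcR : ContinuousOn (Rfun f) (Set.Icc 0 π) :=
    contOn_aux f hf hsub _ (fun θ hs => (contAt_all f hf θ hs).2.1)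
      (fun θ h1 h2 => (zero_vals f θ h1 h2).2.1)
  have hcN : ContinuousOn (Nfun f) (Set.Icc 0 π) :=
    contOn_aux f hf hsub _ (fun θ hs => (contAt_all f hf θ hs).2.2)
      (fun θ h1 h2 => (zero_vals f θ h1 h2).2.2)
  have huIcc : Set.uIcc (0:ℝ) π = Set.Icc 0 π := Set.uIcc_of_le hpi
  have hiL : IntervalIntegrable (Lfun f) MeasureTheory.volume 0 π :=
    (huIcc ▸ hcL).intervalIntegrable
  have hiR : IntervalIntegrable (Rfun f) MeasureTheory.volume 0 π :=
    (huIcc ▸ hcR).intervalIntegrable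
  have hiN : IntervalIntegrable (Nfun f) MeasureTheory.volume 0 π :=
    (huIcc ▸ hcN).intervalIntegrable
  -- derivative of W on uIcc
  have hder : ∀ θ ∈ Set.uIcc (0:ℝ) π,
      HasDerivAt (Wfun f) (Lfun f θ - Rfun f θ - Nfun f θ) θ := by
    intro θ hθ
    rw [huIcc] at hθ
    by_cases hs : Real.sin θ ≠ 0
    · exact key_deriv f hf θ hs
    · push_neg at hs
      have hnot : θ ∉ tsupport f := by
        intro hmem
        exact (ne_of_gt (Real.sin_pos_of_pos_of_lt_pi (hsub hmem).1 (hsub hmem).2)) hs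
      have hev := ev_zero f hf θ hnot
      have hf0 : f θ = 0 ∧ deriv f θ = 0 := hev.self_of_nhds
      obtain ⟨z1, z2, z3⟩ := zero_vals f θ hf0.1 hf0.2
      rw [z1, z2, z3]
      have hWz : ∀ᶠ t in nhds θ, Wfun f t = 0 := by
        filter_upwards [hev] with t ht
        unfold Wfun; simp [ht.1]
      have : HasDerivAt (fun _ : ℝ => (0:ℝ)) (0 - 0 - 0) θ := by
        simpa using hasDerivAt_const θ (0:ℝ)
      exact this.congr_of_eventuallyEq hWz
  have hiD : IntervalIntegrable (fun θ => Lfun f θ - Rfun f θ - Nfun f θ)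
      MeasureTheory.volume 0 π := (hiL.sub hiR).sub hiN
  have hFTC := intervalIntegral.integral_eq_sub_of_hasDerivAt hder hiD
  -- endpoints of W vanish
  have hW0 : Wfun f 0 = 0 := by
    have : f 0 = 0 := by
      apply image_eq_zero_of_notMem_tsupport
      intro hmem; exact absurd (hsub hmem).1 (lt_irrefl 0)
    unfold Wfun; simp [this]
  have hWπ : Wfun f π = 0 := by
    have : f π = 0 := by
      apply image_eq_zero_of_notMem_tsupport
      intro hmem; exact absurd (hsub hmem).2 (lt_irrefl π)
    unfold Wfun; simp [this]
  rw [hW0, hWπ, sub_zero] at hFTC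
  have hsplit : ∫ θ in (0:ℝ)..π, (Lfun f θ - Rfun f θ - Nfun f θ)
      = (∫ θ in (0:ℝ)..π, Lfun f θ) - (∫ θ in (0:ℝ)..π, Rfun f θ)
        - ∫ θ in (0:ℝ)..π, Nfun f θ := by
    rw [intervalIntegral.integral_sub (hiL.sub hiR) hiN,
      intervalIntegral.integral_sub hiL hiR]
  have hNpos : (0:ℝ) ≤ ∫ θ in (0:ℝ)..π, Nfun f θ := by
    apply intervalIntegral.integral_nonneg hpi
    intro θ hθ
    unfold Nfun
    exact div_nonneg (sq_nonneg _) (Real.sin_nonneg_of_nonneg_of_le_pi hθ.1 hθ.2)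
  have : (∫ θ in (0:ℝ)..π, Lfun f θ) - (∫ θ in (0:ℝ)..π, Rfun f θ)
      = ∫ θ in (0:ℝ)..π, Nfun f θ := by linarith [hsplit ▸ hFTC]
  show (∫ θ in (0:ℝ)..π, Lfun f θ) ≥ ∫ θ in (0:ℝ)..π, Rfun f θ
  linarith
end

section
/- For every smooth compactly supported function f : (0, π) → ℂ satisfying the orthogonality condition ∫₀^π f(θ)·sin θ dθ = 0 (orthogonality to the lowest spin-1 mode Y₁₁₀), the improved Poincaré inequality holds: ∫₀^π ( |f′(θ) − cot θ·f(θ)|² + cot²θ·|f(θ)|² ) · sin⁻¹θ dθ ≥ 5 · ∫₀^π |f(θ)|² · sin⁻¹θ dθ. -/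
open Real MeasureTheory Filter Topology Set intervalIntegral

private lemma sin_ne_of_mem {x : ℝ} (hx : x ∈ Set.Ioo 0 π) : Real.sin x ≠ 0 :=
  (Real.sin_pos_of_pos_of_lt_pi hx.1 hx.2).ne'

private lemma ev_zero_s4 {u : ℝ → ℝ} (hsub : tsupport u ⊆ Set.Ioo 0 π) {x : ℝ}
    (hx : Real.sin x = 0) : u =ᶠ[𝓝 x] 0 :=
  notMem_tsupport_iff_eventuallyEq.mp (fun h => sin_ne_of_mem (hsub h) hx)

private lemma zero_of_sin_zero {u : ℝ → ℝ} (hsub : tsupport u ⊆ Set.Ioo 0 π) {x : ℝ}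
    (hx : Real.sin x = 0) : u x = 0 :=
  (ev_zero_s4 hsub hx).self_of_nhds

private lemma deriv_ev_zero {u : ℝ → ℝ} (hsub : tsupport u ⊆ Set.Ioo 0 π) {x : ℝ}
    (hx : Real.sin x = 0) : (deriv u) =ᶠ[𝓝 x] 0 := by
  have hx' : x ∉ tsupport u := fun h => sin_ne_of_mem (hsub h) hx
  have hop : IsOpen (tsupport u)ᶜ := (isClosed_tsupport u).isOpen_compl
  filter_upwards [hop.mem_nhds hx'] with y hy
  have : u =ᶠ[𝓝 y] 0 := notMem_tsupport_iff_eventuallyEq.mp hy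
  rw [this.deriv_eq]; exact deriv_const y 0

private lemma contAux {v : ℝ → ℝ} (h1 : ∀ x, Real.sin x ≠ 0 → ContinuousAt v x)
    (h2 : ∀ x, Real.sin x = 0 → v =ᶠ[𝓝 x] 0) : Continuous v := by
  rw [continuous_iff_continuousAt]
  intro x
  by_cases h : Real.sin x = 0
  · exact ContinuousAt.congr continuousAt_const ((h2 x h).symm)
  · exact h1 x h

private lemma quotSin {u : ℝ → ℝ} (hu : ContDiff ℝ (↑(⊤:ℕ∞)) u)
    (hsub : tsupport u ⊆ Set.Ioo 0 π) (n : ℕ) :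
    ContDiff ℝ (↑(⊤:ℕ∞)) (fun θ => u θ / Real.sin θ ^ n) := by
  rw [contDiff_iff_contDiffAt]
  intro x
  by_cases h : Real.sin x = 0
  · refine ContDiffAt.congr_of_eventuallyEq (contDiffAt_const (c := (0:ℝ))) ?_
    filter_upwards [ev_zero_s4 hsub h] with y hy
    simp [hy]
  · exact (hu.contDiffAt).div ((Real.contDiff_sin.pow n).contDiffAt) (pow_ne_zero n h)

private lemma quotSin_supp (u : ℝ → ℝ) (n : ℕ) :
    tsupport (fun θ => u θ / Real.sin θ ^ n) ⊆ tsupport u := by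
  apply closure_mono
  intro x hx
  simp only [Function.mem_support] at hx ⊢
  intro h
  exact hx (by simp [h])

private lemma mul_quotSin {u : ℝ → ℝ} (hsub : tsupport u ⊆ Set.Ioo 0 π) (n : ℕ) (θ : ℝ) :
    u θ = Real.sin θ ^ n * (u θ / Real.sin θ ^ n) := by
  by_cases h : Real.sin θ = 0
  · simp [zero_of_sin_zero hsub h]
  · field_simp

private lemma ae_mem_Ioo : ∀ᵐ x : ℝ, x ∈ Set.Ioc (0:ℝ) π → x ∈ Set.Ioo (0:ℝ) π := by
  have : ∀ᵐ x : ℝ, x ∉ ({π} : Set ℝ) := measure_eq_zero_iff_ae_notMem.mp (measure_singleton π)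
  filter_upwards [this] with x hx hxm
  exact ⟨hxm.1, lt_of_le_of_ne hxm.2 (by simpa using hx)⟩

private lemma real_core (u : ℝ → ℝ) (hu : ContDiff ℝ (↑(⊤:ℕ∞)) u)
    (hsupp : HasCompactSupport u) (hsub : tsupport u ⊆ Set.Ioo 0 π)
    (horth : (∫ θ in (0:ℝ)..π, u θ * Real.sin θ) = 0) :
    IntervalIntegrable (fun θ => ((deriv u θ - (Real.cos θ / Real.sin θ) * u θ) ^ 2
        + (Real.cos θ / Real.sin θ) ^ 2 * (u θ) ^ 2) / Real.sin θ) volume 0 π ∧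
    IntervalIntegrable (fun θ => (u θ) ^ 2 / Real.sin θ) volume 0 π ∧
    (∫ θ in (0:ℝ)..π, ((deriv u θ - (Real.cos θ / Real.sin θ) * u θ) ^ 2
        + (Real.cos θ / Real.sin θ) ^ 2 * (u θ) ^ 2) / Real.sin θ)
      ≥ 5 * ∫ θ in (0:ℝ)..π, (u θ) ^ 2 / Real.sin θ := by
  -- basic facts about u
  have huC : Continuous u := hu.continuous
  have hud : Differentiable ℝ u := hu.differentiable (by simp)
  have hu'C : Continuous (deriv u) := (contDiff_infty_iff_deriv.mp hu).2.continuous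
  -- the function g = u / sin²
  set g : ℝ → ℝ := fun θ => u θ / Real.sin θ ^ 2 with hgdef
  have hgC : ContDiff ℝ (↑(⊤:ℕ∞)) g := quotSin hu hsub 2
  have hgsub : tsupport g ⊆ Set.Ioo 0 π := (quotSin_supp u 2).trans hsub
  have hgd : Differentiable ℝ g := hgC.differentiable (by simp)
  have hgc : Continuous g := hgC.continuous
  have hg'C : Continuous (deriv g) := (contDiff_infty_iff_deriv.mp hgC).2.continuous
  have hueq : ∀ θ, u θ = Real.sin θ ^ 2 * g θ := mul_quotSin hsub 2
  have hu' : ∀ θ, HasDerivAt u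
      (2 * Real.sin θ * Real.cos θ * g θ + Real.sin θ ^ 2 * deriv g θ) θ := by
    intro θ
    have h1 := ((Real.hasDerivAt_sin θ).fun_pow 2).fun_mul (hgd θ).hasDerivAt
    rw [show u = fun θ => Real.sin θ ^ 2 * g θ from funext hueq]
    exact h1.congr_deriv (by push_cast; ring)
  have hderivu : ∀ θ, deriv u θ
      = 2 * Real.sin θ * Real.cos θ * g θ + Real.sin θ ^ 2 * deriv g θ :=
    fun θ => (hu' θ).deriv
  -- the function K
  set K : ℝ → ℝ := fun θ => -∫ t in (0:ℝ)..θ, Real.sin t * u t with hKdef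
  have hsu : Continuous fun t => Real.sin t * u t := Real.continuous_sin.mul huC
  have hKd : ∀ θ, HasDerivAt K (-(Real.sin θ * u θ)) θ := by
    intro θ
    exact (intervalIntegral.integral_hasDerivAt_right (hsu.intervalIntegrable 0 θ)
      (hsu.stronglyMeasurableAtFilter _ _) hsu.continuousAt).neg
  have hKC : ContDiff ℝ (↑(⊤:ℕ∞)) K := by
    rw [contDiff_infty_iff_deriv]
    refine ⟨fun θ => (hKd θ).differentiableAt, ?_⟩
    have : deriv K = fun θ => -(Real.sin θ * u θ) := funext fun θ => (hKd θ).deriv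
    rw [this]
    exact (Real.contDiff_sin.mul hu).neg
  have horth' : (∫ t in (0:ℝ)..π, Real.sin t * u t) = 0 := by
    have h := intervalIntegral.integral_congr (a := (0:ℝ)) (b := π) (μ := volume)
      (f := fun t => Real.sin t * u t) (g := fun t => u t * Real.sin t)
      (fun t _ => mul_comm _ _)
    rw [h, horth]
  have hab : ∃ a b : ℝ, 0 < a ∧ b < π ∧ ∀ t, t < a ∨ b < t → u t = 0 := by
    rcases Set.eq_empty_or_nonempty (tsupport u) with he | hne
    · exact ⟨π/2, π/2, by positivity, by linarith [pi_pos],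
        fun t _ => image_eq_zero_of_notMem_tsupport (by simp [he])⟩
    · refine ⟨sInf (tsupport u), sSup (tsupport u), (hsub (hsupp.sInf_mem hne)).1,
        (hsub (hsupp.sSup_mem hne)).2, ?_⟩
      intro t ht
      apply image_eq_zero_of_notMem_tsupport
      intro hmem
      rcases ht with h | h
      · exact absurd (csInf_le hsupp.bddBelow hmem) (not_le.mpr h)
      · exact absurd (le_csSup hsupp.bddAbove hmem) (not_le.mpr h)
  obtain ⟨a, b, ha, hb, hz⟩ := hab
  have hKlt : ∀ θ, θ < a → K θ = 0 := by
    intro θ hθ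
    have h1 : (∫ t in (0:ℝ)..θ, Real.sin t * u t) = 0 := by
      rw [intervalIntegral.integral_congr (g := fun _ => (0:ℝ))]
      · simp
      · intro t ht
        rw [Set.mem_uIcc] at ht
        have : t < a := by rcases ht with h | h <;> [linarith [h.2]; linarith [h.2, ha]]
        simp [hz t (Or.inl this)]
    simp [hKdef, h1]
  have hKgt : ∀ θ, b < θ → K θ = 0 := by
    intro θ hθ
    have h2 : (∫ t in π..θ, Real.sin t * u t) = 0 := by
      rw [intervalIntegral.integral_congr (g := fun _ => (0:ℝ))]
      · simp
      · intro t ht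
        rw [Set.mem_uIcc] at ht
        have : b < t := by rcases ht with h | h <;> [linarith [h.1, hb]; linarith [h.1]]
        simp [hz t (Or.inr this)]
    have h3 := intervalIntegral.integral_add_adjacent_intervals (μ := volume)
      (hsu.intervalIntegrable (μ := volume) 0 π) (hsu.intervalIntegrable π θ)
    simp only [hKdef]
    rw [← h3, horth', h2]
    simp
  have hKsubIcc : tsupport K ⊆ Set.Icc a b := by
    apply closure_minimal ?_ isClosed_Icc
    intro x hx
    simp only [Function.mem_support] at hx
    by_contra hc
    rw [Set.mem_Icc, not_and_or, not_le, not_le] at hc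
    rcases hc with h | h
    · exact hx (hKlt x h)
    · exact hx (hKgt x h)
  have hKsub : tsupport K ⊆ Set.Ioo 0 π := fun x hx => by
    have h := hKsubIcc hx
    exact ⟨lt_of_lt_of_le ha h.1, lt_of_le_of_lt h.2 hb⟩
  have hK0 : K 0 = 0 := hKlt 0 ha
  have hKpi : K π = 0 := hKgt π hb
  -- m = K / sin⁴
  set m : ℝ → ℝ := fun θ => K θ / Real.sin θ ^ 4 with hmdef
  have hmC : ContDiff ℝ (↑(⊤:ℕ∞)) m := quotSin hKC hKsub 4
  have hmd : Differentiable ℝ m := hmC.differentiable (by simp)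
  have hmc : Continuous m := hmC.continuous
  have hm'C : Continuous (deriv m) := (contDiff_infty_iff_deriv.mp hmC).2.continuous
  have hKeq : ∀ θ, K θ = Real.sin θ ^ 4 * m θ := mul_quotSin hKsub 4
  have hK' : ∀ θ, HasDerivAt K
      (4 * Real.sin θ ^ 3 * Real.cos θ * m θ + Real.sin θ ^ 4 * deriv m θ) θ := by
    intro θ
    have h1 := ((Real.hasDerivAt_sin θ).fun_pow 4).fun_mul (hmd θ).hasDerivAt
    rw [show K = fun θ => Real.sin θ ^ 4 * m θ from funext hKeq]
    exact h1.congr_deriv (by push_cast; ring)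
  have hKder : ∀ θ, Real.sin θ * u θ
      = -(4 * Real.sin θ ^ 3 * Real.cos θ * m θ + Real.sin θ ^ 4 * deriv m θ) := by
    intro θ
    have h1 := (hKd θ).deriv
    have h2 := (hK' θ).deriv
    rw [h1] at h2
    linarith
  -- continuity facts
  have cA : Continuous fun θ => Real.sin θ ^ 3 * (deriv g θ) ^ 2 :=
    (Real.continuous_sin.pow 3).mul (hg'C.pow 2)
  have cB : Continuous fun θ => Real.sin θ ^ 3 * (g θ) ^ 2 :=
    (Real.continuous_sin.pow 3).mul (hgc.pow 2)
  have cC : Continuous fun θ => Real.sin θ ^ 5 * (m θ) ^ 2 :=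
    (Real.continuous_sin.pow 5).mul (hmc.pow 2)
  have cS : Continuous fun θ => Real.sin θ ^ 5 * (deriv m θ) ^ 2 :=
    (Real.continuous_sin.pow 5).mul (hm'C.pow 2)
  have cKg : Continuous fun θ => K θ * deriv g θ := hKC.continuous.mul hg'C
  have II : ∀ {F : ℝ → ℝ}, Continuous F → IntervalIntegrable F volume 0 π :=
    fun hF => hF.intervalIntegrable 0 π
  -- the four integrals
  set A := ∫ θ in (0:ℝ)..π, Real.sin θ ^ 3 * (deriv g θ) ^ 2 with hAdef
  set B := ∫ θ in (0:ℝ)..π, Real.sin θ ^ 3 * (g θ) ^ 2 with hBdef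
  set C := ∫ θ in (0:ℝ)..π, Real.sin θ ^ 5 * (m θ) ^ 2 with hCdef
  set S := ∫ θ in (0:ℝ)..π, Real.sin θ ^ 5 * (deriv m θ) ^ 2 with hSdef
  have sin_nn : ∀ x ∈ Set.Icc (0:ℝ) π, 0 ≤ Real.sin x :=
    fun x hx => Real.sin_nonneg_of_nonneg_of_le_pi hx.1 hx.2
  have hA0 : 0 ≤ A := intervalIntegral.integral_nonneg pi_pos.le
    (fun x hx => mul_nonneg (pow_nonneg (sin_nn x hx) 3) (sq_nonneg _))
  have hB0 : 0 ≤ B := intervalIntegral.integral_nonneg pi_pos.le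
    (fun x hx => mul_nonneg (pow_nonneg (sin_nn x hx) 3) (sq_nonneg _))
  have hS0 : 0 ≤ S := intervalIntegral.integral_nonneg pi_pos.le
    (fun x hx => mul_nonneg (pow_nonneg (sin_nn x hx) 5) (sq_nonneg _))
  have hC0 : 0 ≤ C := intervalIntegral.integral_nonneg pi_pos.le
    (fun x hx => mul_nonneg (pow_nonneg (sin_nn x hx) 5) (sq_nonneg _))
  -- integration by parts helper
  have ibp : ∀ (F F' : ℝ → ℝ), (∀ θ, HasDerivAt F (F' θ) θ) → Continuous F' →
      F 0 = 0 → F π = 0 → (∫ θ in (0:ℝ)..π, F' θ) = 0 := by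
    intro F F' hF hF' h0 hπ
    rw [intervalIntegral.integral_eq_sub_of_hasDerivAt (fun x _ => hF x)
      (hF'.intervalIntegrable (μ := volume) 0 π), h0, hπ]
    simp
  -- a.e.-congruence helper
  have congr_ae : ∀ (F G : ℝ → ℝ), (∀ x ∈ Set.Ioo (0:ℝ) π, F x = G x) →
      (∫ θ in (0:ℝ)..π, F θ) = ∫ θ in (0:ℝ)..π, G θ := by
    intro F G h
    apply intervalIntegral.integral_congr_ae
    filter_upwards [ae_mem_Ioo] with x hx hmem
    exact h x (hx (by rwa [Set.uIoc_of_le pi_pos.le] at hmem))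
  -- step 1 : the LHS equals A + B
  have hP : ∀ θ, HasDerivAt (fun t => Real.sin t ^ 2 * Real.cos t * (g t) ^ 2)
      (2 * Real.sin θ * Real.cos θ ^ 2 * (g θ) ^ 2 - Real.sin θ ^ 3 * (g θ) ^ 2
        + 2 * Real.sin θ ^ 2 * Real.cos θ * (g θ * deriv g θ)) θ := by
    intro θ
    have h1 := (((Real.hasDerivAt_sin θ).fun_pow 2).fun_mul (Real.hasDerivAt_cos θ)).fun_mul
      ((hgd θ).hasDerivAt.fun_pow 2)
    exact h1.congr_deriv (by push_cast; ring)
  have cP' : Continuous fun θ => 2 * Real.sin θ * Real.cos θ ^ 2 * (g θ) ^ 2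
      - Real.sin θ ^ 3 * (g θ) ^ 2
      + 2 * Real.sin θ ^ 2 * Real.cos θ * (g θ * deriv g θ) := by
    fun_prop
  have eLHS : (∫ θ in (0:ℝ)..π, ((deriv u θ - (Real.cos θ / Real.sin θ) * u θ) ^ 2
      + (Real.cos θ / Real.sin θ) ^ 2 * (u θ) ^ 2) / Real.sin θ) = A + B := by
    have h1 : (∫ θ in (0:ℝ)..π, ((deriv u θ - (Real.cos θ / Real.sin θ) * u θ) ^ 2
        + (Real.cos θ / Real.sin θ) ^ 2 * (u θ) ^ 2) / Real.sin θ)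
        = ∫ θ in (0:ℝ)..π, (Real.sin θ ^ 3 * (deriv g θ) ^ 2 + Real.sin θ ^ 3 * (g θ) ^ 2
          + (2 * Real.sin θ * Real.cos θ ^ 2 * (g θ) ^ 2 - Real.sin θ ^ 3 * (g θ) ^ 2
            + 2 * Real.sin θ ^ 2 * Real.cos θ * (g θ * deriv g θ))) := by
      apply congr_ae
      intro x hx
      have hs := sin_ne_of_mem hx
      rw [hderivu x, hueq x]
      field_simp
      ring
    rw [h1, intervalIntegral.integral_add (II (cA.fun_add cB)) (II cP'),
      intervalIntegral.integral_add (II cA) (II cB),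
      ibp _ _ hP cP' (by simp) (by simp [Real.sin_pi]), ← hAdef, ← hBdef]
    ring
  -- step 2 : the RHS equals B
  have eRHS : (∫ θ in (0:ℝ)..π, (u θ) ^ 2 / Real.sin θ) = B := by
    rw [hBdef]
    apply congr_ae
    intro x hx
    have hs := sin_ne_of_mem hx
    rw [hueq x]
    field_simp
  -- step 3 : B = ∫ K g'
  have hKgd : ∀ θ, HasDerivAt (fun t => K t * g t)
      (-(Real.sin θ * u θ) * g θ + K θ * deriv g θ) θ :=
    fun θ => (hKd θ).mul (hgd θ).hasDerivAt
  have eB1 : B = ∫ θ in (0:ℝ)..π, K θ * deriv g θ := by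
    have h1 : (∫ θ in (0:ℝ)..π, Real.sin θ ^ 3 * (g θ) ^ 2)
        = ∫ θ in (0:ℝ)..π, (K θ * deriv g θ
            - (-(Real.sin θ * u θ) * g θ + K θ * deriv g θ)) := by
      apply intervalIntegral.integral_congr
      intro x _
      simp only
      rw [hueq x]
      ring
    have h3 : (∫ θ in (0:ℝ)..π, (-(Real.sin θ * u θ) * g θ + K θ * deriv g θ)) = 0 := by
      rw [intervalIntegral.integral_eq_sub_of_hasDerivAt (fun x _ => hKgd x)
        (II (((Real.continuous_sin.mul huC).neg.mul hgc).add cKg)), hKpi, hK0]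
      simp
    rw [hBdef, h1, intervalIntegral.integral_sub (II cKg)
      (II (((Real.continuous_sin.fun_mul huC).fun_neg.fun_mul hgc).fun_add cKg)), h3, sub_zero]
  -- step 4 : B = S + 4 C  (spectral identity for the dual problem)
  have hR : ∀ θ, HasDerivAt (fun t => 4 * (Real.sin t ^ 4 * Real.cos t) * (m t) ^ 2)
      ((16 * Real.sin θ ^ 3 * Real.cos θ ^ 2 - 4 * Real.sin θ ^ 5) * (m θ) ^ 2
        + 8 * Real.sin θ ^ 4 * Real.cos θ * (m θ * deriv m θ)) θ := by
    intro θ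
    have h1 := ((hasDerivAt_const θ (4:ℝ)).fun_mul
      (((Real.hasDerivAt_sin θ).fun_pow 4).fun_mul (Real.hasDerivAt_cos θ))).fun_mul
      ((hmd θ).hasDerivAt.fun_pow 2)
    exact h1.congr_deriv (by push_cast; ring)
  have cR' : Continuous fun θ => (16 * Real.sin θ ^ 3 * Real.cos θ ^ 2
      - 4 * Real.sin θ ^ 5) * (m θ) ^ 2
      + 8 * Real.sin θ ^ 4 * Real.cos θ * (m θ * deriv m θ) := by fun_prop
  have eB2 : B = S + 4 * C := by
    have h1 : (∫ θ in (0:ℝ)..π, Real.sin θ ^ 3 * (g θ) ^ 2)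
        = ∫ θ in (0:ℝ)..π, (Real.sin θ ^ 5 * (deriv m θ) ^ 2
            + 4 * (Real.sin θ ^ 5 * (m θ) ^ 2)
            + ((16 * Real.sin θ ^ 3 * Real.cos θ ^ 2 - 4 * Real.sin θ ^ 5) * (m θ) ^ 2
              + 8 * Real.sin θ ^ 4 * Real.cos θ * (m θ * deriv m θ))) := by
      apply congr_ae
      intro x hx
      have hs := sin_ne_of_mem hx
      have hd : Real.sin x ^ 3 * g x
          = -(4 * Real.sin x ^ 3 * Real.cos x * m x + Real.sin x ^ 4 * deriv m x) := by
        have h := hKder x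
        rw [hueq x] at h
        linear_combination h
      refine mul_left_cancel₀ (pow_ne_zero 3 hs) ?_
      calc Real.sin x ^ 3 * (Real.sin x ^ 3 * g x ^ 2) = (Real.sin x ^ 3 * g x) ^ 2 := by ring
        _ = (-(4 * Real.sin x ^ 3 * Real.cos x * m x + Real.sin x ^ 4 * deriv m x)) ^ 2 := by
            rw [hd]
        _ = _ := by ring
    have h2 : (∫ θ in (0:ℝ)..π, 4 * (Real.sin θ ^ 5 * (m θ) ^ 2)) = 4 * C := by
      rw [hCdef]
      exact intervalIntegral.integral_const_mul 4 _
    rw [hBdef, h1, intervalIntegral.integral_add (II (cS.fun_add (continuous_const.fun_mul cC))) (II cR'),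
      intervalIntegral.integral_add (II cS) (II (continuous_const.fun_mul cC)),
      ibp _ _ hR cR' (by simp) (by simp [Real.sin_pi]), h2, ← hSdef]
    ring
  -- step 5 : Cauchy–Schwarz : B² ≤ A C
  have hBAC : B ^ 2 ≤ A * C := by
    have hCS : ∀ t : ℝ, 0 ≤ A * (t * t) + (-(2 * B)) * t + C := by
      intro t
      have h0 : 0 ≤ ∫ θ in (0:ℝ)..π,
          (K θ - t * Real.sin θ ^ 3 * deriv g θ) ^ 2 / Real.sin θ ^ 3 :=
        intervalIntegral.integral_nonneg pi_pos.le
          (fun x hx => div_nonneg (sq_nonneg _) (pow_nonneg (sin_nn x hx) 3))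
      have h1 : (∫ θ in (0:ℝ)..π,
          (K θ - t * Real.sin θ ^ 3 * deriv g θ) ^ 2 / Real.sin θ ^ 3)
          = ∫ θ in (0:ℝ)..π, (Real.sin θ ^ 5 * (m θ) ^ 2
              - (2 * t) * (K θ * deriv g θ)
              + (t * t) * (Real.sin θ ^ 3 * (deriv g θ) ^ 2)) := by
        apply congr_ae
        intro x hx
        have hs := sin_ne_of_mem hx
        rw [hKeq x]
        field_simp
        ring
      have h2 : (∫ θ in (0:ℝ)..π, ((2 * t) * (K θ * deriv g θ)))
          = (2 * t) * ∫ θ in (0:ℝ)..π, K θ * deriv g θ :=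
        intervalIntegral.integral_const_mul _ _
      have h3 : (∫ θ in (0:ℝ)..π, ((t * t) * (Real.sin θ ^ 3 * (deriv g θ) ^ 2)))
          = (t * t) * A := by
        rw [hAdef]
        exact intervalIntegral.integral_const_mul _ _
      rw [h1, intervalIntegral.integral_add (II (cC.fun_sub (continuous_const.fun_mul cKg)))
        (II (continuous_const.fun_mul cA)),
        intervalIntegral.integral_sub (II cC) (II (continuous_const.fun_mul cKg)),
        h2, h3, ← hCdef, ← eB1] at h0
      linarith
    have hdisc := discrim_le_zero hCS
    rw [discrim] at hdisc
    nlinarith [hdisc]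
  -- final assembly
  have hC4 : 4 * C ≤ B := by rw [eB2]; linarith
  have hA4B : 4 * B ≤ A := by
    rcases eq_or_lt_of_le hB0 with h | h
    · linarith
    · have h4 : 4 * B * B ≤ A * B := by
        nlinarith [mul_le_mul_of_nonneg_left hC4 hA0, hBAC]
      exact le_of_mul_le_mul_right h4 h
  have intRHS : IntervalIntegrable (fun θ => (u θ) ^ 2 / Real.sin θ) volume 0 π := by
    apply II
    apply contAux
    · intro x hx
      exact ((huC.pow 2).continuousAt).div Real.continuous_sin.continuousAt hx
    · intro x hx
      filter_upwards [ev_zero_s4 hsub hx] with y hy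
      simp [hy]
  have intLHS : IntervalIntegrable (fun θ => ((deriv u θ - (Real.cos θ / Real.sin θ) * u θ) ^ 2
      + (Real.cos θ / Real.sin θ) ^ 2 * (u θ) ^ 2) / Real.sin θ) volume 0 π := by
    apply II
    apply contAux
    · intro x hx
      have hcot : ContinuousAt (fun θ => Real.cos θ / Real.sin θ) x :=
        Real.continuous_cos.continuousAt.div Real.continuous_sin.continuousAt hx
      exact (((hu'C.continuousAt.sub (hcot.mul huC.continuousAt)).pow 2).add
        ((hcot.pow 2).mul (huC.continuousAt.pow 2))).div Real.continuous_sin.continuousAt hx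
    · intro x hx
      filter_upwards [ev_zero_s4 hsub hx, deriv_ev_zero hsub hx] with y h1 h2
      simp [h1, h2]
  exact ⟨intLHS, intRHS, by rw [eLHS, eRHS]; linarith⟩

/-- Improved Poincaré inequality for axisymmetric sections `β = f·Ψ₋₁` of the spin-1 bundle
`L(−1)` orthogonal to the lowest spin-1 mode `Y₁₁₀`, with constant `5 = ℓ(ℓ+1) − s²` for
`ℓ = 2, s = 1`. -/
theorem poincare_spin1_improved
    (f : ℝ → ℂ) (hf : ContDiff ℝ (⊤ : ℕ∞) f)
    (hsupp : HasCompactSupport f) (hsub : tsupport f ⊆ Set.Ioo 0 π)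
    (horth : (∫ θ in (0:ℝ)..π, f θ * ((Real.sin θ : ℝ) : ℂ)) = 0) :
    ∫ θ in (0:ℝ)..π,
        (‖deriv f θ - ((Real.cos θ / Real.sin θ : ℝ) : ℂ) * f θ‖ ^ 2
          + (Real.cos θ / Real.sin θ) ^ 2 * ‖f θ‖ ^ 2) / Real.sin θ
      ≥ 5 * ∫ θ in (0:ℝ)..π, ‖f θ‖ ^ 2 / Real.sin θ := by
  have hf' : ContDiff ℝ (↑(⊤:ℕ∞)) f := hf.of_le (by simp)
  have hfd : Differentiable ℝ f := hf'.differentiable (by simp)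
  -- real and imaginary parts
  have hss₁ : Function.support (fun θ => (f θ).re) ⊆ Function.support f := by
    intro x hx
    simp only [Function.mem_support] at hx ⊢
    intro h; exact hx (by rw [h, Complex.zero_re])
  have hss₂ : Function.support (fun θ => (f θ).im) ⊆ Function.support f := by
    intro x hx
    simp only [Function.mem_support] at hx ⊢
    intro h; exact hx (by rw [h, Complex.zero_im])
  have hC₁ : ContDiff ℝ (↑(⊤:ℕ∞)) (fun θ => (f θ).re) := Complex.reCLM.contDiff.comp hf'
  have hC₂ : ContDiff ℝ (↑(⊤:ℕ∞)) (fun θ => (f θ).im) := Complex.imCLM.contDiff.comp hf'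
  have hcs₁ : HasCompactSupport (fun θ => (f θ).re) := hsupp.mono hss₁
  have hcs₂ : HasCompactSupport (fun θ => (f θ).im) := hsupp.mono hss₂
  have hsub₁ : tsupport (fun θ => (f θ).re) ⊆ Set.Ioo 0 π :=
    (closure_mono hss₁).trans hsub
  have hsub₂ : tsupport (fun θ => (f θ).im) ⊆ Set.Ioo 0 π :=
    (closure_mono hss₂).trans hsub
  -- derivatives of the real and imaginary parts
  have hd₁ : ∀ θ, deriv (fun θ => (f θ).re) θ = (deriv f θ).re := by
    intro θ
    have h := Complex.reCLM.hasFDerivAt.comp_hasDerivAt θ (hfd θ).hasDerivAt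
    simpa [Function.comp_def] using h.deriv
  have hd₂ : ∀ θ, deriv (fun θ => (f θ).im) θ = (deriv f θ).im := by
    intro θ
    have h := Complex.imCLM.hasFDerivAt.comp_hasDerivAt θ (hfd θ).hasDerivAt
    simpa [Function.comp_def] using h.deriv
  -- orthogonality for both parts
  have hiInt : IntervalIntegrable (fun θ => f θ * ((Real.sin θ : ℝ) : ℂ)) volume 0 π :=
    (hf'.continuous.mul (Complex.continuous_ofReal.comp Real.continuous_sin)).intervalIntegrable
      0 π
  have horth₁ : (∫ θ in (0:ℝ)..π, (f θ).re * Real.sin θ) = 0 := by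
    have h := Complex.reCLM.intervalIntegral_comp_comm hiInt
    rw [horth, map_zero] at h
    have h2 : (∫ θ in (0:ℝ)..π, (f θ).re * Real.sin θ)
        = ∫ x in (0:ℝ)..π, Complex.reCLM (f x * ((Real.sin x : ℝ) : ℂ)) := by
      apply intervalIntegral.integral_congr
      intro x _
      simp only [Complex.reCLM_apply, Complex.mul_re, Complex.ofReal_re, Complex.ofReal_im]
      ring
    rw [h2, h]
  have horth₂ : (∫ θ in (0:ℝ)..π, (f θ).im * Real.sin θ) = 0 := by
    have h := Complex.imCLM.intervalIntegral_comp_comm hiInt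
    rw [horth, map_zero] at h
    have h2 : (∫ θ in (0:ℝ)..π, (f θ).im * Real.sin θ)
        = ∫ x in (0:ℝ)..π, Complex.imCLM (f x * ((Real.sin x : ℝ) : ℂ)) := by
      apply intervalIntegral.integral_congr
      intro x _
      simp only [Complex.imCLM_apply, Complex.mul_im, Complex.ofReal_re, Complex.ofReal_im]
      ring
    rw [h2, h]
  obtain ⟨iL₁, iR₁, h₁⟩ := real_core (fun θ => (f θ).re) hC₁ hcs₁ hsub₁ horth₁
  obtain ⟨iL₂, iR₂, h₂⟩ := real_core (fun θ => (f θ).im) hC₂ hcs₂ hsub₂ horth₂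
  have normsq : ∀ z : ℂ, ‖z‖ ^ 2 = z.re ^ 2 + z.im ^ 2 := by
    intro z
    rw [Complex.sq_norm, Complex.normSq_apply]
    ring
  -- split the left-hand side
  have eL : (∫ θ in (0:ℝ)..π,
        (‖deriv f θ - ((Real.cos θ / Real.sin θ : ℝ) : ℂ) * f θ‖ ^ 2
          + (Real.cos θ / Real.sin θ) ^ 2 * ‖f θ‖ ^ 2) / Real.sin θ)
      = (∫ θ in (0:ℝ)..π,
          ((deriv (fun θ => (f θ).re) θ - (Real.cos θ / Real.sin θ) * (f θ).re) ^ 2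
            + (Real.cos θ / Real.sin θ) ^ 2 * ((f θ).re) ^ 2) / Real.sin θ)
        + ∫ θ in (0:ℝ)..π,
          ((deriv (fun θ => (f θ).im) θ - (Real.cos θ / Real.sin θ) * (f θ).im) ^ 2
            + (Real.cos θ / Real.sin θ) ^ 2 * ((f θ).im) ^ 2) / Real.sin θ := by
    rw [← intervalIntegral.integral_add iL₁ iL₂]
    apply intervalIntegral.integral_congr
    intro x _
    simp only
    have hre : (deriv f x - ((Real.cos x / Real.sin x : ℝ) : ℂ) * f x).re
        = deriv (fun θ => (f θ).re) x - (Real.cos x / Real.sin x) * (f x).re := by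
      rw [hd₁ x]
      simp only [Complex.sub_re, Complex.mul_re, Complex.ofReal_re, Complex.ofReal_im]
      ring
    have him : (deriv f x - ((Real.cos x / Real.sin x : ℝ) : ℂ) * f x).im
        = deriv (fun θ => (f θ).im) x - (Real.cos x / Real.sin x) * (f x).im := by
      rw [hd₂ x]
      simp only [Complex.sub_im, Complex.mul_im, Complex.ofReal_re, Complex.ofReal_im]
      ring
    rw [normsq, normsq, hre, him, ← add_div]
    congr 1
    ring
  -- split the right-hand side
  have eR : (∫ θ in (0:ℝ)..π, ‖f θ‖ ^ 2 / Real.sin θ)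
      = (∫ θ in (0:ℝ)..π, ((f θ).re) ^ 2 / Real.sin θ)
        + ∫ θ in (0:ℝ)..π, ((f θ).im) ^ 2 / Real.sin θ := by
    rw [← intervalIntegral.integral_add iR₁ iR₂]
    apply intervalIntegral.integral_congr
    intro x _
    simp only
    rw [normsq, ← add_div]
  rw [eL, eR]
  linarith
end

section
/- Let b be a smooth complex-valued function on U = ℝ × (2M, ∞) × (0, π) solving the Regge–Wheeler equation for b: −(r²/Δ)·∂²_t b + (Δ/r²)·∂²_r b + ((2r−2M)/r²)·∂_r b + (1/r²)·(∂²_θ b − cot θ·∂_θ b + b) = (1/r²)·(1 − 8M/r)·b. Assume that for every compact interval I ⊂ ℝ there is a compact set K ⊂ (2M, ∞) × (0, π) such that b(t, ·, ·) is supported in K for all t ∈ I. Then the T-energy E(t) = ∫_{2M}^∞ ∫₀^π [ (r⁴/Δ)·|∂_t b|² + Δ·|∂_r b|² + |∂_θ b|² − |b|² + (1 − 8M/r)·|b|² ] · sin⁻¹θ dθ dr is independent of t. -/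
open Real

noncomputable section

namespace RWAux

open Set MeasureTheory Metric Complex

abbrev V := ℝ × ℝ × ℝ

def Fn (b : ℝ → ℝ → ℝ → ℂ) : V → ℂ := fun p => b p.1 p.2.1 p.2.2
def gd (b : ℝ → ℝ → ℝ → ℂ) (v : V) : V → ℂ := fun p => fderiv ℝ (Fn b) p v
def ggd (b : ℝ → ℝ → ℝ → ℂ) (v w : V) : V → ℂ := fun p => fderiv ℝ (gd b v) p w

def e1 : V := (1,0,0)
def e2 : V := (0,1,0)
def e3 : V := (0,0,1)

def Dom (M : ℝ) : Set V := (Set.univ : Set ℝ) ×ˢ Set.Ioi (2*M) ×ˢ Set.Ioo 0 π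

lemma isOpen_Dom (M : ℝ) : IsOpen (Dom M) := isOpen_univ.prod (isOpen_Ioi.prod isOpen_Ioo)

local notation "cj" => starRingEnd ℂ

variable {b : ℝ → ℝ → ℝ → ℂ} {M : ℝ}

/-! ### Slice derivatives -/

lemma slice1 {f : V → ℂ} {t r θ : ℝ} (hf : DifferentiableAt ℝ f (t,r,θ)) :
    HasDerivAt (fun s => f (s,r,θ)) (fderiv ℝ f (t,r,θ) e1) t := by
  have h1 : HasDerivAt (fun s : ℝ => ((s,r,θ) : V)) e1 t :=
    (hasDerivAt_id t).prodMk ((hasDerivAt_const t r).prodMk (hasDerivAt_const t θ))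
  exact (hf.hasFDerivAt.comp_hasDerivAt t h1)

lemma slice2 {f : V → ℂ} {t r θ : ℝ} (hf : DifferentiableAt ℝ f (t,r,θ)) :
    HasDerivAt (fun s => f (t,s,θ)) (fderiv ℝ f (t,r,θ) e2) r := by
  have h1 : HasDerivAt (fun s : ℝ => ((t,s,θ) : V)) e2 r :=
    (hasDerivAt_const r t).prodMk ((hasDerivAt_id r).prodMk (hasDerivAt_const r θ))
  exact (hf.hasFDerivAt.comp_hasDerivAt r h1)

lemma slice3 {f : V → ℂ} {t r θ : ℝ} (hf : DifferentiableAt ℝ f (t,r,θ)) :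
    HasDerivAt (fun s => f (t,r,s)) (fderiv ℝ f (t,r,θ) e3) θ := by
  have h1 : HasDerivAt (fun s : ℝ => ((t,r,s) : V)) e3 θ :=
    (hasDerivAt_const θ t).prodMk ((hasDerivAt_const θ r).prodMk (hasDerivAt_id θ))
  exact (hf.hasFDerivAt.comp_hasDerivAt θ h1)

lemma mem_Dom {t r θ : ℝ} (hr : r ∈ Set.Ioi (2*M)) (hθ : θ ∈ Set.Ioo 0 π) :
    ((t,r,θ) : V) ∈ Dom M := ⟨Set.mem_univ _, hr, hθ⟩

/-! ### Smoothness consequences -/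

section smooth
variable (ha : ContDiffOn ℝ (⊤ : ℕ∞) (Fn b) (Dom M))
include ha

lemma g_smooth (v : V) : ContDiffOn ℝ (⊤ : ℕ∞) (gd b v) (Dom M) := by
  have h1 : ContDiffOn ℝ (⊤ : ℕ∞) (fderiv ℝ (Fn b)) (Dom M) :=
    ha.fderiv_of_isOpen (isOpen_Dom M) (by simp)
  exact (ContinuousLinearMap.apply ℝ ℂ v).contDiff.comp_contDiffOn h1

lemma F_diffAt {p : V} (hp : p ∈ Dom M) : DifferentiableAt ℝ (Fn b) p :=
  ((ha.differentiableOn (by simp)).differentiableAt ((isOpen_Dom M).mem_nhds hp))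

lemma g_diffAt (v : V) {p : V} (hp : p ∈ Dom M) : DifferentiableAt ℝ (gd b v) p :=
  (((g_smooth ha v).differentiableOn (by simp)).differentiableAt ((isOpen_Dom M).mem_nhds hp))

lemma F_contOn : ContinuousOn (Fn b) (Dom M) := ha.continuousOn

lemma g_contOn (v : V) : ContinuousOn (gd b v) (Dom M) := (g_smooth ha v).continuousOn

lemma gg_contOn (v w : V) : ContinuousOn (ggd b v w) (Dom M) := by
  have h1 : ContinuousOn (fderiv ℝ (gd b v)) (Dom M) :=
    (((g_smooth ha v).fderiv_of_isOpen (m := (⊤ : ℕ∞)) (isOpen_Dom M) (by simp))).continuousOn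
  exact (ContinuousLinearMap.apply ℝ ℂ w).continuous.comp_continuousOn h1

lemma gg_symm {p : V} (hp : p ∈ Dom M) (v w : V) : ggd b v w p = ggd b w v p := by
  have hsym : IsSymmSndFDerivAt ℝ (Fn b) p :=
    (ha.contDiffAt ((isOpen_Dom M).mem_nhds hp)).isSymmSndFDerivAt (by rw [minSmoothness_of_isRCLikeNormedField]; exact WithTop.coe_le_coe.mpr (le_top : (2 : ℕ∞) ≤ ⊤))
  have hd : DifferentiableAt ℝ (fderiv ℝ (Fn b)) p :=
    (((ha.fderiv_of_isOpen (m := (⊤ : ℕ∞)) (isOpen_Dom M) (by simp)).differentiableOn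
      (by simp)).differentiableAt ((isOpen_Dom M).mem_nhds hp))
  have key : ∀ u : V, fderiv ℝ (gd b u) p =
      ((ContinuousLinearMap.apply ℝ ℂ u).comp (fderiv ℝ (fderiv ℝ (Fn b)) p)) := by
    intro u
    exact ((ContinuousLinearMap.apply ℝ ℂ u).hasFDerivAt.comp p hd.hasFDerivAt).fderiv
  show fderiv ℝ (gd b v) p w = fderiv ℝ (gd b w) p v
  rw [key v, key w]
  exact hsym.eq w v

lemma slice1g (v : V) {t r θ : ℝ} (h : ((t,r,θ):V) ∈ Dom M) :
    HasDerivAt (fun s => gd b v (s,r,θ)) (ggd b v e1 (t,r,θ)) t :=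
  slice1 (g_diffAt ha v h)

lemma slice2g (v : V) {t r θ : ℝ} (h : ((t,r,θ):V) ∈ Dom M) :
    HasDerivAt (fun s => gd b v (t,s,θ)) (ggd b v e2 (t,r,θ)) r :=
  slice2 (g_diffAt ha v h)

lemma slice3g (v : V) {t r θ : ℝ} (h : ((t,r,θ):V) ∈ Dom M) :
    HasDerivAt (fun s => gd b v (t,r,s)) (ggd b v e3 (t,r,θ)) θ :=
  slice3 (g_diffAt ha v h)

lemma slice1F {t r θ : ℝ} (h : ((t,r,θ):V) ∈ Dom M) :
    HasDerivAt (fun s => Fn b (s,r,θ)) (gd b e1 (t,r,θ)) t :=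
  slice1 (F_diffAt ha h)

variable {t r θ : ℝ} (hr : r ∈ Set.Ioi (2*M)) (hθ : θ ∈ Set.Ioo 0 π)
include hr hθ

lemma pt_eq : pt b t r θ = gd b e1 (t,r,θ) := (slice1 (F_diffAt ha (mem_Dom hr hθ))).deriv

lemma pr_eq : pr b t r θ = gd b e2 (t,r,θ) := (slice2 (F_diffAt ha (mem_Dom hr hθ))).deriv

lemma pθ_eq : pθ b t r θ = gd b e3 (t,r,θ) := (slice3 (F_diffAt ha (mem_Dom hr hθ))).deriv

lemma ptpt_eq : pt (pt b) t r θ = ggd b e1 e1 (t,r,θ) := by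
  have h : (fun s => pt b s r θ) = fun s => gd b e1 (s,r,θ) :=
    funext fun s => pt_eq ha hr hθ
  show deriv (fun s => pt b s r θ) t = _
  rw [h]
  exact (slice1 (g_diffAt ha e1 (mem_Dom hr hθ))).deriv

lemma prpr_eq : pr (pr b) t r θ = ggd b e2 e2 (t,r,θ) := by
  have h : (fun s => pr b t s θ) =ᶠ[nhds r] fun s => gd b e2 (t,s,θ) := by
    filter_upwards [Ioi_mem_nhds hr] with s hs
    exact pr_eq ha hs hθ
  show deriv (fun s => pr b t s θ) r = _
  rw [h.deriv_eq]
  exact (slice2 (g_diffAt ha e2 (mem_Dom hr hθ))).deriv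

lemma pθpθ_eq : pθ (pθ b) t r θ = ggd b e3 e3 (t,r,θ) := by
  have h : (fun s => pθ b t r s) =ᶠ[nhds θ] fun s => gd b e3 (t,r,s) := by
    filter_upwards [Ioo_mem_nhds hθ.1 hθ.2] with s hs
    exact pθ_eq ha hr hs
  show deriv (fun s => pθ b t r s) θ = _
  rw [h.deriv_eq]
  exact (slice3 (g_diffAt ha e3 (mem_Dom hr hθ))).deriv

end smooth

/-! ### Complex calculus helpers -/

lemma hasDerivAt_conj {f : ℝ → ℂ} {d : ℂ} {x : ℝ} (h : HasDerivAt f d x) :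
    HasDerivAt (fun s => (starRingEnd ℂ) (f s)) ((starRingEnd ℂ) d) x := by
  have := Complex.conjCLE.toContinuousLinearMap.hasFDerivAt (x := f x)
  exact this.comp_hasDerivAt x h

lemma hasDerivAt_re {f : ℝ → ℂ} {d : ℂ} {x : ℝ} (h : HasDerivAt f d x) :
    HasDerivAt (fun s => (f s).re) d.re x :=
  (Complex.reCLM.hasFDerivAt (x := f x)).comp_hasDerivAt x h

lemma hasDerivAt_re_conj_mul {f₁ f₂ : ℝ → ℂ} {d₁ d₂ : ℂ} {x : ℝ}
    (h₁ : HasDerivAt f₁ d₁ x) (h₂ : HasDerivAt f₂ d₂ x) :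
    HasDerivAt (fun s => ((starRingEnd ℂ) (f₁ s) * f₂ s).re)
      ((starRingEnd ℂ) d₁ * f₂ x + (starRingEnd ℂ) (f₁ x) * d₂).re x :=
  hasDerivAt_re ((hasDerivAt_conj h₁).mul h₂)

lemma normSq_eq (z : ℂ) : ‖z‖^2 = ((starRingEnd ℂ) z * z).re := by
  rw [Complex.conj_mul']
  simp [← Complex.ofReal_pow]

lemma hasDerivAt_norm_sq {f : ℝ → ℂ} {d : ℂ} {x : ℝ} (h : HasDerivAt f d x) :
    HasDerivAt (fun s => ‖f s‖^2)
      ((starRingEnd ℂ) d * f x + (starRingEnd ℂ) (f x) * d).re x := by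
  have := hasDerivAt_re_conj_mul h h
  simpa only [← normSq_eq] using this

/-! ### Densities -/

def Dens (M : ℝ) (b : ℝ → ℝ → ℝ → ℂ) : V → ℝ := fun p =>
  (p.2.1^4/(p.2.1^2 - 2*M*p.2.1) * ‖gd b e1 p‖^2 + (p.2.1^2 - 2*M*p.2.1) * ‖gd b e2 p‖^2
    + ‖gd b e3 p‖^2 - 8*M/p.2.1 * ‖Fn b p‖^2) / Real.sin p.2.2

def DT (M : ℝ) (b : ℝ → ℝ → ℝ → ℂ) : V → ℝ := fun p =>
  (p.2.1^4/(p.2.1^2 - 2*M*p.2.1) * (cj (ggd b e1 e1 p) * gd b e1 p + cj (gd b e1 p) * ggd b e1 e1 p).re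
    + (p.2.1^2 - 2*M*p.2.1) * (cj (ggd b e2 e1 p) * gd b e2 p + cj (gd b e2 p) * ggd b e2 e1 p).re
    + (cj (ggd b e3 e1 p) * gd b e3 p + cj (gd b e3 p) * ggd b e3 e1 p).re
    - 8*M/p.2.1 * (cj (gd b e1 p) * Fn b p + cj (Fn b p) * gd b e1 p).re) / Real.sin p.2.2

def Gd (M : ℝ) (b : ℝ → ℝ → ℝ → ℂ) : V → ℝ := fun p =>
  (p.2.1^2 - 2*M*p.2.1) * (cj (gd b e1 p) * gd b e2 p + cj (gd b e2 p) * gd b e1 p).re / Real.sin p.2.2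

def GR (M : ℝ) (b : ℝ → ℝ → ℝ → ℂ) : V → ℝ := fun p =>
  ((2*p.2.1 - 2*M) * (cj (gd b e1 p) * gd b e2 p + cj (gd b e2 p) * gd b e1 p).re
    + (p.2.1^2 - 2*M*p.2.1) * ((cj (ggd b e1 e2 p) * gd b e2 p + cj (gd b e1 p) * ggd b e2 e2 p).re
        + (cj (ggd b e2 e2 p) * gd b e1 p + cj (gd b e2 p) * ggd b e1 e2 p).re)) / Real.sin p.2.2

def Hd (b : ℝ → ℝ → ℝ → ℂ) : V → ℝ := fun p =>
  (cj (gd b e1 p) * gd b e3 p + cj (gd b e3 p) * gd b e1 p).re / Real.sin p.2.2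

def HT (b : ℝ → ℝ → ℝ → ℂ) : V → ℝ := fun p =>
  (((cj (ggd b e1 e3 p) * gd b e3 p + cj (gd b e1 p) * ggd b e3 e3 p).re
      + (cj (ggd b e3 e3 p) * gd b e1 p + cj (gd b e3 p) * ggd b e1 e3 p).re) * Real.sin p.2.2
    - (cj (gd b e1 p) * gd b e3 p + cj (gd b e3 p) * gd b e1 p).re * Real.cos p.2.2) / (Real.sin p.2.2)^2

/-! ### Pointwise derivative identities -/

section deriv
variable (ha : ContDiffOn ℝ (⊤ : ℕ∞) (Fn b) (Dom M))
include ha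

lemma L_Dt {t r θ : ℝ} (h : ((t,r,θ):V) ∈ Dom M) :
    HasDerivAt (fun s => Dens M b (s,r,θ)) (DT M b (t,r,θ)) t := by
  have h1 := hasDerivAt_norm_sq (slice1g ha e1 h)
  have h2 := hasDerivAt_norm_sq (slice1g ha e2 h)
  have h3 := hasDerivAt_norm_sq (slice1g ha e3 h)
  have hF := hasDerivAt_norm_sq (slice1F ha h)
  exact ((((h1.const_mul (r^4/(r^2 - 2*M*r))).add (h2.const_mul (r^2 - 2*M*r))).add h3).sub
    (hF.const_mul (8*M/r))).div_const (Real.sin θ)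

lemma L_Gr {t r θ : ℝ} (h : ((t,r,θ):V) ∈ Dom M) :
    HasDerivAt (fun s => Gd M b (t,s,θ)) (GR M b (t,r,θ)) r := by
  have hX : HasDerivAt (fun s => (cj (gd b e1 (t,s,θ)) * gd b e2 (t,s,θ)
      + cj (gd b e2 (t,s,θ)) * gd b e1 (t,s,θ)).re)
      ((cj (ggd b e1 e2 (t,r,θ)) * gd b e2 (t,r,θ) + cj (gd b e1 (t,r,θ)) * ggd b e2 e2 (t,r,θ)).re
        + (cj (ggd b e2 e2 (t,r,θ)) * gd b e1 (t,r,θ) + cj (gd b e2 (t,r,θ)) * ggd b e1 e2 (t,r,θ)).re) r := by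
    have := (hasDerivAt_re_conj_mul (slice2g ha e1 h) (slice2g ha e2 h)).add
      (hasDerivAt_re_conj_mul (slice2g ha e2 h) (slice2g ha e1 h))
    simpa only [Complex.add_re, Pi.add_def] using this
  have hpoly : HasDerivAt (fun s : ℝ => s^2 - 2*M*s) (2*r - 2*M) r := by
    have := (hasDerivAt_pow 2 r).sub ((hasDerivAt_id r).const_mul (2*M))
    exact this.congr_deriv (by norm_num)
  exact (hpoly.mul hX).div_const (Real.sin θ)

lemma L_Ht {t r θ : ℝ} (h : ((t,r,θ):V) ∈ Dom M) (hsθ : Real.sin θ ≠ 0) :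
    HasDerivAt (fun s => Hd b (t,r,s)) (HT b (t,r,θ)) θ := by
  have hN : HasDerivAt (fun s => (cj (gd b e1 (t,r,s)) * gd b e3 (t,r,s)
      + cj (gd b e3 (t,r,s)) * gd b e1 (t,r,s)).re)
      ((cj (ggd b e1 e3 (t,r,θ)) * gd b e3 (t,r,θ) + cj (gd b e1 (t,r,θ)) * ggd b e3 e3 (t,r,θ)).re
        + (cj (ggd b e3 e3 (t,r,θ)) * gd b e1 (t,r,θ) + cj (gd b e3 (t,r,θ)) * ggd b e1 e3 (t,r,θ)).re) θ := by
    have := (hasDerivAt_re_conj_mul (slice3g ha e1 h) (slice3g ha e3 h)).add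
      (hasDerivAt_re_conj_mul (slice3g ha e3 h) (slice3g ha e1 h))
    simpa only [Complex.add_re, Pi.add_def] using this
  exact hN.div (Real.hasDerivAt_sin θ) hsθ

end deriv

/-! ### The core algebraic identity -/

lemma core_id (M r θ : ℝ) (hM : 0 < M) (hr : 2*M < r) (hθ : θ ∈ Set.Ioo 0 π)
    (A B C f A1 A2 A3 B2 C3 : ℂ)
    (heq : -((r^2/(r^2 - 2*M*r) : ℝ):ℂ) * A1 + (((r^2 - 2*M*r)/r^2 : ℝ):ℂ) * B2
      + (((2*r - 2*M)/r^2 : ℝ):ℂ) * B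
      + ((1/r^2 : ℝ):ℂ) * (C3 - ((Real.cos θ/Real.sin θ : ℝ):ℂ) * C + f)
      = ((1/r^2*(1 - 8*M/r) : ℝ):ℂ) * f) :
    (r^4/(r^2 - 2*M*r) * (cj A1 * A + cj A * A1).re
      + (r^2 - 2*M*r) * (cj A2 * B + cj B * A2).re
      + (cj A3 * C + cj C * A3).re
      - 8*M/r * (cj A * f + cj f * A).re) / Real.sin θ
    = ((2*r - 2*M) * (cj A * B + cj B * A).re
        + (r^2 - 2*M*r) * ((cj A2 * B + cj A * B2).re + (cj B2 * A + cj B * A2).re)) / Real.sin θ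
      + ((((cj A3 * C + cj A * C3).re + (cj C3 * A + cj C * A3).re) * Real.sin θ
          - (cj A * C + cj C * A).re * Real.cos θ) / (Real.sin θ)^2) := by
  have hr0 : (0:ℝ) < r := lt_trans (by linarith) hr
  have hrn : r ≠ 0 := ne_of_gt hr0
  have hΔ : (0:ℝ) < r^2 - 2*M*r := by nlinarith
  have hΔn : r^2 - 2*M*r ≠ 0 := ne_of_gt hΔ
  have hs : Real.sin θ ≠ 0 := ne_of_gt (Real.sin_pos_of_pos_of_lt_pi hθ.1 hθ.2)
  have hrnC : (r:ℂ) ≠ 0 := by exact_mod_cast hrn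
  have hΔnC : ((r:ℂ)^2 - 2*(M:ℂ)*(r:ℂ)) ≠ 0 := by
    have h0 : (((r^2 - 2*M*r : ℝ)):ℂ) ≠ 0 := by exact_mod_cast hΔn
    convert h0 using 1; push_cast; ring
  have hsC : Complex.sin (θ:ℂ) ≠ 0 := by
    rw [← Complex.ofReal_sin]; exact_mod_cast hs
  have hkey : ((r:ℂ))^5 * Complex.sin (θ:ℂ) * A1
      = Complex.sin (θ:ℂ) * ((r:ℂ)*(((r:ℂ)^2 - 2*M*r)*((r:ℂ)^2 - 2*M*r))) * B2
        + Complex.sin (θ:ℂ) * ((r:ℂ)*((r:ℂ)^2 - 2*M*r)*(2*(r:ℂ) - 2*M)) * B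
        + Complex.sin (θ:ℂ) * ((r:ℂ)*((r:ℂ)^2 - 2*M*r)) * C3
        - (r:ℂ)*((r:ℂ)^2 - 2*M*r)*Complex.cos (θ:ℂ) * C
        + 8*(M:ℂ)*((r:ℂ)^2 - 2*M*r)*Complex.sin (θ:ℂ) * f := by
    push_cast at heq
    linear_combination (norm := skip) (-(r:ℂ)^3*((r:ℂ)^2-2*M*r)*Complex.sin θ) * heq
    have hr2C : (r:ℂ) - 2*M ≠ 0 := by
      have h0 : ((r - 2*M : ℝ):ℂ) ≠ 0 := by exact_mod_cast (by linarith : r - 2*M ≠ 0)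
      push_cast at h0; exact h0
    have hr2C' : (r:ℂ) - M*2 ≠ 0 := by rw [mul_comm]; exact hr2C
    field_simp
    ring
  have hre := congrArg Complex.re hkey
  have him := congrArg Complex.im hkey
  simp only [Complex.add_re, Complex.sub_re, Complex.mul_re, Complex.mul_im,
    Complex.add_im, Complex.sub_im, Complex.ofReal_re, Complex.ofReal_im,
    Complex.sin_ofReal_re, Complex.sin_ofReal_im, Complex.cos_ofReal_re, Complex.cos_ofReal_im,
    ← Complex.ofReal_pow, Complex.re_ofNat, Complex.im_ofNat,
    mul_zero, zero_mul, sub_zero, zero_sub, add_zero, zero_add, neg_zero, neg_neg] at hre him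
  have hA1re : A1.re = (Real.sin θ * (r*(r^2 - 2*M*r)^2) * B2.re
      + Real.sin θ * (r*(r^2 - 2*M*r)*(2*r - 2*M)) * B.re
      + Real.sin θ * (r*(r^2 - 2*M*r)) * C3.re
      - r*(r^2 - 2*M*r)*Real.cos θ * C.re
      + 8*M*(r^2 - 2*M*r)*Real.sin θ * f.re) / (r^5 * Real.sin θ) := by
    rw [eq_div_iff (mul_ne_zero (pow_ne_zero 5 hrn) hs)]
    linear_combination hre
  have hA1im : A1.im = (Real.sin θ * (r*(r^2 - 2*M*r)^2) * B2.im
      + Real.sin θ * (r*(r^2 - 2*M*r)*(2*r - 2*M)) * B.im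
      + Real.sin θ * (r*(r^2 - 2*M*r)) * C3.im
      - r*(r^2 - 2*M*r)*Real.cos θ * C.im
      + 8*M*(r^2 - 2*M*r)*Real.sin θ * f.im) / (r^5 * Real.sin θ) := by
    rw [eq_div_iff (mul_ne_zero (pow_ne_zero 5 hrn) hs)]
    linear_combination him
  simp only [Complex.add_re, Complex.mul_re, Complex.conj_re, Complex.conj_im,
    neg_mul, sub_neg_eq_add]
  rw [hA1re, hA1im]
  have hr2 : r - 2*M ≠ 0 := (by linarith : 0 < r - 2*M).ne'
  have hr2' : r - M*2 ≠ 0 := by rw [mul_comm]; exact hr2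
  field_simp
  ring

/-! ### generic integration lemmas -/

lemma integrableOn_of_box {f : ℝ → ℝ} {S : Set ℝ} {a c : ℝ}
    (hS : MeasurableSet S) (hcont : ContinuousOn f S) (hsub : Icc a c ⊆ S)
    (hvan : ∀ x ∈ S, x ∉ Icc a c → f x = 0) : IntegrableOn f S := by
  have hInt : IntegrableOn f (Icc a c) := (hcont.mono hsub).integrableOn_compact isCompact_Icc
  have hind : Integrable ((Icc a c).indicator f) (volume.restrict S) := by
    rw [integrable_indicator_iff measurableSet_Icc]
    rw [IntegrableOn, Measure.restrict_restrict measurableSet_Icc,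
      Set.inter_eq_self_of_subset_left hsub]
    exact hInt
  refine hind.congr ?_
  filter_upwards [ae_restrict_mem hS] with x hx
  by_cases hxm : x ∈ Icc a c
  · simp [Set.indicator_of_mem hxm]
  · simp [Set.indicator_of_notMem hxm, hvan x hx hxm]

lemma setIntegral_eq_box {f : ℝ → ℝ} {S : Set ℝ} {a c : ℝ} {B : Set ℝ}
    (hS : MeasurableSet S) (hsub : Icc a c ⊆ S) (hBsub : Icc a c ⊆ B) (hBS : B ⊆ S)
    (hB : MeasurableSet B)
    (hvan : ∀ x ∈ S, x ∉ Icc a c → f x = 0) :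
    ∫ x in S, f x = ∫ x in B, f x := by
  have h1 : ∀ x ∈ S, f x = (Icc a c).indicator f x := by
    intro x hx
    by_cases hxm : x ∈ Icc a c
    · simp [Set.indicator_of_mem hxm]
    · simp [Set.indicator_of_notMem hxm, hvan x hx hxm]
  rw [setIntegral_congr_fun hS h1, setIntegral_congr_fun hB
    (fun x hx => h1 x (hBS hx)), setIntegral_indicator measurableSet_Icc,
    setIntegral_indicator measurableSet_Icc,
    Set.inter_eq_self_of_subset_right hsub, Set.inter_eq_self_of_subset_right hBsub]

lemma integral_deriv_eq_zero {S : Set ℝ} (hS : MeasurableSet S) {f f' : ℝ → ℝ} {a c u v : ℝ}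
    (hu : u < a) (hac : a ≤ c) (hcv : c < v) (huv : Icc u v ⊆ S)
    (hd : ∀ x ∈ S, HasDerivAt f (f' x) x)
    (hcont : ContinuousOn f' S)
    (hvan : ∀ x ∈ S, x ∉ Icc a c → f x = 0)
    (hvan' : ∀ x ∈ S, x ∉ Icc a c → f' x = 0) :
    ∫ x in S, f' x = 0 := by
  have huv' : u ≤ v := by linarith
  have hIccsub : Icc a c ⊆ S := (Icc_subset_Icc hu.le hcv.le).trans huv
  have h1 : ∫ x in S, f' x = ∫ x in Icc u v, f' x :=
    setIntegral_eq_box hS hIccsub (Icc_subset_Icc hu.le hcv.le) huv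
      measurableSet_Icc hvan'
  rw [h1, MeasureTheory.integral_Icc_eq_integral_Ioc,
    ← intervalIntegral.integral_of_le huv']
  have hftc := intervalIntegral.integral_eq_sub_of_hasDerivAt
    (f := f) (f' := f') (a := u) (b := v)
    (fun x hx => hd x (huv ((uIcc_of_le huv' ▸ hx))))
    ((hcont.mono ((uIcc_of_le huv' ▸ huv))).intervalIntegrable)
  rw [hftc, hvan v (huv (right_mem_Icc.2 huv')) (by simp [Icc]; intro h; linarith),
    hvan u (huv (left_mem_Icc.2 huv')) (by simp [Icc]; intro h; linarith)]
  ring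

lemma hasDerivAt_param_integral {φ ψ : ℝ → ℝ → ℝ} {S : Set ℝ} {a c x₀ ε C : ℝ}
    (hS : MeasurableSet S) (hε : 0 < ε)
    (hmeas : ∀ x ∈ ball x₀ ε, AEStronglyMeasurable (φ x) (volume.restrict S))
    (hψmeas : AEStronglyMeasurable (ψ x₀) (volume.restrict S))
    (hint : IntegrableOn (φ x₀) S)
    (hbound : ∀ x ∈ ball x₀ ε, ∀ y ∈ S, |ψ x y| ≤ (Icc a c).indicator (fun _ => C) y)
    (hdiff : ∀ y ∈ S, ∀ x ∈ ball x₀ ε, HasDerivAt (fun z => φ z y) (ψ x y) x) :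
    HasDerivAt (fun x => ∫ y in S, φ x y) (∫ y in S, ψ x₀ y) x₀ := by
  have hbi : Integrable ((Icc a c).indicator (fun _ => C)) (volume.restrict S) := by
    rw [integrable_indicator_iff measurableSet_Icc]
    exact integrableOn_const (ne_of_lt (by
      rw [Measure.restrict_apply measurableSet_Icc]
      exact lt_of_le_of_lt (measure_mono Set.inter_subset_left)
        (by simp [Real.volume_Icc])))
  have := hasDerivAt_integral_of_dominated_loc_of_deriv_le (hs := Metric.ball_mem_nhds x₀ hε)
    (bound := (Icc a c).indicator (fun _ => C))
    (F := φ) (F' := ψ) (μ := volume.restrict S) (x₀ := x₀)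
    (Filter.eventually_of_mem (Metric.ball_mem_nhds x₀ hε) hmeas)
    hint hψmeas
    (by filter_upwards [ae_restrict_mem hS] with y hy
        exact fun x hx => (Real.norm_eq_abs _ ▸ hbound x hx y hy))
    hbi
    (by filter_upwards [ae_restrict_mem hS] with y hy
        exact fun x hx => hdiff y hy x hx)
  exact this.2

lemma continuousOn_param_integral {φ : ℝ → ℝ → ℝ} {S T : Set ℝ} {a c C : ℝ}
    (hS : MeasurableSet S) (hT : IsOpen T)
    (hmeas : ∀ x ∈ T, AEStronglyMeasurable (φ x) (volume.restrict S))
    (hbound : ∀ x ∈ T, ∀ y ∈ S, |φ x y| ≤ (Icc a c).indicator (fun _ => C) y)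
    (hcont : ∀ y ∈ S, ContinuousOn (fun x => φ x y) T) :
    ContinuousOn (fun x => ∫ y in S, φ x y) T := by
  have hbi : Integrable ((Icc a c).indicator (fun _ => C)) (volume.restrict S) := by
    rw [integrable_indicator_iff measurableSet_Icc]
    exact integrableOn_const (ne_of_lt (by
      rw [Measure.restrict_apply measurableSet_Icc]
      exact lt_of_le_of_lt (measure_mono Set.inter_subset_left)
        (by simp [Real.volume_Icc])))
  intro x₀ hx₀
  refine (MeasureTheory.continuousAt_of_dominated ?_ ?_ hbi ?_).continuousWithinAt
  · exact Filter.eventually_of_mem (hT.mem_nhds hx₀) hmeas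
  · filter_upwards [hT.mem_nhds hx₀] with x hx
    filter_upwards [ae_restrict_mem hS] with y hy
    exact (Real.norm_eq_abs _ ▸ hbound x hx y hy)
  · filter_upwards [ae_restrict_mem hS] with y hy
    exact ((hcont y hy).continuousAt (hT.mem_nhds hx₀))

/-! ### Continuity of the densities -/

lemma domFacts (hM : 0 < M) {p : V} (hp : p ∈ Dom M) :
    p.2.1 ≠ 0 ∧ p.2.1^2 - 2*M*p.2.1 ≠ 0 ∧ Real.sin p.2.2 ≠ 0 := by
  obtain ⟨-, hr, hθ⟩ := hp
  have hr' : 2*M < p.2.1 := hr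
  have h0 : (0:ℝ) < p.2.1 := lt_trans (by linarith) hr'
  exact ⟨ne_of_gt h0, ne_of_gt (by nlinarith),
    ne_of_gt (Real.sin_pos_of_pos_of_lt_pi hθ.1 hθ.2)⟩

section cont
variable (hM : 0 < M) (ha : ContDiffOn ℝ (⊤ : ℕ∞) (Fn b) (Dom M))

lemma cont_r : Continuous (fun p : V => p.2.1) := continuous_fst.comp continuous_snd
lemma cont_θ : Continuous (fun p : V => p.2.2) := continuous_snd.comp continuous_snd

lemma cont_re2 {f1 f2 f3 f4 : V → ℂ} (h1 : ContinuousOn f1 (Dom M)) (h2 : ContinuousOn f2 (Dom M))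
    (h3 : ContinuousOn f3 (Dom M)) (h4 : ContinuousOn f4 (Dom M)) :
    ContinuousOn (fun p => (cj (f1 p) * f2 p + cj (f3 p) * f4 p).re) (Dom M) :=
  Complex.continuous_re.comp_continuousOn
    (((continuous_star.comp_continuousOn h1).mul h2).add
      ((continuous_star.comp_continuousOn h3).mul h4))

lemma cont_normsq {f : V → ℂ} (hf : ContinuousOn f (Dom M)) :
    ContinuousOn (fun p => ‖f p‖^2) (Dom M) := (hf.norm).pow 2

include hM ha

lemma cont_Dens : ContinuousOn (Dens M b) (Dom M) := by
  refine ContinuousOn.div ?_ (Real.continuous_sin.comp cont_θ).continuousOn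
    (fun p hp => (domFacts hM hp).2.2)
  exact ((((ContinuousOn.div ((cont_r.pow 4).continuousOn)
      (((cont_r.pow 2).sub (continuous_const.mul cont_r)).continuousOn)
      (fun p hp => (domFacts hM hp).2.1)).mul (cont_normsq (g_contOn ha e1))).add
      (ContinuousOn.mul (((cont_r.pow 2).sub (continuous_const.mul cont_r)).continuousOn)
        (cont_normsq (g_contOn ha e2)))).add
      (cont_normsq (g_contOn ha e3))).sub
      (ContinuousOn.mul (ContinuousOn.div continuous_const.continuousOn
        cont_r.continuousOn (fun p hp => (domFacts hM hp).1)) (cont_normsq (F_contOn ha)))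

lemma cont_DT : ContinuousOn (DT M b) (Dom M) := by
  refine ContinuousOn.div ?_ (Real.continuous_sin.comp cont_θ).continuousOn
    (fun p hp => (domFacts hM hp).2.2)
  exact ((((ContinuousOn.div ((cont_r.pow 4).continuousOn)
      (((cont_r.pow 2).sub (continuous_const.mul cont_r)).continuousOn)
      (fun p hp => (domFacts hM hp).2.1)).mul
        (cont_re2 (gg_contOn ha e1 e1) (g_contOn ha e1) (g_contOn ha e1) (gg_contOn ha e1 e1))).add
      (ContinuousOn.mul (((cont_r.pow 2).sub (continuous_const.mul cont_r)).continuousOn)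
        (cont_re2 (gg_contOn ha e2 e1) (g_contOn ha e2) (g_contOn ha e2) (gg_contOn ha e2 e1)))).add
      (cont_re2 (gg_contOn ha e3 e1) (g_contOn ha e3) (g_contOn ha e3) (gg_contOn ha e3 e1))).sub
      (ContinuousOn.mul (ContinuousOn.div continuous_const.continuousOn
        cont_r.continuousOn (fun p hp => (domFacts hM hp).1))
        (cont_re2 (g_contOn ha e1) (F_contOn ha) (F_contOn ha) (g_contOn ha e1)))

lemma cont_Gd : ContinuousOn (Gd M b) (Dom M) := by
  refine ContinuousOn.div ?_ (Real.continuous_sin.comp cont_θ).continuousOn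
    (fun p hp => (domFacts hM hp).2.2)
  exact ContinuousOn.mul (((cont_r.pow 2).sub (continuous_const.mul cont_r)).continuousOn)
    (cont_re2 (g_contOn ha e1) (g_contOn ha e2) (g_contOn ha e2) (g_contOn ha e1))

lemma cont_GR : ContinuousOn (GR M b) (Dom M) := by
  refine ContinuousOn.div ?_ (Real.continuous_sin.comp cont_θ).continuousOn
    (fun p hp => (domFacts hM hp).2.2)
  refine ContinuousOn.add
    (ContinuousOn.mul (((continuous_const.mul cont_r).sub continuous_const).continuousOn)
      (cont_re2 (g_contOn ha e1) (g_contOn ha e2) (g_contOn ha e2) (g_contOn ha e1)))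
    (ContinuousOn.mul (((cont_r.pow 2).sub (continuous_const.mul cont_r)).continuousOn) ?_)
  exact (cont_re2 (gg_contOn ha e1 e2) (g_contOn ha e2) (g_contOn ha e1) (gg_contOn ha e2 e2)).add
    (cont_re2 (gg_contOn ha e2 e2) (g_contOn ha e1) (g_contOn ha e2) (gg_contOn ha e1 e2))

lemma cont_Hd : ContinuousOn (Hd b) (Dom M) := by
  refine ContinuousOn.div (cont_re2 (g_contOn ha e1) (g_contOn ha e3) (g_contOn ha e3) (g_contOn ha e1))
    (Real.continuous_sin.comp cont_θ).continuousOn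
    (fun p hp => (domFacts hM hp).2.2)

lemma cont_HT : ContinuousOn (HT b) (Dom M) := by
  refine ContinuousOn.div ?_ ((Real.continuous_sin.comp cont_θ).pow 2).continuousOn
    (fun p hp => pow_ne_zero 2 (domFacts hM hp).2.2)
  refine ContinuousOn.sub
    (ContinuousOn.mul
      ((cont_re2 (gg_contOn ha e1 e3) (g_contOn ha e3) (g_contOn ha e1) (gg_contOn ha e3 e3)).add
        (cont_re2 (gg_contOn ha e3 e3) (g_contOn ha e1) (g_contOn ha e3) (gg_contOn ha e1 e3)))
      (Real.continuous_sin.comp cont_θ).continuousOn)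
    (ContinuousOn.mul (cont_re2 (g_contOn ha e1) (g_contOn ha e3) (g_contOn ha e3) (g_contOn ha e1))
      (Real.continuous_cos.comp cont_θ).continuousOn)

end cont

/-! ### The main divergence identity -/

lemma L_main (hM : 0 < M) (ha : ContDiffOn ℝ (⊤ : ℕ∞) (Fn b) (Dom M))
    (hRW : ∀ t r θ : ℝ, r ∈ Set.Ioi (2 * M) → θ ∈ Set.Ioo 0 π →
      -((r ^ 2 / (r ^ 2 - 2 * M * r) : ℝ) : ℂ) * pt (pt b) t r θ
        + (((r ^ 2 - 2 * M * r) / r ^ 2 : ℝ) : ℂ) * pr (pr b) t r θ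
        + (((2 * r - 2 * M) / r ^ 2 : ℝ) : ℂ) * pr b t r θ
        + ((1 / r ^ 2 : ℝ) : ℂ) *
            (pθ (pθ b) t r θ
              - ((Real.cos θ / Real.sin θ : ℝ) : ℂ) * pθ b t r θ
              + b t r θ)
        = ((1 / r ^ 2 * (1 - 8 * M / r) : ℝ) : ℂ) * b t r θ)
    {t r θ : ℝ} (hr : r ∈ Set.Ioi (2*M)) (hθ : θ ∈ Set.Ioo 0 π) :
    DT M b (t,r,θ) = GR M b (t,r,θ) + HT b (t,r,θ) := by
  have hp : ((t,r,θ):V) ∈ Dom M := mem_Dom hr hθ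
  have heq := hRW t r θ hr hθ
  rw [ptpt_eq ha hr hθ, prpr_eq ha hr hθ, pr_eq ha hr hθ, pθpθ_eq ha hr hθ,
    pθ_eq ha hr hθ] at heq
  have h12 : ggd b e2 e1 (t,r,θ) = ggd b e1 e2 (t,r,θ) := gg_symm ha hp e2 e1
  have h13 : ggd b e3 e1 (t,r,θ) = ggd b e1 e3 (t,r,θ) := gg_symm ha hp e3 e1
  have hb : b t r θ = Fn b (t,r,θ) := rfl
  rw [hb] at heq
  show (r^4/(r^2 - 2*M*r) * (cj (ggd b e1 e1 (t,r,θ)) * gd b e1 (t,r,θ) + cj (gd b e1 (t,r,θ)) * ggd b e1 e1 (t,r,θ)).re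
    + (r^2 - 2*M*r) * (cj (ggd b e2 e1 (t,r,θ)) * gd b e2 (t,r,θ) + cj (gd b e2 (t,r,θ)) * ggd b e2 e1 (t,r,θ)).re
    + (cj (ggd b e3 e1 (t,r,θ)) * gd b e3 (t,r,θ) + cj (gd b e3 (t,r,θ)) * ggd b e3 e1 (t,r,θ)).re
    - 8*M/r * (cj (gd b e1 (t,r,θ)) * Fn b (t,r,θ) + cj (Fn b (t,r,θ)) * gd b e1 (t,r,θ)).re) / Real.sin θ
    = ((2*r - 2*M) * (cj (gd b e1 (t,r,θ)) * gd b e2 (t,r,θ) + cj (gd b e2 (t,r,θ)) * gd b e1 (t,r,θ)).re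
    + (r^2 - 2*M*r) * ((cj (ggd b e1 e2 (t,r,θ)) * gd b e2 (t,r,θ) + cj (gd b e1 (t,r,θ)) * ggd b e2 e2 (t,r,θ)).re
        + (cj (ggd b e2 e2 (t,r,θ)) * gd b e1 (t,r,θ) + cj (gd b e2 (t,r,θ)) * ggd b e1 e2 (t,r,θ)).re)) / Real.sin θ
    + ((((cj (ggd b e1 e3 (t,r,θ)) * gd b e3 (t,r,θ) + cj (gd b e1 (t,r,θ)) * ggd b e3 e3 (t,r,θ)).re
      + (cj (ggd b e3 e3 (t,r,θ)) * gd b e1 (t,r,θ) + cj (gd b e3 (t,r,θ)) * ggd b e1 e3 (t,r,θ)).re) * Real.sin θ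
    - (cj (gd b e1 (t,r,θ)) * gd b e3 (t,r,θ) + cj (gd b e3 (t,r,θ)) * gd b e1 (t,r,θ)).re * Real.cos θ) / (Real.sin θ)^2)
  rw [h12, h13]
  exact core_id M r θ hM hr hθ (gd b e1 (t,r,θ)) (gd b e2 (t,r,θ)) (gd b e3 (t,r,θ))
    (Fn b (t,r,θ)) (ggd b e1 e1 (t,r,θ)) (ggd b e1 e2 (t,r,θ)) (ggd b e1 e3 (t,r,θ))
    (ggd b e2 e2 (t,r,θ)) (ggd b e3 e3 (t,r,θ)) heq

end RWAux

/-- Conservation of the `T`-energy for solutions `b` of the Regge–Wheeler equation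
`□̸_{L(−1)} β = (1/r²)(1 − 8M/r)·β`, with spatially compact support on each time slab. -/
theorem T_energy_conservation_beta
    (M : ℝ) (hM : 0 < M)
    (b : ℝ → ℝ → ℝ → ℂ)
    (ha : ContDiffOn ℝ (⊤ : ℕ∞) (fun p : ℝ × ℝ × ℝ => b p.1 p.2.1 p.2.2)
      ((Set.univ : Set ℝ) ×ˢ Set.Ioi (2 * M) ×ˢ Set.Ioo 0 π))
    (hRW : ∀ t r θ : ℝ, r ∈ Set.Ioi (2 * M) → θ ∈ Set.Ioo 0 π →
      -((r ^ 2 / (r ^ 2 - 2 * M * r) : ℝ) : ℂ) * pt (pt b) t r θ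
        + (((r ^ 2 - 2 * M * r) / r ^ 2 : ℝ) : ℂ) * pr (pr b) t r θ
        + (((2 * r - 2 * M) / r ^ 2 : ℝ) : ℂ) * pr b t r θ
        + ((1 / r ^ 2 : ℝ) : ℂ) *
            (pθ (pθ b) t r θ
              - ((Real.cos θ / Real.sin θ : ℝ) : ℂ) * pθ b t r θ
              + b t r θ)
        = ((1 / r ^ 2 * (1 - 8 * M / r) : ℝ) : ℂ) * b t r θ)
    (hsupp : ∀ I : Set ℝ, IsCompact I → ∃ K : Set (ℝ × ℝ),
      IsCompact K ∧ K ⊆ Set.Ioi (2 * M) ×ˢ Set.Ioo 0 π ∧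
      ∀ t ∈ I, ∀ r θ : ℝ, (r, θ) ∉ K → b t r θ = 0) :
    ∀ t₁ t₂ : ℝ,
      (∫ r in Set.Ioi (2 * M), ∫ θ in (0:ℝ)..π,
        (r ^ 4 / (r ^ 2 - 2 * M * r) * ‖pt b t₁ r θ‖ ^ 2
          + (r ^ 2 - 2 * M * r) * ‖pr b t₁ r θ‖ ^ 2
          + ‖pθ b t₁ r θ‖ ^ 2
          - ‖b t₁ r θ‖ ^ 2
          + (1 - 8 * M / r) * ‖b t₁ r θ‖ ^ 2) / Real.sin θ)
      = ∫ r in Set.Ioi (2 * M), ∫ θ in (0:ℝ)..π,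
        (r ^ 4 / (r ^ 2 - 2 * M * r) * ‖pt b t₂ r θ‖ ^ 2
          + (r ^ 2 - 2 * M * r) * ‖pr b t₂ r θ‖ ^ 2
          + ‖pθ b t₂ r θ‖ ^ 2
          - ‖b t₂ r θ‖ ^ 2
          + (1 - 8 * M / r) * ‖b t₂ r θ‖ ^ 2) / Real.sin θ := by
  classical
  open RWAux Set MeasureTheory Metric in
  have haF : ContDiffOn ℝ (⊤ : ℕ∞) (RWAux.Fn b) (RWAux.Dom M) := ha
  have hππ : (0:ℝ) < π := Real.pi_pos
  -- the energy as an integral of `Dens`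
  set En : ℝ → ℝ :=
    fun t => ∫ r in Set.Ioi (2*M), ∫ θ in Set.Ioo 0 π, RWAux.Dens M b (t,r,θ) with hEndef
  have hstmt : ∀ t : ℝ,
      (∫ r in Set.Ioi (2 * M), ∫ θ in (0:ℝ)..π,
        (r ^ 4 / (r ^ 2 - 2 * M * r) * ‖pt b t r θ‖ ^ 2
          + (r ^ 2 - 2 * M * r) * ‖pr b t r θ‖ ^ 2
          + ‖pθ b t r θ‖ ^ 2 - ‖b t r θ‖ ^ 2
          + (1 - 8 * M / r) * ‖b t r θ‖ ^ 2) / Real.sin θ) = En t := by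
    intro t
    refine MeasureTheory.setIntegral_congr_fun measurableSet_Ioi (fun r hr => ?_)
    rw [intervalIntegral.integral_of_le Real.pi_pos.le,
      ← MeasureTheory.Measure.restrict_congr_set MeasureTheory.Ioo_ae_eq_Ioc]
    refine MeasureTheory.setIntegral_congr_fun measurableSet_Ioo (fun θ hθ => ?_)
    rw [RWAux.pt_eq ha hr hθ, RWAux.pr_eq ha hr hθ, RWAux.pθ_eq ha hr hθ,
      show b t r θ = RWAux.Fn b (t,r,θ) from rfl]
    simp only [RWAux.Dens]
    ring
  have hconst : ∀ t₀ : ℝ, HasDerivAt En 0 t₀ := by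
    intro t₀
    have ht₀ : t₀ ∈ Metric.ball t₀ 1 := Metric.mem_ball_self one_pos
    obtain ⟨K, hKc, hKsub, hKsupp⟩ := hsupp (Set.Icc (t₀-1) (t₀+1)) isCompact_Icc
    -- a bounding box for the support
    set K' : Set (ℝ×ℝ) := insert (2*M+1, π/2) K with hK'def
    have hK'c : IsCompact K' := hKc.insert _
    have hK'sub : K' ⊆ Set.Ioi (2*M) ×ˢ Set.Ioo 0 π := by
      refine Set.insert_subset ⟨?_, ?_, ?_⟩ hKsub
      · show 2*M < 2*M+1; linarith
      · positivity
      · exact half_lt_self Real.pi_pos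
    have hK'ne : K'.Nonempty := ⟨_, Set.mem_insert _ _⟩
    have hKfst : IsCompact (Prod.fst '' K') := hK'c.image continuous_fst
    have hKsnd : IsCompact (Prod.snd '' K') := hK'c.image continuous_snd
    have hfne : (Prod.fst '' K').Nonempty := hK'ne.image _
    have hsne : (Prod.snd '' K').Nonempty := hK'ne.image _
    set rc := sInf (Prod.fst '' K') with hrcdef
    set rd := sSup (Prod.fst '' K') with hrddef
    set θc := sInf (Prod.snd '' K') with hθcdef
    set θd := sSup (Prod.snd '' K') with hθddef
    have h2Mrc : 2*M < rc := by
      obtain ⟨q, hq, hq2⟩ := hKfst.sInf_mem hfne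
      rw [hrcdef, ← hq2]; exact (hK'sub hq).1
    have hθc0 : 0 < θc := by
      obtain ⟨q, hq, hq2⟩ := hKsnd.sInf_mem hsne
      rw [hθcdef, ← hq2]; exact (hK'sub hq).2.1
    have hθdπ : θd < π := by
      obtain ⟨q, hq, hq2⟩ := hKsnd.sSup_mem hsne
      rw [hθddef, ← hq2]; exact (hK'sub hq).2.2
    have hrcd : rc ≤ rd := csInf_le_csSup hfne hKfst.bddBelow hKfst.bddAbove
    have hθcd : θc ≤ θd := csInf_le_csSup hsne hKsnd.bddBelow hKsnd.bddAbove
    have hKbox : K ⊆ Set.Icc rc rd ×ˢ Set.Icc θc θd := by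
      intro q hq
      have hq' : q ∈ K' := Set.mem_insert_of_mem _ hq
      exact ⟨⟨csInf_le hKfst.bddBelow ⟨q, hq', rfl⟩, le_csSup hKfst.bddAbove ⟨q, hq', rfl⟩⟩,
        csInf_le hKsnd.bddBelow ⟨q, hq', rfl⟩, le_csSup hKsnd.bddAbove ⟨q, hq', rfl⟩⟩
    have hIccθ : Set.Icc θc θd ⊆ Set.Ioo 0 π :=
      fun x hx => ⟨lt_of_lt_of_le hθc0 hx.1, lt_of_le_of_lt hx.2 hθdπ⟩
    have hIccr : Set.Icc rc rd ⊆ Set.Ioi (2*M) := fun x hx => lt_of_lt_of_le h2Mrc hx.1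
    -- vanishing outside the box
    set U0 : Set RWAux.V :=
      (Prod.fst ⁻¹' Metric.ball t₀ 1) ∩ (Prod.snd ⁻¹' Kᶜ) with hU0def
    have hU0open : IsOpen U0 :=
      (Metric.isOpen_ball.preimage continuous_fst).inter
        (hKc.isClosed.isOpen_compl.preimage continuous_snd)
    have hball : Metric.ball t₀ 1 ⊆ Set.Icc (t₀-1) (t₀+1) := by
      intro x hx
      rw [Metric.mem_ball, Real.dist_eq] at hx
      have := abs_lt.1 hx
      exact ⟨by linarith [this.1], by linarith [this.2]⟩
    have hFn0 : ∀ p ∈ U0, RWAux.Fn b p = 0 := fun p hp =>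
      hKsupp p.1 (hball hp.1) p.2.1 p.2.2 hp.2
    have hg0 : ∀ p ∈ U0, ∀ v, RWAux.gd b v p = 0 := by
      intro p hp v
      have hev : RWAux.Fn b =ᶠ[nhds p] (fun _ => (0:ℂ)) :=
        Filter.eventuallyEq_of_mem (hU0open.mem_nhds hp) hFn0
      show fderiv ℝ (RWAux.Fn b) p v = 0
      rw [hev.fderiv_eq]
      simp
    have hgg0 : ∀ p ∈ U0, ∀ v w, RWAux.ggd b v w p = 0 := by
      intro p hp v w
      have hev : RWAux.gd b v =ᶠ[nhds p] (fun _ => (0:ℂ)) :=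
        Filter.eventuallyEq_of_mem (hU0open.mem_nhds hp) (fun q hq => hg0 q hq v)
      show fderiv ℝ (RWAux.gd b v) p w = 0
      rw [hev.fderiv_eq]
      simp
    have hmemU0 : ∀ s ∈ Metric.ball t₀ 1, ∀ r θ : ℝ,
        (r,θ) ∉ Set.Icc rc rd ×ˢ Set.Icc θc θd → ((s,r,θ) : RWAux.V) ∈ U0 :=
      fun s hs r θ hq => ⟨hs, fun hK => hq (hKbox hK)⟩
    have hvDens : ∀ s ∈ Metric.ball t₀ 1, ∀ r θ : ℝ,
        (r,θ) ∉ Set.Icc rc rd ×ˢ Set.Icc θc θd → RWAux.Dens M b (s,r,θ) = 0 := by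
      intro s hs r θ hq
      have hpU := hmemU0 s hs r θ hq
      simp [RWAux.Dens, hg0 _ hpU, hFn0 _ hpU]
    have hvDT : ∀ s ∈ Metric.ball t₀ 1, ∀ r θ : ℝ,
        (r,θ) ∉ Set.Icc rc rd ×ˢ Set.Icc θc θd → RWAux.DT M b (s,r,θ) = 0 := by
      intro s hs r θ hq
      have hpU := hmemU0 s hs r θ hq
      simp [RWAux.DT, hg0 _ hpU, hgg0 _ hpU, hFn0 _ hpU]
    have hvGd : ∀ s ∈ Metric.ball t₀ 1, ∀ r θ : ℝ,
        (r,θ) ∉ Set.Icc rc rd ×ˢ Set.Icc θc θd → RWAux.Gd M b (s,r,θ) = 0 := by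
      intro s hs r θ hq
      have hpU := hmemU0 s hs r θ hq
      simp [RWAux.Gd, hg0 _ hpU]
    have hvGR : ∀ s ∈ Metric.ball t₀ 1, ∀ r θ : ℝ,
        (r,θ) ∉ Set.Icc rc rd ×ˢ Set.Icc θc θd → RWAux.GR M b (s,r,θ) = 0 := by
      intro s hs r θ hq
      have hpU := hmemU0 s hs r θ hq
      simp [RWAux.GR, hg0 _ hpU, hgg0 _ hpU]
    have hvHd : ∀ s ∈ Metric.ball t₀ 1, ∀ r θ : ℝ,
        (r,θ) ∉ Set.Icc rc rd ×ˢ Set.Icc θc θd → RWAux.Hd b (s,r,θ) = 0 := by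
      intro s hs r θ hq
      have hpU := hmemU0 s hs r θ hq
      simp [RWAux.Hd, hg0 _ hpU]
    have hvHT : ∀ s ∈ Metric.ball t₀ 1, ∀ r θ : ℝ,
        (r,θ) ∉ Set.Icc rc rd ×ˢ Set.Icc θc θd → RWAux.HT b (s,r,θ) = 0 := by
      intro s hs r θ hq
      have hpU := hmemU0 s hs r θ hq
      simp [RWAux.HT, hg0 _ hpU, hgg0 _ hpU]
    -- the master bound
    have hbox3sub : Set.Icc (t₀-1) (t₀+1) ×ˢ Set.Icc rc rd ×ˢ Set.Icc θc θd ⊆ RWAux.Dom M := by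
      rintro ⟨u1, u2, u3⟩ ⟨h1, h2, h3⟩
      exact ⟨Set.mem_univ _, hIccr h2, hIccθ h3⟩
    have hbox3cpt : IsCompact (Set.Icc (t₀-1) (t₀+1) ×ˢ Set.Icc rc rd ×ˢ Set.Icc θc θd) :=
      isCompact_Icc.prod (isCompact_Icc.prod isCompact_Icc)
    have master : ∀ φ : RWAux.V → ℝ, ContinuousOn φ (RWAux.Dom M) →
        (∀ s ∈ Metric.ball t₀ 1, ∀ r θ : ℝ,
          (r,θ) ∉ Set.Icc rc rd ×ˢ Set.Icc θc θd → φ (s,r,θ) = 0) →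
        ∃ C : ℝ, 0 ≤ C ∧ ∀ s ∈ Metric.ball t₀ 1, ∀ r ∈ Set.Ioi (2*M), ∀ θ ∈ Set.Ioo 0 π,
          |φ (s,r,θ)| ≤ C ∧ ((r,θ) ∉ Set.Icc rc rd ×ˢ Set.Icc θc θd → φ (s,r,θ) = 0) := by
      intro φ hφc hφv
      obtain ⟨C, hC⟩ := hbox3cpt.exists_bound_of_continuousOn (hφc.mono hbox3sub)
      refine ⟨max C 0, le_max_right _ _, fun s hs r hr θ hθ => ⟨?_, hφv s hs r θ⟩⟩
      by_cases hq : (r,θ) ∈ Set.Icc rc rd ×ˢ Set.Icc θc θd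
      · have hps : ((s,r,θ) : RWAux.V) ∈
            Set.Icc (t₀-1) (t₀+1) ×ˢ Set.Icc rc rd ×ˢ Set.Icc θc θd :=
          ⟨hball hs, hq.1, hq.2⟩
        calc |φ (s,r,θ)| = ‖φ (s,r,θ)‖ := (Real.norm_eq_abs _).symm
          _ ≤ C := hC _ hps
          _ ≤ max C 0 := le_max_left _ _
      · rw [hφv s hs r θ hq]
        simp
    obtain ⟨C₁, hC₁0, hC₁⟩ := master _ (RWAux.cont_Dens hM haF) hvDens
    obtain ⟨C₂, hC₂0, hC₂⟩ := master _ (RWAux.cont_DT hM haF) hvDT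
    obtain ⟨C₃, hC₃0, hC₃⟩ := master _ (RWAux.cont_Gd hM haF) hvGd
    obtain ⟨C₄, hC₄0, hC₄⟩ := master _ (RWAux.cont_GR hM haF) hvGR
    obtain ⟨C₅, hC₅0, hC₅⟩ := master _ (RWAux.cont_Hd hM haF) hvHd
    obtain ⟨C₆, hC₆0, hC₆⟩ := master _ (RWAux.cont_HT hM haF) hvHT
    -- slice continuity helpers
    have contSliceθ : ∀ φ : RWAux.V → ℝ, ContinuousOn φ (RWAux.Dom M) → ∀ x r : ℝ,
        r ∈ Set.Ioi (2*M) → ContinuousOn (fun θ => φ (x,r,θ)) (Set.Ioo 0 π) := by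
      intro φ hφ x r hr
      refine hφ.comp (Continuous.continuousOn ?_) (fun θ hθ => RWAux.mem_Dom hr hθ)
      exact continuous_const.prodMk (continuous_const.prodMk continuous_id)
    have contSlicer : ∀ φ : RWAux.V → ℝ, ContinuousOn φ (RWAux.Dom M) → ∀ x θ : ℝ,
        θ ∈ Set.Ioo 0 π → ContinuousOn (fun r => φ (x,r,θ)) (Set.Ioi (2*M)) := by
      intro φ hφ x θ hθ
      refine hφ.comp (Continuous.continuousOn ?_) (fun r hr => RWAux.mem_Dom hr hθ)
      exact continuous_const.prodMk (continuous_id.prodMk continuous_const)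
    -- indicator bounds
    have indθ : ∀ (φ : RWAux.V → ℝ) (C : ℝ), 0 ≤ C →
        (∀ s ∈ Metric.ball t₀ 1, ∀ r ∈ Set.Ioi (2*M), ∀ θ ∈ Set.Ioo 0 π,
          |φ (s,r,θ)| ≤ C ∧ ((r,θ) ∉ Set.Icc rc rd ×ˢ Set.Icc θc θd → φ (s,r,θ) = 0)) →
        ∀ s ∈ Metric.ball t₀ 1, ∀ r ∈ Set.Ioi (2*M), ∀ θ ∈ Set.Ioo 0 π,
          |φ (s,r,θ)| ≤ (Set.Icc θc θd).indicator (fun _ => C) θ := by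
      intro φ C hC0 h s hs r hr θ hθ
      by_cases hm : θ ∈ Set.Icc θc θd
      · rw [Set.indicator_of_mem hm]
        exact (h s hs r hr θ hθ).1
      · rw [Set.indicator_of_notMem hm, (h s hs r hr θ hθ).2 (fun hmem => hm hmem.2)]
        simp
    -- θ-integrability
    have intθ : ∀ (φ : RWAux.V → ℝ), ContinuousOn φ (RWAux.Dom M) →
        (∀ s ∈ Metric.ball t₀ 1, ∀ r ∈ Set.Ioi (2*M), ∀ θ ∈ Set.Ioo 0 π,
          |φ (s,r,θ)| ≤ C₁ + C₂ + C₃ + C₄ + C₅ + C₆ ∨ True) → True := fun _ _ _ => trivial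
    have intθ' : ∀ (φ : RWAux.V → ℝ), ContinuousOn φ (RWAux.Dom M) →
        (∀ s ∈ Metric.ball t₀ 1, ∀ r ∈ Set.Ioi (2*M), ∀ θ ∈ Set.Ioo 0 π,
          ((r,θ) ∉ Set.Icc rc rd ×ˢ Set.Icc θc θd → φ (s,r,θ) = 0)) →
        ∀ s ∈ Metric.ball t₀ 1, ∀ r ∈ Set.Ioi (2*M),
          MeasureTheory.IntegrableOn (fun θ => φ (s,r,θ)) (Set.Ioo 0 π) := by
      intro φ hφ hvan s hs r hr
      refine RWAux.integrableOn_of_box measurableSet_Ioo (contSliceθ φ hφ s r hr) hIccθ ?_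
      intro θ hθ hm
      exact hvan s hs r hr θ hθ (fun hmem => hm hmem.2)
    -- integral of slice vanishes off the box
    have intvan : ∀ (φ : RWAux.V → ℝ),
        (∀ s ∈ Metric.ball t₀ 1, ∀ r ∈ Set.Ioi (2*M), ∀ θ ∈ Set.Ioo 0 π,
          ((r,θ) ∉ Set.Icc rc rd ×ˢ Set.Icc θc θd → φ (s,r,θ) = 0)) →
        ∀ s ∈ Metric.ball t₀ 1, ∀ r ∈ Set.Ioi (2*M), r ∉ Set.Icc rc rd →
          (∫ θ in Set.Ioo 0 π, φ (s,r,θ)) = 0 := by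
      intro φ hvan s hs r hr hrm
      have h0 : ∀ θ ∈ Set.Ioo 0 π, φ (s,r,θ) = (fun _ : ℝ => (0:ℝ)) θ :=
        fun θ hθ => hvan s hs r hr θ hθ (fun hmem => hrm hmem.1)
      rw [MeasureTheory.setIntegral_congr_fun measurableSet_Ioo h0]
      simp
    -- Step A: time derivative of the θ-integral
    have hJdiff : ∀ s ∈ Metric.ball t₀ 1, ∀ r ∈ Set.Ioi (2*M),
        HasDerivAt (fun u => ∫ θ in Set.Ioo 0 π, RWAux.Dens M b (u,r,θ))
          (∫ θ in Set.Ioo 0 π, RWAux.DT M b (s,r,θ)) s := by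
      intro s hs r hr
      have hε : 0 < 1 - dist s t₀ := by
        rw [Metric.mem_ball] at hs; linarith
      have hballsub : Metric.ball s (1 - dist s t₀) ⊆ Metric.ball t₀ 1 := by
        intro x hx
        rw [Metric.mem_ball] at hx ⊢
        have := dist_triangle x s t₀
        linarith
      refine RWAux.hasDerivAt_param_integral (a := θc) (c := θd) (C := C₂)
        (φ := fun u θ => RWAux.Dens M b (u,r,θ)) (ψ := fun u θ => RWAux.DT M b (u,r,θ))
        measurableSet_Ioo hε ?_ ?_ ?_ ?_ ?_
      · intro x hx
        exact (contSliceθ _ (RWAux.cont_Dens hM haF) x r hr).aestronglyMeasurable measurableSet_Ioo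
      · exact (contSliceθ _ (RWAux.cont_DT hM haF) s r hr).aestronglyMeasurable measurableSet_Ioo
      · exact intθ' _ (RWAux.cont_Dens hM haF) (fun s hs r hr θ hθ => (hC₁ s hs r hr θ hθ).2) s hs r hr
      · intro x hx θ hθ
        exact indθ _ _ hC₂0 hC₂ x (hballsub hx) r hr θ hθ
      · intro θ hθ x hx
        exact RWAux.L_Dt haF (RWAux.mem_Dom hr hθ)
    -- continuity in r of the θ-integrals
    have hJcont : ∀ s ∈ Metric.ball t₀ 1,
        ContinuousOn (fun r => ∫ θ in Set.Ioo 0 π, RWAux.Dens M b (s,r,θ)) (Set.Ioi (2*M)) := by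
      intro s hs
      refine RWAux.continuousOn_param_integral (a := θc) (c := θd) (C := C₁)
        (φ := fun r θ => RWAux.Dens M b (s,r,θ))
        measurableSet_Ioo isOpen_Ioi ?_ ?_ ?_
      · intro r hr
        exact (contSliceθ _ (RWAux.cont_Dens hM haF) s r hr).aestronglyMeasurable measurableSet_Ioo
      · intro r hr θ hθ
        exact indθ _ _ hC₁0 hC₁ s hs r hr θ hθ
      · intro θ hθ
        exact contSlicer _ (RWAux.cont_Dens hM haF) s θ hθ
    have hJTcont : ∀ s ∈ Metric.ball t₀ 1,
        ContinuousOn (fun r => ∫ θ in Set.Ioo 0 π, RWAux.DT M b (s,r,θ)) (Set.Ioi (2*M)) := by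
      intro s hs
      refine RWAux.continuousOn_param_integral (a := θc) (c := θd) (C := C₂)
        (φ := fun r θ => RWAux.DT M b (s,r,θ))
        measurableSet_Ioo isOpen_Ioi ?_ ?_ ?_
      · intro r hr
        exact (contSliceθ _ (RWAux.cont_DT hM haF) s r hr).aestronglyMeasurable measurableSet_Ioo
      · intro r hr θ hθ
        exact indθ _ _ hC₂0 hC₂ s hs r hr θ hθ
      · intro θ hθ
        exact contSlicer _ (RWAux.cont_DT hM haF) s θ hθ
    -- Step B: derivative of the energy
    have hEnd : HasDerivAt En
        (∫ r in Set.Ioi (2*M), ∫ θ in Set.Ioo 0 π, RWAux.DT M b (t₀,r,θ)) t₀ := by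
      rw [hEndef]
      refine RWAux.hasDerivAt_param_integral (a := rc) (c := rd) (C := C₂ * π)
        (φ := fun t r => ∫ θ in Set.Ioo 0 π, RWAux.Dens M b (t,r,θ))
        (ψ := fun t r => ∫ θ in Set.Ioo 0 π, RWAux.DT M b (t,r,θ))
        measurableSet_Ioi one_pos ?_ ?_ ?_ ?_ ?_
      · intro x hx
        exact (hJcont x hx).aestronglyMeasurable measurableSet_Ioi
      · exact (hJTcont t₀ ht₀).aestronglyMeasurable measurableSet_Ioi
      · refine RWAux.integrableOn_of_box measurableSet_Ioi (hJcont t₀ ht₀) hIccr ?_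
        intro r hr hrm
        exact intvan _ (fun s hs r hr θ hθ => (hC₁ s hs r hr θ hθ).2) t₀ ht₀ r hr hrm
      · intro x hx r hr
        show |∫ θ in Set.Ioo 0 π, RWAux.DT M b (x,r,θ)|
          ≤ (Set.Icc rc rd).indicator (fun _ => C₂ * π) r
        by_cases hrm : r ∈ Set.Icc rc rd
        · rw [Set.indicator_of_mem hrm]
          have hle : ‖∫ θ in Set.Ioo 0 π, RWAux.DT M b (x,r,θ)‖
              ≤ C₂ * (volume (Set.Ioo (0:ℝ) π)).toReal := by
            refine MeasureTheory.norm_setIntegral_le_of_norm_le_const ?_ ?_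
            · rw [Real.volume_Ioo]; exact ENNReal.ofReal_lt_top
            · intro θ hθ
              rw [Real.norm_eq_abs]
              exact (hC₂ x hx r hr θ hθ).1
          rw [Real.volume_Ioo, ENNReal.toReal_ofReal (by linarith)] at hle
          calc |∫ θ in Set.Ioo 0 π, RWAux.DT M b (x,r,θ)|
              = ‖∫ θ in Set.Ioo 0 π, RWAux.DT M b (x,r,θ)‖ := (Real.norm_eq_abs _).symm
            _ ≤ C₂ * (π - 0) := hle
            _ = C₂ * π := by ring
        · rw [Set.indicator_of_notMem hrm,
            intvan _ (fun s hs r hr θ hθ => (hC₂ s hs r hr θ hθ).2) x hx r hr hrm]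
          simp
      · intro r hr x hx
        exact hJdiff x hx r hr
    -- Step C: the θ-integral of HT vanishes (FTC), so JT is the r-derivative of the Gd-integral
    have hHzero : ∀ r ∈ Set.Ioi (2*M), (∫ θ in Set.Ioo 0 π, RWAux.HT b (t₀,r,θ)) = 0 := by
      intro r hr
      refine RWAux.integral_deriv_eq_zero measurableSet_Ioo (a := θc) (c := θd)
        (f := fun θ => RWAux.Hd b (t₀,r,θ)) (f' := fun θ => RWAux.HT b (t₀,r,θ))
        (u := θc/2) (v := (θd+π)/2) (by linarith) hθcd (by linarith) ?_ ?_ ?_ ?_ ?_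
      · intro x hx
        exact ⟨by rcases hx with ⟨h1, h2⟩; linarith, by rcases hx with ⟨h1, h2⟩; linarith⟩
      · intro θ hθ
        exact RWAux.L_Ht haF (RWAux.mem_Dom hr hθ)
          (ne_of_gt (Real.sin_pos_of_pos_of_lt_pi hθ.1 hθ.2))
      · exact contSliceθ _ (RWAux.cont_HT hM haF) t₀ r hr
      · intro θ hθ hm
        exact (hC₅ t₀ ht₀ r hr θ hθ).2 (fun hmem => hm hmem.2)
      · intro θ hθ hm
        exact (hC₆ t₀ ht₀ r hr θ hθ).2 (fun hmem => hm hmem.2)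
    have hJTeq : ∀ r ∈ Set.Ioi (2*M),
        (∫ θ in Set.Ioo 0 π, RWAux.DT M b (t₀,r,θ))
          = ∫ θ in Set.Ioo 0 π, RWAux.GR M b (t₀,r,θ) := by
      intro r hr
      have h1 : (∫ θ in Set.Ioo 0 π, RWAux.DT M b (t₀,r,θ))
          = ∫ θ in Set.Ioo 0 π, (RWAux.GR M b (t₀,r,θ) + RWAux.HT b (t₀,r,θ)) :=
        MeasureTheory.setIntegral_congr_fun measurableSet_Ioo
          (fun θ hθ => RWAux.L_main hM haF hRW hr hθ)
      rw [h1, MeasureTheory.integral_add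
        (intθ' _ (RWAux.cont_GR hM haF) (fun s hs r hr θ hθ => (hC₄ s hs r hr θ hθ).2) t₀ ht₀ r hr)
        (intθ' _ (RWAux.cont_HT hM haF) (fun s hs r hr θ hθ => (hC₆ s hs r hr θ hθ).2) t₀ ht₀ r hr),
        hHzero r hr, add_zero]
    have hGbar : ∀ r ∈ Set.Ioi (2*M),
        HasDerivAt (fun ρ => ∫ θ in Set.Ioo 0 π, RWAux.Gd M b (t₀,ρ,θ))
          (∫ θ in Set.Ioo 0 π, RWAux.GR M b (t₀,r,θ)) r := by
      intro r hr
      have hr' : 2*M < r := hr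
      have hε : 0 < r - 2*M := by linarith
      have hbs : Metric.ball r (r - 2*M) ⊆ Set.Ioi (2*M) := by
        intro x hx
        rw [Metric.mem_ball, Real.dist_eq] at hx
        have := abs_lt.1 hx
        show 2*M < x
        linarith [this.1]
      refine RWAux.hasDerivAt_param_integral (a := θc) (c := θd) (C := C₄)
        (φ := fun ρ θ => RWAux.Gd M b (t₀,ρ,θ)) (ψ := fun ρ θ => RWAux.GR M b (t₀,ρ,θ))
        measurableSet_Ioo hε ?_ ?_ ?_ ?_ ?_
      · intro x hx
        exact (contSliceθ _ (RWAux.cont_Gd hM haF) t₀ x (hbs hx)).aestronglyMeasurable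
          measurableSet_Ioo
      · exact (contSliceθ _ (RWAux.cont_GR hM haF) t₀ r hr).aestronglyMeasurable measurableSet_Ioo
      · exact intθ' _ (RWAux.cont_Gd hM haF)
          (fun s hs r hr θ hθ => (hC₃ s hs r hr θ hθ).2) t₀ ht₀ r hr
      · intro x hx θ hθ
        exact indθ _ _ hC₄0 hC₄ t₀ ht₀ x (hbs hx) θ hθ
      · intro θ hθ x hx
        exact RWAux.L_Gr haF (RWAux.mem_Dom (hbs hx) hθ)
    -- Step D: the r-integral of JT t₀ vanishes
    have hzero : (∫ r in Set.Ioi (2*M), ∫ θ in Set.Ioo 0 π, RWAux.DT M b (t₀,r,θ)) = 0 := by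
      have h1 : (∫ r in Set.Ioi (2*M), ∫ θ in Set.Ioo 0 π, RWAux.DT M b (t₀,r,θ))
          = ∫ r in Set.Ioi (2*M), (fun ρ => ∫ θ in Set.Ioo 0 π, RWAux.GR M b (t₀,ρ,θ)) r :=
        MeasureTheory.setIntegral_congr_fun measurableSet_Ioi (fun r hr => hJTeq r hr)
      rw [h1]
      refine RWAux.integral_deriv_eq_zero measurableSet_Ioi (a := rc) (c := rd)
        (f := fun ρ => ∫ θ in Set.Ioo 0 π, RWAux.Gd M b (t₀,ρ,θ))
        (f' := fun ρ => ∫ θ in Set.Ioo 0 π, RWAux.GR M b (t₀,ρ,θ))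
        (u := (2*M+rc)/2) (v := rd+1) (by linarith) hrcd (by linarith) ?_ ?_ ?_ ?_ ?_
      · intro x hx
        rcases hx with ⟨h1', h2'⟩
        show 2*M < x
        linarith
      · intro r hr
        exact hGbar r hr
      · have := hJTcont t₀ ht₀
        refine ContinuousOn.congr this ?_
        intro r hr
        exact (hJTeq r hr).symm
      · intro r hr hrm
        show (∫ θ in Set.Ioo 0 π, RWAux.Gd M b (t₀,r,θ)) = 0
        exact intvan _ (fun s hs r hr θ hθ => (hC₃ s hs r hr θ hθ).2) t₀ ht₀ r hr hrm
      · intro r hr hrm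
        show (∫ θ in Set.Ioo 0 π, RWAux.GR M b (t₀,r,θ)) = 0
        exact intvan _ (fun s hs r hr θ hθ => (hC₄ s hs r hr θ hθ).2) t₀ ht₀ r hr hrm
    exact hzero ▸ hEnd
  intro t₁ t₂
  rw [hstmt t₁, hstmt t₂]
  have hdiff : Differentiable ℝ En := fun t => (hconst t).differentiableAt
  exact is_const_of_deriv_eq_zero hdiff (fun t => (hconst t).deriv) t₁ t₂

end
end

section
/- Let g : [1, ∞) → [0, ∞) be continuous and let c > 0, A ≥ 0 be constants such that for all 1 ≤ τ′ ≤ τ: g(τ) + c·∫_{τ′}^{τ} g(s) ds ≤ g(τ′) + A·(τ′)⁻². Then there exists a constant C, depending only on c, such that g(τ) ≤ C·(g(1) + A)·τ⁻² for all τ ≥ 1. -/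
/-- Bootstrap lemma underlying the quadratic energy-decay argument: an integral
inequality with inhomogeneous term `A·(τ')⁻²` forces quadratic decay
`g(τ) ≤ C·(g(1) + A)·τ⁻²`, with `C` depending only on `c`. -/
theorem bootstrap_quadratic_decay (c : ℝ) (hc : 0 < c) :
    ∃ C : ℝ, 0 < C ∧ ∀ g : ℝ → ℝ, ContinuousOn g (Set.Ici 1) →
      (∀ τ : ℝ, 1 ≤ τ → 0 ≤ g τ) →
      ∀ A : ℝ, 0 ≤ A →
      (∀ τ' τ : ℝ, 1 ≤ τ' → τ' ≤ τ →
        g τ + c * ∫ s in τ'..τ, g s ≤ g τ' + A * (τ' ^ 2)⁻¹) →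
      ∀ τ : ℝ, 1 ≤ τ → g τ ≤ C * (g 1 + A) * (τ ^ 2)⁻¹ := by
  set K : ℝ := 2 * (2 + c) / c with hK
  have hKpos : 0 < K := by positivity
  refine ⟨4 * K / c + 8 / c + 8, by positivity, ?_⟩
  intro g hg hpos A hA h
  -- integrability
  have hint : ∀ a b : ℝ, 1 ≤ a → a ≤ b → IntervalIntegrable g MeasureTheory.volume a b := by
    intro a b ha hab
    refine (hg.mono ?_).intervalIntegrable
    rw [Set.uIcc_of_le hab]
    exact fun x hx => le_trans ha hx.1
  have hnn : ∀ a b : ℝ, 1 ≤ a → a ≤ b → 0 ≤ ∫ s in a..b, g s := by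
    intro a b ha hab
    exact intervalIntegral.integral_nonneg hab (fun s hs => hpos s (le_trans ha hs.1))
  -- almost monotonicity
  have mono : ∀ τ' τ : ℝ, 1 ≤ τ' → τ' ≤ τ → g τ ≤ g τ' + A * (τ' ^ 2)⁻¹ := by
    intro τ' τ h1 h2
    have := h τ' τ h1 h2
    have h0 := hnn τ' τ h1 h2
    nlinarith
  -- key integral bound
  have key : ∀ τ' τ : ℝ, 1 ≤ τ' → τ' ≤ τ →
      c * ((τ - τ') * (g τ - A * (τ' ^ 2)⁻¹)) ≤ g τ' + A * (τ' ^ 2)⁻¹ := by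
    intro τ' τ h1 h2
    have hlb : (τ - τ') * (g τ - A * (τ' ^ 2)⁻¹) ≤ ∫ s in τ'..τ, g s := by
      have hconst : (∫ _ in τ'..τ, (g τ - A * (τ' ^ 2)⁻¹)) =
          (τ - τ') * (g τ - A * (τ' ^ 2)⁻¹) := by
        rw [intervalIntegral.integral_const, smul_eq_mul]
      rw [← hconst]
      refine intervalIntegral.integral_mono_on h2 intervalIntegrable_const
        (hint τ' τ h1 h2) ?_
      intro s hs
      have hs1 : (1:ℝ) ≤ s := le_trans h1 hs.1
      have hm := mono s τ hs1 hs.2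
      have hsq : A * (s ^ 2)⁻¹ ≤ A * (τ' ^ 2)⁻¹ := by
        have h1' : (0:ℝ) < τ' ^ 2 := by positivity
        have : (s ^ 2)⁻¹ ≤ (τ' ^ 2)⁻¹ := by
          apply inv_anti₀ h1'
          nlinarith [hs.1]
        exact mul_le_mul_of_nonneg_left this hA
      linarith
    have h3 := h τ' τ h1 h2
    have h4 : 0 ≤ g τ := hpos τ (le_trans h1 h2)
    nlinarith [mul_le_mul_of_nonneg_left hlb hc.le]
  have hg1 : 0 ≤ g 1 := hpos 1 le_rfl
  -- linear decay
  have lin : ∀ τ : ℝ, 1 ≤ τ → g τ * τ ≤ K * (g 1 + A) := by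
    intro τ hτ
    have hτ0 : (0:ℝ) < τ := lt_of_lt_of_le one_pos hτ
    rcases le_or_gt τ 2 with h2 | h2
    · have hm := mono 1 τ le_rfl hτ
      have hgτ : 0 ≤ g τ := hpos τ hτ
      have : K ≥ 2 := by rw [hK]; rw [ge_iff_le, le_div_iff₀ hc]; nlinarith
      nlinarith
    · have h1 : (1:ℝ) ≤ τ / 2 := by linarith
      have h2' : τ / 2 ≤ τ := by linarith
      have hk := key (τ / 2) τ h1 h2'
      have hm := mono 1 (τ / 2) le_rfl h1
      have hgτ : 0 ≤ g τ := hpos τ hτ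
      have hsq : ((τ / 2) ^ 2)⁻¹ = 4 * (τ ^ 2)⁻¹ := by
        field_simp; ring
      rw [hsq] at hk
      norm_num at hm
      have hτ2 : (0:ℝ) < τ ^ 2 := by positivity
      have hinv : (τ ^ 2)⁻¹ * τ ^ 2 = 1 := inv_mul_cancel₀ (ne_of_gt hτ2)
      have hinvle : (τ ^ 2)⁻¹ ≤ (4:ℝ)⁻¹ := by
        apply inv_anti₀ (by norm_num); nlinarith
      have hb : (τ ^ 2)⁻¹ * τ ≤ 2⁻¹ := by
        have he : (τ ^ 2)⁻¹ * τ = τ⁻¹ := by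
          field_simp [pow_two]
        rw [he]
        exact inv_anti₀ (by norm_num) h2.le
      have hK2 : K * c = 2 * (2 + c) := by
        rw [hK]; field_simp
      have h5 : c * (g τ * τ) ≤ K * c * (g 1 + A) := by
        nlinarith [mul_le_mul_of_nonneg_left hb (mul_nonneg hc.le hA),
          mul_le_mul_of_nonneg_left hinvle hA, hg1, hA]
      have h6 : c * (g τ * τ) ≤ c * (K * (g 1 + A)) := by nlinarith [h5]
      exact le_of_mul_le_mul_left h6 hc
  -- quadratic decay
  intro τ hτ
  have hτ0 : (0:ℝ) < τ := lt_of_lt_of_le one_pos hτ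
  have hτ2 : (0:ℝ) < τ ^ 2 := by positivity
  rw [mul_comm ((4 * K / c + 8 / c + 8) * (g 1 + A)) _, ← div_eq_inv_mul, le_div_iff₀ hτ2]
  rcases le_or_gt τ 2 with h2 | h2
  · have hm := mono 1 τ le_rfl hτ
    have hgτ : 0 ≤ g τ := hpos τ hτ
    have hKc : 0 < 4 * K / c + 8 / c := by positivity
    norm_num at hm
    have ht4 : τ ^ 2 ≤ 4 := by nlinarith
    have hga : 0 ≤ g 1 + A := by linarith
    nlinarith [mul_le_mul_of_nonneg_right hm hτ2.le, mul_le_mul_of_nonneg_left ht4 hga]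
  · have h1 : (1:ℝ) ≤ τ / 2 := by linarith
    have h2' : τ / 2 ≤ τ := by linarith
    have hk := key (τ / 2) τ h1 h2'
    have hl := lin (τ / 2) h1
    have hgτ : 0 ≤ g τ := hpos τ hτ
    have hsq : ((τ / 2) ^ 2)⁻¹ = 4 * (τ ^ 2)⁻¹ := by field_simp; ring
    rw [hsq] at hk
    have hinv : (τ ^ 2)⁻¹ * τ ^ 2 = 1 := inv_mul_cancel₀ (ne_of_gt hτ2)
    have hgτ2 : 0 ≤ g (τ / 2) := hpos _ h1
    have hb : (τ ^ 2)⁻¹ * τ ≤ 2⁻¹ := by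
      have he : (τ ^ 2)⁻¹ * τ = τ⁻¹ := by field_simp [pow_two]
      rw [he]
      exact inv_anti₀ (by norm_num) h2.le
    have hb0 : 0 ≤ (τ ^ 2)⁻¹ * τ := by positivity
    have hstep : c * (τ / 2) * (g τ) ≤ g (τ / 2) + 4 * A * (τ ^ 2)⁻¹ +
        c * (τ / 2) * (4 * A * (τ ^ 2)⁻¹) := by
      linarith [hk]
    have hmul := mul_le_mul_of_nonneg_right hstep hτ0.le
    have hca : c * A * ((τ ^ 2)⁻¹ * τ ^ 2) = c * A := by rw [hinv, mul_one]
    have hl2 : g (τ / 2) * τ ≤ 2 * K * (g 1 + A) := by linarith [hl]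
    have hmul2 : c * (g τ * τ ^ 2) ≤ 2 * (g (τ / 2) * τ) +
        8 * (A * ((τ ^ 2)⁻¹ * τ)) + 4 * (c * A * ((τ ^ 2)⁻¹ * τ ^ 2)) := by
      linarith [hmul]
    rw [hca] at hmul2
    have h5 : c * (g τ * τ ^ 2) ≤ (4 * K + 8 + 8 * c) * (g 1 + A) := by
      linarith [mul_le_mul_of_nonneg_left hb hA, hl2, hmul2,
        mul_nonneg hc.le hg1, mul_nonneg hc.le hA, hg1, hA,
        mul_nonneg hKpos.le hg1, mul_nonneg hKpos.le hA]
    have h6 : c * (g τ * τ ^ 2) ≤ c * ((4 * K / c + 8 / c + 8) * (g 1 + A)) := by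
      have he : c * ((4 * K / c + 8 / c + 8) * (g 1 + A)) =
          (4 * K + 8 + 8 * c) * (g 1 + A) := by field_simp
      rw [he]; exact h5
    exact le_of_mul_le_mul_left h6 hc
end

section
/- Let M > 0 and let u : (2M, ∞) → ℝ be twice differentiable and satisfy the radial ODE (r² − 2Mr)·u″(r) + (2r − 2M)·u′(r) = 2·(1 − 4M/r)·u(r) for all r > 2M. Then there exist constants C₁, C₂ ∈ ℝ such that u(r) = C₁/r² + C₂·(12M²·r + 3M·r² + r³ + 24M³·log(r − 2M)) / (3r²) for all r > 2M. -/
/-!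
The ODE is exact: its left-hand side minus its right-hand side equals `r²` times the derivative
of `G = (1 - 2M/r)(u' + 2u/r)`, so `G` is a constant `c`. Since `G = (1 - 2M/r) r⁻² (r²u)'`, this
gives `(r²u)' = c r³/(r - 2M) = c (r² + 2Mr + 4M² + 8M³/(r - 2M))`, and one more integration
yields `r²u = C₁ + c (r³/3 + Mr² + 4M²r + 8M³ log(r - 2M))`.
-/

open Set

theorem IsOpen.exists_eq_const_of_hasDerivAt_zero {𝕜 G : Type*} [RCLike 𝕜]
    [NormedAddCommGroup G] [NormedSpace 𝕜 G] {s : Set 𝕜} {f : 𝕜 → G}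
    (hs : IsOpen s) (hs' : IsPreconnected s) (hf : ∀ x ∈ s, HasDerivAt f 0 x) :
    ∃ a, ∀ x ∈ s, f x = a :=
  hs.exists_is_const_of_deriv_eq_zero hs'
    (fun x hx => (hf x hx).differentiableAt.differentiableWithinAt) fun x hx => (hf x hx).deriv

namespace Beta1Radial

/-- The first integral `(1 - 2M/r)(u' + 2u/r)` of the radial ODE. -/
noncomputable def firstIntegral (M : ℝ) (u : ℝ → ℝ) (r : ℝ) : ℝ :=
  (r - 2 * M) / r * deriv u r + 2 * (r - 2 * M) / r ^ 2 * u r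

/-- A primitive of `r³/(r - 2M)` on `r > 2M`. -/
noncomputable def primitive (M : ℝ) (r : ℝ) : ℝ :=
  r ^ 3 / 3 + M * r ^ 2 + 4 * M ^ 2 * r + 8 * M ^ 3 * Real.log (r - 2 * M)

theorem hasDerivAt_firstIntegral {M : ℝ} {u : ℝ → ℝ} {r : ℝ} (hr : r ≠ 0)
    (hu : DifferentiableAt ℝ u r) (hu' : DifferentiableAt ℝ (deriv u) r) :
    HasDerivAt (firstIntegral M u)
      (((r ^ 2 - 2 * M * r) * deriv (deriv u) r + (2 * r - 2 * M) * deriv u r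
        - 2 * (1 - 4 * M / r) * u r) / r ^ 2) r := by
  have hcoeff₁ : HasDerivAt (fun r : ℝ => (r - 2 * M) / r) (2 * M / r ^ 2) r := by
    refine (((hasDerivAt_id' r).sub_const (2 * M)).div (hasDerivAt_id' r) hr).congr_deriv ?_
    field_simp
    ring
  have hcoeff₂ : HasDerivAt (fun r : ℝ => 2 * (r - 2 * M) / r ^ 2)
      ((8 * M - 2 * r) / r ^ 3) r := by
    refine ((((hasDerivAt_id' r).sub_const (2 * M)).const_mul 2).div (hasDerivAt_pow 2 r)
      (pow_ne_zero 2 hr)).congr_deriv ?_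
    field_simp
    ring
  refine ((hcoeff₁.mul hu'.hasDerivAt).add (hcoeff₂.mul hu.hasDerivAt)).congr_deriv ?_
  field_simp
  ring

theorem hasDerivAt_primitive {M r : ℝ} (hr : r ≠ 2 * M) :
    HasDerivAt (primitive M) (r ^ 3 / (r - 2 * M)) r := by
  have hr' : r - 2 * M ≠ 0 := sub_ne_zero.mpr hr
  have hlog := ((hasDerivAt_id' r).sub_const (2 * M)).log hr'
  refine ((((((hasDerivAt_pow 3 r).div_const 3).add ((hasDerivAt_pow 2 r).const_mul M)).add
    ((hasDerivAt_id' r).const_mul (4 * M ^ 2))).add (hlog.const_mul (8 * M ^ 3)))).congr_deriv ?_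
  -- `r³ - 8M³ = (r - 2M)(r² + 2Mr + 4M²)`
  linear_combination (-(r ^ 2 + 2 * M * r + 4 * M ^ 2)) * mul_inv_cancel₀ hr'

theorem hasDerivAt_sq_mul_sub_primitive {M c r : ℝ} {u : ℝ → ℝ} (hr : r ≠ 0) (hr' : r ≠ 2 * M)
    (hu : DifferentiableAt ℝ u r) :
    HasDerivAt (fun r => r ^ 2 * u r - c * primitive M r)
      (r ^ 3 / (r - 2 * M) * (firstIntegral M u r - c)) r := by
  have hr'' : r - 2 * M ≠ 0 := sub_ne_zero.mpr hr'
  refine (((hasDerivAt_pow 2 r).mul hu.hasDerivAt).sub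
    ((hasDerivAt_primitive hr').const_mul c)).congr_deriv ?_
  simp only [firstIntegral]
  field_simp
  ring

end Beta1Radial

open Beta1Radial in
/-- General solution of the radial ODE satisfied by the lowest spherical mode `β₁` of the
decoupled axial quantity `β` on the Schwarzschild exterior of mass `M`. -/
theorem beta1_radial_ode_general_solution (M : ℝ) (hM : 0 < M)
    (u : ℝ → ℝ)
    (hu1 : ∀ r ∈ Set.Ioi (2 * M), DifferentiableAt ℝ u r)
    (hu2 : ∀ r ∈ Set.Ioi (2 * M), DifferentiableAt ℝ (deriv u) r)
    (hode : ∀ r ∈ Set.Ioi (2 * M),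
      (r ^ 2 - 2 * M * r) * deriv (deriv u) r + (2 * r - 2 * M) * deriv u r
        = 2 * (1 - 4 * M / r) * u r) :
    ∃ C₁ C₂ : ℝ, ∀ r ∈ Set.Ioi (2 * M),
      u r = C₁ / r ^ 2
        + C₂ * (12 * M ^ 2 * r + 3 * M * r ^ 2 + r ^ 3
            + 24 * M ^ 3 * Real.log (r - 2 * M)) / (3 * r ^ 2) := by
  have hpos : ∀ r ∈ Ioi (2 * M), 0 < r := fun r hr => by linarith [mem_Ioi.mp hr]
  obtain ⟨c, hc⟩ := isOpen_Ioi.exists_eq_const_of_hasDerivAt_zero isPreconnected_Ioi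
    fun r hr => (hasDerivAt_firstIntegral (M := M) (hpos r hr).ne' (hu1 r hr)
      (hu2 r hr)).congr_deriv (by rw [hode r hr, sub_self, zero_div])
  obtain ⟨C₁, hC₁⟩ := isOpen_Ioi.exists_eq_const_of_hasDerivAt_zero isPreconnected_Ioi
    fun r hr => (hasDerivAt_sq_mul_sub_primitive (c := c) (hpos r hr).ne' (mem_Ioi.mp hr).ne'
      (hu1 r hr)).congr_deriv (by rw [hc r hr, sub_self, mul_zero])
  refine ⟨C₁, c, fun r hr => ?_⟩
  have hC₁r : r ^ 2 * u r - c * primitive M r = C₁ := hC₁ r hr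
  have hr₀ : r ^ 2 ≠ 0 := pow_ne_zero 2 (hpos r hr).ne'
  unfold primitive at hC₁r
  rw [div_add_div _ _ hr₀ (mul_ne_zero three_ne_zero hr₀), eq_div_iff (by positivity)]
  linear_combination 3 * r ^ 2 * hC₁r
end

section
/- Let M > 0 and let u : (2M, ∞) → ℝ be twice differentiable, satisfy the radial ODE (r² − 2Mr)·u″(r) + (2r − 2M)·u′(r) = 2·(1 − 4M/r)·u(r) for all r > 2M, and satisfy u(r) → 0 as r → ∞. Then there exists a constant C₁ ∈ ℝ such that u(r) = C₁/r² for all r > 2M. -/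
/-!
Since `1/r²` solves the equation, Abel's identity for its Wronskian with `u` says that
`W = (1 - 2M/r) (u' + 2u/r)` is constant, say `W = c`. Equivalently `(r² u)' = c r³/(r - 2M)`,
and `r³/(r - 2M) ≥ r²`: if `c ≠ 0`, then `r² u / c` grows at least like `r³/3`, so `u / c`
tends to infinity, contradicting `u → 0`. Hence `c = 0` and `r² u` is constant.
-/

open Set Filter Topology

lemma eq_of_hasDerivAt_zero_on_Ioi {f : ℝ → ℝ} {a x y : ℝ}
    (hf : ∀ z ∈ Ioi a, HasDerivAt f 0 z) (hx : x ∈ Ioi a) (hy : y ∈ Ioi a) : f x = f y :=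
  isOpen_Ioi.is_const_of_deriv_eq_zero isPreconnected_Ioi
    (fun z hz ↦ (hf z hz).differentiableAt.differentiableWithinAt)
    (fun z hz ↦ (hf z hz).deriv) hx hy

lemma tendsto_div_sq_atTop_of_hasDerivAt {F F' : ℝ → ℝ} {a c : ℝ} (hc : 0 < c)
    (hF : ∀ r ∈ Ioi a, HasDerivAt F (F' r) r) (hF' : ∀ r ∈ Ioi a, c * r ^ 2 ≤ F' r) :
    Tendsto (fun r ↦ F r / r ^ 2) atTop atTop := by
  set G : ℝ → ℝ := fun r ↦ F r - c * r ^ 3 / 3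
  have hG : ∀ r ∈ Ioi a, HasDerivAt G (F' r - c * r ^ 2) r := fun r hr ↦
    ((hF r hr).sub (((hasDerivAt_pow 3 r).const_mul c).div_const 3)).congr_deriv (by ring)
  have hG_mono : MonotoneOn G (Ioi a) :=
    monotoneOn_of_hasDerivWithinAt_nonneg (convex_Ioi a)
      (fun r hr ↦ (hG r hr).continuousAt.continuousWithinAt)
      (fun r hr ↦ (hG r (interior_subset hr)).hasDerivWithinAt)
      (fun r hr ↦ sub_nonneg.2 (hF' r (interior_subset hr)))
  set r₀ := max a 0 + 1
  have hr₀ : r₀ ∈ Ioi a := by simp only [mem_Ioi, r₀]; linarith [le_max_left a 0]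
  have hlower : Tendsto (fun r ↦ G r₀ / r ^ 2 + c * r / 3) atTop atTop :=
    (tendsto_const_nhds.div_atTop (tendsto_pow_atTop two_ne_zero)).add_atTop
      ((tendsto_id.const_mul_atTop hc).atTop_div_const three_pos)
  refine tendsto_atTop_mono' atTop ?_ hlower
  filter_upwards [eventually_ge_atTop r₀] with r hr
  have hr_pos : 0 < r := by linarith [le_max_right a 0]
  have hGr : G r₀ ≤ F r - c * r ^ 3 / 3 := hG_mono hr₀ (lt_of_lt_of_le hr₀ hr) hr
  rw [div_add' _ _ _ (by positivity), div_le_div_iff_of_pos_right (by positivity)]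
  linarith

section Beta1

variable {M : ℝ} {u : ℝ → ℝ} {r : ℝ}

noncomputable def beta1Flux (M : ℝ) (u : ℝ → ℝ) (r : ℝ) : ℝ :=
  (1 - 2 * M / r) * (deriv u r + 2 * u r / r)

lemma hasDerivAt_beta1Flux_zero (hr : r ≠ 0) (hu : DifferentiableAt ℝ u r)
    (hu' : DifferentiableAt ℝ (deriv u) r)
    (hode : (r ^ 2 - 2 * M * r) * deriv (deriv u) r + (2 * r - 2 * M) * deriv u r
      = 2 * (1 - 4 * M / r) * u r) :
    HasDerivAt (beta1Flux M u) 0 r := by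
  have hfactor := ((hasDerivAt_const r (2 * M)).div (hasDerivAt_id r) hr).const_sub 1
  have hsum := hu'.hasDerivAt.add ((hu.hasDerivAt.const_mul 2).div (hasDerivAt_id r) hr)
  refine (hfactor.mul hsum).congr_deriv ?_
  simp only [id, Pi.add_apply, Pi.div_apply]
  field_simp at hode ⊢
  linear_combination hode

lemma hasDerivAt_sq_mul_eq_beta1Flux (hr : r ≠ 0) (hr' : r ≠ 2 * M)
    (hu : DifferentiableAt ℝ u r) :
    HasDerivAt (fun r ↦ r ^ 2 * u r) (beta1Flux M u r * (r ^ 3 / (r - 2 * M))) r := by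
  refine ((hasDerivAt_pow 2 r).mul hu.hasDerivAt).congr_deriv ?_
  have : r - 2 * M ≠ 0 := sub_ne_zero.2 hr'
  unfold beta1Flux
  field_simp
  ring

lemma eq_zero_of_hasDerivAt_sq_mul_of_tendsto_zero {c : ℝ} (hM : 0 ≤ M)
    (hF : ∀ r ∈ Ioi (2 * M), HasDerivAt (fun r ↦ r ^ 2 * u r) (c * (r ^ 3 / (r - 2 * M))) r)
    (hdecay : Tendsto u atTop (𝓝 0)) : c = 0 := by
  by_contra hc
  have hgrowth : Tendsto (fun r ↦ r ^ 2 * u r / c / r ^ 2) atTop atTop :=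
    tendsto_div_sq_atTop_of_hasDerivAt one_pos (fun r hr ↦ (hF r hr).div_const c) fun r hr ↦ by
      have hr_pos : 0 < r := by linarith [mem_Ioi.1 hr]
      rw [mul_div_cancel_left₀ _ hc, one_mul, le_div_iff₀ (sub_pos.2 hr)]
      nlinarith
  have hdecay' : Tendsto (fun r ↦ r ^ 2 * u r / c / r ^ 2) atTop (𝓝 0) := by
    simpa using (hdecay.div_const c).congr' <| by
      filter_upwards [eventually_gt_atTop 0] with r hr
      field_simp
  exact not_tendsto_nhds_of_tendsto_atTop hgrowth 0 hdecay'

end Beta1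

/-- A solution of the radial ODE of the lowest spherical mode `β₁` which decays at
infinity must be a multiple of `1/r²`, i.e. a linearized Kerr mode. -/
theorem beta1_radial_ode_decaying_solution (M : ℝ) (hM : 0 < M)
    (u : ℝ → ℝ)
    (hu1 : ∀ r ∈ Set.Ioi (2 * M), DifferentiableAt ℝ u r)
    (hu2 : ∀ r ∈ Set.Ioi (2 * M), DifferentiableAt ℝ (deriv u) r)
    (hode : ∀ r ∈ Set.Ioi (2 * M),
      (r ^ 2 - 2 * M * r) * deriv (deriv u) r + (2 * r - 2 * M) * deriv u r
        = 2 * (1 - 4 * M / r) * u r)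
    (hdecay : Filter.Tendsto u Filter.atTop (nhds 0)) :
    ∃ C₁ : ℝ, ∀ r ∈ Set.Ioi (2 * M), u r = C₁ / r ^ 2 := by
  have hpos : ∀ r ∈ Ioi (2 * M), 0 < r := fun r hr ↦ lt_trans (by positivity) hr
  have hr₀ : 2 * M + 1 ∈ Ioi (2 * M) := by simp
  set c := beta1Flux M u (2 * M + 1)
  have hflux : ∀ r ∈ Ioi (2 * M), beta1Flux M u r = c := fun r hr ↦
    eq_of_hasDerivAt_zero_on_Ioi
      (fun z hz ↦ hasDerivAt_beta1Flux_zero (hpos z hz).ne' (hu1 z hz) (hu2 z hz) (hode z hz))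
      hr hr₀
  have hF : ∀ r ∈ Ioi (2 * M), HasDerivAt (fun r ↦ r ^ 2 * u r) (c * (r ^ 3 / (r - 2 * M))) r :=
    fun r hr ↦ hflux r hr ▸ hasDerivAt_sq_mul_eq_beta1Flux (hpos r hr).ne' hr.ne' (hu1 r hr)
  have hc : c = 0 := eq_zero_of_hasDerivAt_sq_mul_of_tendsto_zero hM.le hF hdecay
  refine ⟨(2 * M + 1) ^ 2 * u (2 * M + 1), fun r hr ↦ ?_⟩
  have hconst : (fun r ↦ r ^ 2 * u r) r = (fun r ↦ r ^ 2 * u r) (2 * M + 1) :=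
    eq_of_hasDerivAt_zero_on_Ioi (fun z hz ↦ by simpa [hc] using hF z hz) hr hr₀
  exact eq_div_of_mul_eq (pow_ne_zero 2 (hpos r hr).ne') ((mul_comm _ _).trans hconst)
end
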